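/- arXiv:1903.10331 — 3 statements merged into one kernel-verified Lean document; each statement's English description precedes it below -/
import Mathlib

section
/- Let ∥ be a Clifford-like parallelism and let α : H → H be a semilinear bijection that preserves ∥ and satisfies α(1) = 1. (i) If there exists a line L ∈ 𝒜 such that S(L) and S(α(L)) are of the same kind, i.e., S(L) = Sℓ(L) and S(α(L)) = Sℓ(α(L)), or S(L) = Sr(L) and S(α(L)) = Sr(α(L)), then α(ℱ) = ℱ. (ii) If there exists a line L ∈ 𝒜 such that S(L) and S(α(L)) are of different kind, i.e., S(L) = Sℓ(L) and S(α(L)) = Sr(α(L)), or S(L) = Sr(L) and S(α(L)) = Sℓ(α(L)), then α(ℱ) = 𝒜 \ ℱ. -/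
variable (F H : Type*) [Field F] [DivisionRing H] [Algebra F H]

/-- A *line* of the projective space `ℙ(H_F)`: a 2-dimensional `F`-subspace of `H`. -/
abbrev Line := {M : Submodule F H // Module.finrank F M = 2}

/-- `M ∥ℓ N` : there is `g ≠ 0` with `N = g·M`. -/
def LeftPar (M N : Submodule F H) : Prop :=
  ∃ g : H, g ≠ 0 ∧ (N : Set H) = (fun m => g * m) '' (M : Set H)

/-- `M ∥r N` : there is `g ≠ 0` with `N = M·g`. -/
def RightPar (M N : Submodule F H) : Prop :=
  ∃ g : H, g ≠ 0 ∧ (N : Set H) = (fun m => m * g) '' (M : Set H)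

/-- The left parallel class `Sℓ(M) = {N | N ∥ℓ M}`. -/
def leftClass (M : Line F H) : Set (Line F H) := {N | LeftPar F H N.1 M.1}

/-- The right parallel class `Sr(M) = {N | N ∥r M}`. -/
def rightClass (M : Line F H) : Set (Line F H) := {N | RightPar F H N.1 M.1}

/-- The `∥`-class `S(M) = {N | N ∥ M}`. -/
def parClass (par : Line F H → Line F H → Prop) (M : Line F H) : Set (Line F H) :=
  {N | par N M}

/-- A parallelism: an equivalence relation on lines such that for every `x ≠ 0`
and every line `M` there is exactly one line `N` with `x ∈ N` and `N ∥ M`. -/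
def IsParallelism (par : Line F H → Line F H → Prop) : Prop :=
  Equivalence par ∧
    ∀ x : H, x ≠ 0 → ∀ M : Line F H, ∃! N : Line F H, x ∈ N.1 ∧ par N M

/-- A Clifford-like parallelism: every `∥`-class is a left or a right parallel class. -/
def IsCliffordLike (par : Line F H → Line F H → Prop) : Prop :=
  IsParallelism F H par ∧
    ∀ M : Line F H,
      parClass F H par M = leftClass F H M ∨ parClass F H par M = rightClass F H M

/-- The star `𝒜` of lines through `F·1`, i.e. the lines containing `1`. -/
def starLines : Set (Line F H) := {L | (1 : H) ∈ L.1}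

/-- The set `ℱ` of lines of `𝒜` whose `∥`-class is a left parallel class. -/
def calF (par : Line F H → Line F H → Prop) : Set (Line F H) :=
  {L | (1 : H) ∈ L.1 ∧ parClass F H par L = leftClass F H L}

/-- A semilinear bijection of `H` (over some field automorphism of `F`). -/
def IsSemilinear (β : H → H) : Prop :=
  Function.Bijective β ∧ (∀ x y : H, β (x + y) = β x + β y) ∧
    ∃ σ : F ≃+* F, ∀ (a : F) (x : H), β (a • x) = σ a • β x

/-- `β` preserves the parallelism `par`: for all lines `M, N`,
`M ∥ N ↔ β(M) ∥ β(N)`, where `β(M)` denotes the line whose carrier is `β '' M`. -/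
def Preserves (β : H → H) (par : Line F H → Line F H → Prop) : Prop :=
  ∀ M N M' N' : Line F H,
    (M'.1 : Set H) = β '' (M.1 : Set H) →
    (N'.1 : Set H) = β '' (N.1 : Set H) →
    (par M N ↔ par M' N')

/-- The image `β(𝒢)` of a set of lines under `β`. -/
def imageLines (β : H → H) (G : Set (Line F H)) : Set (Line F H) :=
  {L' | ∃ L ∈ G, (L'.1 : Set H) = β '' (L.1 : Set H)}

/-- The centre of `H` is exactly `F·1`. -/
def CenterEqF : Prop :=
  ∀ z : H, (∀ x : H, z * x = x * z) ↔ ∃ a : F, z = algebraMap F H a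

/-- Ring automorphism of `H`, as a plain function. -/
def IsRingAutFn (α : H → H) : Prop :=
  Function.Bijective α ∧ (∀ x y : H, α (x + y) = α x + α y) ∧ α 1 = 1 ∧
    ∀ x y : H, α (x * y) = α x * α y

/-- Ring antiautomorphism of `H`, as a plain function. -/
def IsRingAntiAutFn (α : H → H) : Prop :=
  Function.Bijective α ∧ (∀ x y : H, α (x + y) = α x + α y) ∧ α 1 = 1 ∧
    ∀ x y : H, α (x * y) = α y * α x

/-!
A line `L ∋ 1` is the centralizer of each of its elements `u ∉ F·1`, hence a subfield: a
proper subalgebra of `H` has dimension dividing `4`, so at most `2`.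

If `S(M) = Sℓ(M)` then `x·M ∥ M`, so `α(x·M)` is the line through `α x` in `S(α M)`, namely
`α x · α M` or `α M · α x` according to the kind of `S(α M)`. Thus `x ↦ α(x a)` (for `a ∈ M`) is
pointwise a multiple of `α` by elements of the subfield `α M`, and an additive map of this shape
is a multiplication by a constant, since two proper cosets never cover `H`. This gives
`α(x a) = α x α a` or `α(x a) = α a α x` for all `x`, and similarly when `S(M) = Sr(M)`.

If `α` preserved the kind of `M` but reversed that of `N`, then for `a ∈ M`, `b ∈ N` outside `F·1`
comparing `α(a b)` with `α(b a)` shows that `a, b` or `α a, α b` commute, which forces `M = N`.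
So whether `α` preserves the kind does not depend on the line.
-/

open Module Submodule

theorem Subalgebra.finrank_dvd_finrank {F A : Type*} [Field F] [Ring A] [IsDomain A]
    [Algebra F A] [FiniteDimensional F A] (K : Subalgebra F A) : finrank F K ∣ finrank F A := by
  let := divisionRingOfFiniteDimensional F K
  exact ⟨_, (finrank_mul_finrank F K A).symm⟩

section DivisionRing

variable {D : Type*} [DivisionRing D]

theorem Subring.exists_forall_ne_mul {K : Subring D} (hK : K ≠ ⊤) {u v : D} (hu : u ≠ 0)
    (hv : v ≠ 0) : ∃ w, (∀ m ∈ K, w ≠ u * m) ∧ ∀ m ∈ K, w ≠ v * m := by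
  let coset (x : D) : AddSubgroup D := K.toAddSubgroup.map (AddMonoidHom.mulLeft x)
  have hcoset {x : D} (hx : x ≠ 0) : ¬ ⊤ ≤ coset x := fun htop => hK <| eq_top_iff.2 fun m _ => by
    obtain ⟨k, hk, hkm⟩ := htop (AddSubgroup.mem_top (x * m))
    rwa [← mul_left_cancel₀ hx hkm]
  by_contra! h
  have hcover : ((⊤ : AddSubgroup D) : Set D) ⊆ coset u ∪ coset v := fun w _ => by
    by_cases hw : ∀ m ∈ K, w ≠ u * m
    · obtain ⟨m, hm, rfl⟩ := h w hw
      exact Or.inr ⟨m, hm, rfl⟩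
    · push Not at hw
      obtain ⟨m, hm, rfl⟩ := hw
      exact Or.inl ⟨m, hm, rfl⟩
  exact (AddSubgroupClass.subset_union.1 hcover).elim (hcoset hu) (hcoset hv)

theorem exists_forall_eq_mul_right_of_forall_exists {A : Type*} [AddCommGroup A]
    {K : Subring D} (hK : K ≠ ⊤) (hKinv : ∀ m ∈ K, m⁻¹ ∈ K) {f g : A →+ D}
    (hf : Function.Surjective f) (hfg : ∀ x, ∃ m ∈ K, g x = f x * m) :
    ∃ m ∈ K, ∀ x, g x = f x * m := by
  choose μ hμK hμ using hfg
  have heq {x y : A} (hx : f x ≠ 0) (hy : ∀ m ∈ K, f y ≠ f x * m) : μ x = μ y := by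
    have hxy : f x * (μ x - μ (x + y)) = f y * (μ (x + y) - μ y) := by
      have := hμ (x + y)
      rw [map_add, map_add, hμ x, hμ y, add_mul] at this
      rw [mul_sub, mul_sub, sub_eq_sub_iff_add_eq_add, this, add_comm]
    by_cases h : μ (x + y) = μ y
    · rw [h, sub_self, mul_zero, mul_eq_zero, sub_eq_zero] at hxy
      exact hxy.resolve_left hx
    · refine absurd ?_ (hy ((μ x - μ (x + y)) * (μ (x + y) - μ y)⁻¹) ?_)
      · rw [← mul_assoc, hxy, mul_inv_cancel_right₀ (sub_ne_zero.2 h)]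
      · exact K.mul_mem (K.sub_mem (hμK x) (hμK _)) (hKinv _ (K.sub_mem (hμK _) (hμK y)))
  obtain ⟨x₀, hx₀⟩ := hf 1
  have hx₀' : f x₀ ≠ 0 := hx₀ ▸ one_ne_zero
  refine ⟨μ x₀, hμK x₀, fun x => ?_⟩
  by_cases hx : f x = 0
  · rw [hμ x, hx, zero_mul, zero_mul]
  obtain ⟨w, hwx, hw₀⟩ := Subring.exists_forall_ne_mul hK hx hx₀'
  obtain ⟨z, rfl⟩ := hf w
  rw [hμ x, heq hx hwx, ← heq hx₀' hw₀]

theorem exists_forall_eq_mul_left_of_forall_exists {A : Type*} [AddCommGroup A]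
    {K : Subring D} (hK : K ≠ ⊤) (hKinv : ∀ m ∈ K, m⁻¹ ∈ K) {f g : A →+ D}
    (hf : Function.Surjective f) (hfg : ∀ x, ∃ m ∈ K, g x = m * f x) :
    ∃ m ∈ K, ∀ x, g x = m * f x := by
  let op : D →+ Dᵐᵒᵖ := MulOpposite.opAddEquiv.toAddMonoidHom
  have hKop : K.op ≠ ⊤ := fun h => hK (by rw [← Subring.unop_op K, h]; rfl)
  obtain ⟨m, hm, h⟩ := exists_forall_eq_mul_right_of_forall_exists hKop
    (fun m hm => hKinv _ hm) (f := op.comp f) (g := op.comp g)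
    (MulOpposite.opEquiv.surjective.comp hf) fun x => by
      obtain ⟨m, hm, h⟩ := hfg x
      exact ⟨MulOpposite.op m, hm, by simp [op, h]⟩
  exact ⟨m.unop, hm, fun x => MulOpposite.op_injective (by simpa [op] using h x)⟩

/-- The Cartan–Brauer–Hua argument. -/
theorem commute_of_forall_exists_mul_eq {u : D}
    (h : ∀ x, ∃ m, Commute u m ∧ u * x = x * m) (x : D) : Commute u x := by
  obtain ⟨m₁, hm₁, h₁⟩ := h x
  obtain ⟨m₂, hm₂, h₂⟩ := h (1 + x)
  have key : u - m₂ = x * (m₂ - m₁) := by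
    rw [mul_add, mul_one, add_mul, one_mul, h₁] at h₂
    rw [mul_sub, sub_eq_sub_iff_add_eq_add, h₂, add_comm]
  by_cases hm : m₂ = m₁
  · rw [hm, sub_self, mul_zero, sub_eq_zero] at key
    rw [Commute, SemiconjBy, h₁, key]
  · have hx : x = (u - m₂) * (m₂ - m₁)⁻¹ := by
      rw [key, mul_inv_cancel_right₀ (sub_ne_zero.2 hm)]
    rw [hx]
    exact ((Commute.refl u).sub_right hm₂).mul_right (hm₂.sub_right hm₁).inv_right₀

end DivisionRing

section Lines

variable {F H : Type*} [Field F] [DivisionRing H] [Algebra F H]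

theorem finrank_span_one_pair_eq_two {u : H} (hu : u ∉ F ∙ (1 : H)) :
    finrank F (span F {1, u}) = 2 := by
  have hli : LinearIndependent F ![1, u] :=
    (LinearIndependent.pair_iff' one_ne_zero).2 fun a h => hu (mem_span_singleton.2 ⟨a, h⟩)
  have h := finrank_span_eq_card hli
  rw [Matrix.range_cons_cons_empty] at h
  simpa using h

theorem mem_span_one_of_forall_commute (hcenter : CenterEqF F H) {u : H}
    (hu : ∀ x, Commute u x) : u ∈ F ∙ (1 : H) := by
  obtain ⟨a, rfl⟩ := (hcenter u).1 hu
  exact mem_span_singleton.2 ⟨a, (Algebra.algebraMap_eq_smul_one a).symm⟩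

theorem toSubmodule_centralizer_singleton_eq_span (hcenter : CenterEqF F H)
    (hdim : finrank F H = 4) {u : H} (hu : u ∉ F ∙ (1 : H)) :
    Subalgebra.toSubmodule (Subalgebra.centralizer F {u}) = span F {1, u} := by
  have := Module.finite_of_finrank_eq_succ hdim
  set C := Subalgebra.centralizer F {u}
  have hle : span F {1, u} ≤ Subalgebra.toSubmodule C := by
    rw [span_le]
    rintro _ (rfl | rfl)
    · exact C.one_mem
    · exact (Subalgebra.mem_centralizer_iff F).2 (by simp)
  have hC : finrank F C ≠ 4 := by
    intro h4
    have htop : Subalgebra.toSubmodule C = ⊤ :=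
      eq_top_of_finrank_eq (by rw [Subalgebra.finrank_toSubmodule, h4, hdim])
    refine hu (mem_span_one_of_forall_commute hcenter fun x => ?_)
    have hx : x ∈ C := by simpa using htop.ge (mem_top (x := x))
    exact (Subalgebra.mem_centralizer_iff F).1 hx u rfl
  have hC2 : finrank F C ≤ 2 := by
    have hdvd := C.finrank_dvd_finrank
    rw [hdim] at hdvd
    have := Nat.le_of_dvd (by norm_num) hdvd
    interval_cases h : finrank F C <;> simp_all
  refine (eq_of_le_of_finrank_le hle ?_).symm
  rwa [finrank_span_one_pair_eq_two hu, Subalgebra.finrank_toSubmodule]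

theorem Line.exists_mem_notMem_span_one (L : Line F H) : ∃ u ∈ L.1, u ∉ F ∙ (1 : H) := by
  by_contra! h
  have := finrank_mono (show L.1 ≤ F ∙ (1 : H) from h)
  rw [L.2, finrank_span_singleton one_ne_zero] at this
  omega

theorem Line.mem_iff_commute (hcenter : CenterEqF F H) (hdim : finrank F H = 4)
    {L : Line F H} (h1 : (1 : H) ∈ L.1) {u : H} (huL : u ∈ L.1) (hu : u ∉ F ∙ (1 : H))
    {x : H} : x ∈ L.1 ↔ Commute u x := by
  have := Module.finite_of_finrank_eq_succ hdim
  have hL : span F {1, u} = L.1 := by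
    refine eq_of_le_of_finrank_le (span_le.2 ?_) (by rw [L.2, finrank_span_one_pair_eq_two hu])
    rintro _ (rfl | rfl)
    exacts [h1, huL]
  rw [← hL, ← toSubmodule_centralizer_singleton_eq_span hcenter hdim hu,
    Subalgebra.mem_toSubmodule, Subalgebra.mem_centralizer_iff]
  simp [Commute, SemiconjBy]

theorem Line.eq_of_mem_of_mem (hcenter : CenterEqF F H) (hdim : finrank F H = 4)
    {L M : Line F H} (hL : (1 : H) ∈ L.1) (hM : (1 : H) ∈ M.1) {u : H} (huL : u ∈ L.1)
    (huM : u ∈ M.1) (hu : u ∉ F ∙ (1 : H)) : L = M :=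
  Subtype.ext <| SetLike.ext fun _ => (Line.mem_iff_commute hcenter hdim hL huL hu).trans
    (Line.mem_iff_commute hcenter hdim hM huM hu).symm

theorem Line.exists_subring (hcenter : CenterEqF F H) (hdim : finrank F H = 4)
    {L : Line F H} (h1 : (1 : H) ∈ L.1) :
    ∃ K : Subring H, K ≠ ⊤ ∧ (∀ m ∈ K, m⁻¹ ∈ K) ∧ ∀ m, m ∈ K ↔ m ∈ L.1 := by
  obtain ⟨u, huL, hu⟩ := L.exists_mem_notMem_span_one
  have hmem {m : H} : m ∈ Subring.centralizer {u} ↔ Commute u m := by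
    simp [Subring.mem_centralizer_iff, Commute, SemiconjBy]
  refine ⟨Subring.centralizer {u}, fun htop => hu ?_, fun m hm => ?_, fun m => ?_⟩
  · exact mem_span_one_of_forall_commute hcenter fun x => hmem.1 (htop ▸ Subring.mem_top x)
  · exact hmem.2 (hmem.1 hm).inv_right₀
  · rw [hmem, Line.mem_iff_commute hcenter hdim h1 huL hu]

theorem exists_mem_eq_mul_of_mem_leftClass (hcenter : CenterEqF F H) (hdim : finrank F H = 4)
    {M N : Line F H} (h1 : (1 : H) ∈ M.1) (hN : N ∈ leftClass F H M) {y z : H}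
    (hy : y ∈ N.1) (hy0 : y ≠ 0) (hz : z ∈ N.1) : ∃ m ∈ M.1, z = y * m := by
  obtain ⟨g, hg, hMN⟩ := hN
  have hmem {w : H} (hw : w ∈ N.1) : g * w ∈ M.1 := by
    rw [← SetLike.mem_coe, hMN]
    exact ⟨w, hw, rfl⟩
  obtain ⟨u, huM, hu⟩ := M.exists_mem_notMem_span_one
  have hM {w : H} := Line.mem_iff_commute hcenter hdim h1 huM hu (x := w)
  refine ⟨(g * y)⁻¹ * (g * z), hM.2 ?_, by simp [mul_assoc, hg, hy0]⟩
  exact (hM.1 (hmem hy)).inv_right₀.mul_right (hM.1 (hmem hz))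

theorem exists_mem_eq_mul_of_mem_rightClass (hcenter : CenterEqF F H)
    (hdim : finrank F H = 4) {M N : Line F H} (h1 : (1 : H) ∈ M.1)
    (hN : N ∈ rightClass F H M) {y z : H} (hy : y ∈ N.1) (hy0 : y ≠ 0) (hz : z ∈ N.1) :
    ∃ m ∈ M.1, z = m * y := by
  obtain ⟨g, hg, hMN⟩ := hN
  have hmem {w : H} (hw : w ∈ N.1) : w * g ∈ M.1 := by
    rw [← SetLike.mem_coe, hMN]
    exact ⟨w, hw, rfl⟩
  obtain ⟨u, huM, hu⟩ := M.exists_mem_notMem_span_one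
  have hM {w : H} := Line.mem_iff_commute hcenter hdim h1 huM hu (x := w)
  refine ⟨(z * g) * (y * g)⁻¹, hM.2 ?_, by simp [mul_assoc, hg, hy0]⟩
  exact (hM.1 (hmem hz)).mul_right (hM.1 (hmem hy)).inv_right₀

end Lines

section Semilinear

variable {F H : Type*} [Field F] [DivisionRing H] [Algebra F H] {α : H → H}

theorem IsSemilinear.map_zero (hα : IsSemilinear F H α) : α 0 = 0 := by
  simpa using hα.2.1 0 0

theorem IsSemilinear.map_ne_zero (hα : IsSemilinear F H α) {x : H} (hx : x ≠ 0) : α x ≠ 0 :=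
  fun h => hx (hα.1.1 (h.trans hα.map_zero.symm))

theorem IsSemilinear.apply_notMem_span_one (hα : IsSemilinear F H α) (h1 : α 1 = 1) {x : H}
    (hx : x ∉ F ∙ (1 : H)) : α x ∉ F ∙ (1 : H) := by
  obtain ⟨hbij, -, σ, hsmul⟩ := hα
  intro h
  obtain ⟨c, hc⟩ := mem_span_singleton.1 h
  exact hx (mem_span_singleton.2 ⟨σ.symm c, hbij.1 (by rw [hsmul, σ.apply_symm_apply, h1, hc])⟩)

theorem IsSemilinear.mul_left {x : H} (hx : x ≠ 0) : IsSemilinear F H (x * ·) :=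
  ⟨(Units.mk0 x hx).mulLeft_bijective, fun _ _ => mul_add _ _ _, RingEquiv.refl F,
    fun _ _ => mul_smul_comm _ _ _⟩

theorem IsSemilinear.mul_right {x : H} (hx : x ≠ 0) : IsSemilinear F H (· * x) :=
  ⟨(Units.mk0 x hx).mulRight_bijective, fun _ _ => add_mul _ _ _, RingEquiv.refl F,
    fun _ _ => smul_mul_assoc _ _ _⟩

theorem IsSemilinear.exists_line_image (hα : IsSemilinear F H α) (L : Line F H) :
    ∃ L' : Line F H, (L'.1 : Set H) = α '' L.1 := by
  obtain ⟨hbij, hadd, σ, hsmul⟩ := hα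
  let e : H ≃+ H := AddEquiv.ofBijective (AddMonoidHom.mk' α hadd) hbij
  let L' : Submodule F H :=
    { toAddSubmonoid := L.1.toAddSubmonoid.map e
      smul_mem' := by
        rintro c _ ⟨x, hx, rfl⟩
        refine ⟨σ.symm c • x, L.1.smul_mem _ hx, ?_⟩
        exact (hsmul _ x).trans (by rw [σ.apply_symm_apply]; rfl) }
  refine ⟨⟨L', ?_⟩, rfl⟩
  let j : L.1 ≃+ L' := e.addSubmonoidMap L.1.toAddSubmonoid
  rw [← L.2]
  exact congrArg Cardinal.toNat
    (rank_eq_of_equiv_equiv σ j σ.bijective fun c x => Subtype.ext (hsmul c x)).symm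

theorem IsSemilinear.exists_line_preimage (hα : IsSemilinear F H α) (L' : Line F H) :
    ∃ L : Line F H, (L'.1 : Set H) = α '' L.1 := by
  obtain ⟨hbij, hadd, σ, hsmul⟩ := hα
  let e := Equiv.ofBijective α hbij
  have hαe (x : H) : α (e.symm x) = x := e.apply_symm_apply x
  have he : IsSemilinear F H e.symm :=
    ⟨e.symm.bijective, fun x y => hbij.1 (by rw [hadd, hαe, hαe, hαe]), σ.symm,
      fun a x => hbij.1 (by rw [hsmul, hαe, hαe, σ.apply_symm_apply])⟩
  obtain ⟨L, hL⟩ := he.exists_line_image L'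
  exact ⟨L, by rw [hL]; exact (e.image_symm_image _).symm⟩

theorem apply_mem_of_coe_eq_image {M M' : Line F H} (hM' : (M'.1 : Set H) = α '' M.1)
    {x : H} (hx : x ∈ M.1) : α x ∈ M'.1 := by
  rw [← SetLike.mem_coe, hM']
  exact Set.mem_image_of_mem α hx

theorem IsSemilinear.one_mem_iff (hα : IsSemilinear F H α) (h1 : α 1 = 1) {M M' : Line F H}
    (hM' : (M'.1 : Set H) = α '' M.1) : (1 : H) ∈ M'.1 ↔ (1 : H) ∈ M.1 := by
  conv_lhs => rw [← SetLike.mem_coe, hM', ← h1]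
  exact hα.1.1.mem_set_image

end Semilinear

section CliffordLike

variable {F H : Type*} [Field F] [DivisionRing H] [Algebra F H]
  {par : Line F H → Line F H → Prop} {α : H → H}

theorem leftClass_ne_rightClass (hcenter : CenterEqF F H) (hdim : finrank F H = 4)
    {L : Line F H} (h1 : (1 : H) ∈ L.1) : leftClass F H L ≠ rightClass F H L := by
  intro hLR
  obtain ⟨u, huL, hu⟩ := L.exists_mem_notMem_span_one
  refine hu (mem_span_one_of_forall_commute hcenter
    (commute_of_forall_exists_mul_eq fun x => ?_))
  rcases eq_or_ne x 0 with rfl | hx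
  · exact ⟨0, Commute.zero_right u, by simp⟩
  obtain ⟨N, hN⟩ := (IsSemilinear.mul_right (F := F) hx).exists_line_image L
  have hNL : N ∈ leftClass F H L := hLR ▸ ⟨x⁻¹, inv_ne_zero hx, by
    rw [hN, Set.image_image]; simp [hx]⟩
  obtain ⟨m, hmL, hm⟩ := exists_mem_eq_mul_of_mem_leftClass hcenter hdim h1 hNL
    (y := x) (by simpa using apply_mem_of_coe_eq_image hN h1) hx
    (apply_mem_of_coe_eq_image hN huL)
  exact ⟨m, (Line.mem_iff_commute hcenter hdim h1 huL hu).1 hmL, hm⟩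

theorem parClass_eq_rightClass_iff (hcenter : CenterEqF F H) (hdim : finrank F H = 4)
    (hpar : IsCliffordLike F H par) {L : Line F H} (h1 : (1 : H) ∈ L.1) :
    parClass F H par L = rightClass F H L ↔ parClass F H par L ≠ leftClass F H L :=
  ⟨fun hr hl => leftClass_ne_rightClass hcenter hdim h1 (hl.symm.trans hr),
    (hpar.2 L).resolve_left⟩

theorem exists_mem_parClass_of_eq_leftClass {M : Line F H}
    (hM : parClass F H par M = leftClass F H M) (h1 : (1 : H) ∈ M.1) {a x : H}
    (ha : a ∈ M.1) (hx : x ≠ 0) : ∃ N ∈ parClass F H par M, x ∈ N.1 ∧ x * a ∈ N.1 := by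
  obtain ⟨N, hN⟩ := (IsSemilinear.mul_left (F := F) hx).exists_line_image M
  refine ⟨N, hM ▸ ⟨x⁻¹, inv_ne_zero hx, ?_⟩, ?_, apply_mem_of_coe_eq_image hN ha⟩
  · rw [hN, Set.image_image]; simp [hx]
  · simpa using apply_mem_of_coe_eq_image hN h1

theorem exists_mem_parClass_of_eq_rightClass {M : Line F H}
    (hM : parClass F H par M = rightClass F H M) (h1 : (1 : H) ∈ M.1) {a x : H}
    (ha : a ∈ M.1) (hx : x ≠ 0) : ∃ N ∈ parClass F H par M, x ∈ N.1 ∧ a * x ∈ N.1 := by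
  obtain ⟨N, hN⟩ := (IsSemilinear.mul_right (F := F) hx).exists_line_image M
  refine ⟨N, hM ▸ ⟨x⁻¹, inv_ne_zero hx, ?_⟩, ?_, apply_mem_of_coe_eq_image hN ha⟩
  · rw [hN, Set.image_image]; simp [hx]
  · simpa using apply_mem_of_coe_eq_image hN h1

theorem apply_eq_mul_of_parClass_eq_leftClass (hcenter : CenterEqF F H)
    (hdim : finrank F H = 4) (hα : IsSemilinear F H α) (hpres : Preserves F H α par)
    (h1 : α 1 = 1) {M M' : Line F H} (hM : (1 : H) ∈ M.1) (hM' : (M'.1 : Set H) = α '' M.1)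
    (hM'l : parClass F H par M' = leftClass F H M') {g : H →+ H}
    (hg : ∀ x ≠ 0, ∃ N ∈ parClass F H par M, x ∈ N.1 ∧ g x ∈ N.1) (x : H) :
    α (g x) = α x * α (g 1) := by
  have h1M' := (hα.one_mem_iff h1 hM').2 hM
  obtain ⟨K, hK, hKinv, hKM'⟩ := Line.exists_subring hcenter hdim h1M'
  let f : H →+ H := AddMonoidHom.mk' α hα.2.1
  obtain ⟨m, -, hm⟩ := exists_forall_eq_mul_right_of_forall_exists hK hKinv (f := f)
    (g := f.comp g) hα.1.2 fun y => by
      rcases eq_or_ne y 0 with rfl | hy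
      · exact ⟨0, K.zero_mem, by simp [f, hα.map_zero]⟩
      obtain ⟨N, hN, hyN, hgN⟩ := hg y hy
      obtain ⟨N', hN'⟩ := hα.exists_line_image N
      have hN'l : N' ∈ leftClass F H M' := hM'l ▸ (hpres N M N' M' hN' hM').1 hN
      obtain ⟨m, hmM', hm⟩ := exists_mem_eq_mul_of_mem_leftClass hcenter hdim h1M' hN'l
        (apply_mem_of_coe_eq_image hN' hyN) (hα.map_ne_zero hy)
        (apply_mem_of_coe_eq_image hN' hgN)
      exact ⟨m, (hKM' m).2 hmM', hm⟩
  have hm1 : α (g 1) = m := by simpa [f, h1] using hm 1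
  simpa [f, hm1] using hm x

theorem apply_eq_mul_of_parClass_eq_rightClass (hcenter : CenterEqF F H)
    (hdim : finrank F H = 4) (hα : IsSemilinear F H α) (hpres : Preserves F H α par)
    (h1 : α 1 = 1) {M M' : Line F H} (hM : (1 : H) ∈ M.1) (hM' : (M'.1 : Set H) = α '' M.1)
    (hM'r : parClass F H par M' = rightClass F H M') {g : H →+ H}
    (hg : ∀ x ≠ 0, ∃ N ∈ parClass F H par M, x ∈ N.1 ∧ g x ∈ N.1) (x : H) :
    α (g x) = α (g 1) * α x := by
  have h1M' := (hα.one_mem_iff h1 hM').2 hM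
  obtain ⟨K, hK, hKinv, hKM'⟩ := Line.exists_subring hcenter hdim h1M'
  let f : H →+ H := AddMonoidHom.mk' α hα.2.1
  obtain ⟨m, -, hm⟩ := exists_forall_eq_mul_left_of_forall_exists hK hKinv (f := f)
    (g := f.comp g) hα.1.2 fun y => by
      rcases eq_or_ne y 0 with rfl | hy
      · exact ⟨0, K.zero_mem, by simp [f, hα.map_zero]⟩
      obtain ⟨N, hN, hyN, hgN⟩ := hg y hy
      obtain ⟨N', hN'⟩ := hα.exists_line_image N
      have hN'r : N' ∈ rightClass F H M' := hM'r ▸ (hpres N M N' M' hN' hM').1 hN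
      obtain ⟨m, hmM', hm⟩ := exists_mem_eq_mul_of_mem_rightClass hcenter hdim h1M' hN'r
        (apply_mem_of_coe_eq_image hN' hyN) (hα.map_ne_zero hy)
        (apply_mem_of_coe_eq_image hN' hgN)
      exact ⟨m, (hKM' m).2 hmM', hm⟩
  have hm1 : α (g 1) = m := by simpa [f, h1] using hm 1
  simpa [f, hm1] using hm x

theorem apply_mul_of_kind_eq (hcenter : CenterEqF F H) (hdim : finrank F H = 4)
    (hpar : IsCliffordLike F H par) (hα : IsSemilinear F H α) (hpres : Preserves F H α par)
    (h1 : α 1 = 1) {M M' : Line F H} (hM : (1 : H) ∈ M.1) (hM' : (M'.1 : Set H) = α '' M.1)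
    (hMM' : parClass F H par M = leftClass F H M ↔ parClass F H par M' = leftClass F H M')
    {a : H} (ha : a ∈ M.1) :
    (∀ x, α (x * a) = α x * α a) ∨ ∀ x, α (a * x) = α a * α x := by
  rcases hpar.2 M with hMl | hMr
  · refine .inl fun x => ?_
    simpa using apply_eq_mul_of_parClass_eq_leftClass hcenter hdim hα hpres h1 hM hM'
      (hMM'.1 hMl) (g := .mulRight a)
      (fun _ hx => exists_mem_parClass_of_eq_leftClass hMl hM ha hx) x
  · have hM'r := (parClass_eq_rightClass_iff hcenter hdim hpar ((hα.one_mem_iff h1 hM').2 hM)).2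
      fun h => (parClass_eq_rightClass_iff hcenter hdim hpar hM).1 hMr (hMM'.2 h)
    refine .inr fun x => ?_
    simpa using apply_eq_mul_of_parClass_eq_rightClass hcenter hdim hα hpres h1 hM hM' hM'r
      (g := .mulLeft a) (fun _ hx => exists_mem_parClass_of_eq_rightClass hMr hM ha hx) x

theorem apply_mul_of_kind_ne (hcenter : CenterEqF F H) (hdim : finrank F H = 4)
    (hpar : IsCliffordLike F H par) (hα : IsSemilinear F H α) (hpres : Preserves F H α par)
    (h1 : α 1 = 1) {M M' : Line F H} (hM : (1 : H) ∈ M.1) (hM' : (M'.1 : Set H) = α '' M.1)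
    (hMM' : ¬(parClass F H par M = leftClass F H M ↔ parClass F H par M' = leftClass F H M'))
    {a : H} (ha : a ∈ M.1) :
    (∀ x, α (x * a) = α a * α x) ∨ ∀ x, α (a * x) = α x * α a := by
  rcases hpar.2 M with hMl | hMr
  · have hM'r := (parClass_eq_rightClass_iff hcenter hdim hpar ((hα.one_mem_iff h1 hM').2 hM)).2
      fun h => hMM' (iff_of_true hMl h)
    refine .inl fun x => ?_
    simpa using apply_eq_mul_of_parClass_eq_rightClass hcenter hdim hα hpres h1 hM hM' hM'r
      (g := .mulRight a) (fun _ hx => exists_mem_parClass_of_eq_leftClass hMl hM ha hx) x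
  · have hM'l : parClass F H par M' = leftClass F H M' := by_contra fun h =>
      hMM' (iff_of_false ((parClass_eq_rightClass_iff hcenter hdim hpar hM).1 hMr) h)
    refine .inr fun x => ?_
    simpa using apply_eq_mul_of_parClass_eq_leftClass hcenter hdim hα hpres h1 hM hM' hM'l
      (g := .mulLeft a) (fun _ hx => exists_mem_parClass_of_eq_rightClass hMr hM ha hx) x

end CliffordLike

theorem commute_or_commute_apply_of_mul {H : Type*} [Mul H] {α : H → H}
    (hα : Function.Injective α) {a b : H}
    (ha : (∀ x, α (x * a) = α x * α a) ∨ ∀ x, α (a * x) = α a * α x)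
    (hb : (∀ x, α (x * b) = α b * α x) ∨ ∀ x, α (b * x) = α x * α b) :
    Commute a b ∨ Commute (α a) (α b) := by
  rcases ha with ha | ha <;> rcases hb with hb | hb
  · exact .inl (hα ((hb a).trans (ha b).symm))
  · exact .inr ((hb a).symm.trans (ha b))
  · exact .inr ((ha b).symm.trans (hb a))
  · exact .inl (hα ((ha b).trans (hb a).symm))

section Kind

variable {F H : Type*} [Field F] [DivisionRing H] [Algebra F H]
  {par : Line F H → Line F H → Prop} {α : H → H}

theorem eq_of_commute_or_commute_apply (hcenter : CenterEqF F H) (hdim : finrank F H = 4)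
    (hα : IsSemilinear F H α) (h1 : α 1 = 1) {M M' N N' : Line F H} (hM : (1 : H) ∈ M.1)
    (hM' : (M'.1 : Set H) = α '' M.1) (hN : (1 : H) ∈ N.1) (hN' : (N'.1 : Set H) = α '' N.1)
    {a b : H} (haM : a ∈ M.1) (ha : a ∉ F ∙ (1 : H)) (hbN : b ∈ N.1) (hb : b ∉ F ∙ (1 : H))
    (h : Commute a b ∨ Commute (α a) (α b)) : M = N := by
  rcases h with h | h
  · exact Line.eq_of_mem_of_mem hcenter hdim hM hN
      ((Line.mem_iff_commute hcenter hdim hM haM ha).2 h) hbN hb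
  · have hM'1 := (hα.one_mem_iff h1 hM').2 hM
    have hM'N' : M' = N' := Line.eq_of_mem_of_mem hcenter hdim hM'1
      ((hα.one_mem_iff h1 hN').2 hN)
      ((Line.mem_iff_commute hcenter hdim hM'1 (apply_mem_of_coe_eq_image hM' haM)
        (hα.apply_notMem_span_one h1 ha)).2 h)
      (apply_mem_of_coe_eq_image hN' hbN) (hα.apply_notMem_span_one h1 hb)
    exact Subtype.ext <| SetLike.coe_injective <|
      hα.1.1.image_injective (hM'.symm.trans (hM'N' ▸ hN'))

theorem kind_iff_of_kind_iff (hcenter : CenterEqF F H) (hdim : finrank F H = 4)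
    (hpar : IsCliffordLike F H par) (hα : IsSemilinear F H α) (hpres : Preserves F H α par)
    (h1 : α 1 = 1) {M M' N N' : Line F H} (hM : (1 : H) ∈ M.1)
    (hM' : (M'.1 : Set H) = α '' M.1) (hN : (1 : H) ∈ N.1) (hN' : (N'.1 : Set H) = α '' N.1)
    (hMM' : parClass F H par M = leftClass F H M ↔ parClass F H par M' = leftClass F H M') :
    parClass F H par N = leftClass F H N ↔ parClass F H par N' = leftClass F H N' := by
  by_contra hNN'
  obtain ⟨a, haM, ha⟩ := M.exists_mem_notMem_span_one
  obtain ⟨b, hbN, hb⟩ := N.exists_mem_notMem_span_one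
  obtain rfl := eq_of_commute_or_commute_apply hcenter hdim hα h1 hM hM' hN hN' haM ha hbN hb
    (commute_or_commute_apply_of_mul hα.1.1
      (apply_mul_of_kind_eq hcenter hdim hpar hα hpres h1 hM hM' hMM' haM)
      (apply_mul_of_kind_ne hcenter hdim hpar hα hpres h1 hN hN' hNN' hbN))
  obtain rfl : M' = N' := Subtype.ext (SetLike.coe_injective (hM'.trans hN'.symm))
  exact hNN' hMM'

end Kind

section Image

variable {F H : Type*} [Field F] [DivisionRing H] [Algebra F H]
  {par : Line F H → Line F H → Prop} {α : H → H}

theorem imageLines_calF_of_kind_iff (hcenter : CenterEqF F H) (hdim : finrank F H = 4)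
    (hpar : IsCliffordLike F H par) (hα : IsSemilinear F H α) (hpres : Preserves F H α par)
    (h1 : α 1 = 1) {L L' : Line F H} (hL : (1 : H) ∈ L.1) (hL' : (L'.1 : Set H) = α '' L.1)
    (hLL' : parClass F H par L = leftClass F H L ↔ parClass F H par L' = leftClass F H L') :
    imageLines F H α (calF F H par) = calF F H par := by
  ext M'
  constructor
  · rintro ⟨M, ⟨hM, hMl⟩, hM'⟩
    exact ⟨(hα.one_mem_iff h1 hM').2 hM,
      (kind_iff_of_kind_iff hcenter hdim hpar hα hpres h1 hL hL' hM hM' hLL').1 hMl⟩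
  · rintro ⟨hM'1, hM'l⟩
    obtain ⟨M, hM'⟩ := hα.exists_line_preimage M'
    have hM := (hα.one_mem_iff h1 hM').1 hM'1
    exact ⟨M, ⟨hM, (kind_iff_of_kind_iff hcenter hdim hpar hα hpres h1 hL hL' hM hM' hLL').2 hM'l⟩,
      hM'⟩

theorem imageLines_calF_of_not_kind_iff (hcenter : CenterEqF F H) (hdim : finrank F H = 4)
    (hpar : IsCliffordLike F H par) (hα : IsSemilinear F H α) (hpres : Preserves F H α par)
    (h1 : α 1 = 1) {L L' : Line F H} (hL : (1 : H) ∈ L.1) (hL' : (L'.1 : Set H) = α '' L.1)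
    (hLL' : ¬(parClass F H par L = leftClass F H L ↔ parClass F H par L' = leftClass F H L')) :
    imageLines F H α (calF F H par) = starLines F H \ calF F H par := by
  have hMM' {M M' : Line F H} (hM : (1 : H) ∈ M.1) (hM' : (M'.1 : Set H) = α '' M.1) :
      ¬(parClass F H par M = leftClass F H M ↔ parClass F H par M' = leftClass F H M') :=
    fun h => hLL' (kind_iff_of_kind_iff hcenter hdim hpar hα hpres h1 hM hM' hL hL' h)
  ext M'
  constructor
  · rintro ⟨M, ⟨hM, hMl⟩, hM'⟩
    exact ⟨(hα.one_mem_iff h1 hM').2 hM, fun hM'F => hMM' hM hM' (iff_of_true hMl hM'F.2)⟩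
  · rintro ⟨hM'1, hM'F⟩
    obtain ⟨M, hM'⟩ := hα.exists_line_preimage M'
    have hM := (hα.one_mem_iff h1 hM').1 hM'1
    refine ⟨M, ⟨hM, by_contra fun hMl => hMM' hM hM' (iff_of_false hMl fun h => ?_)⟩, hM'⟩
    exact hM'F ⟨hM'1, h⟩

end Image

/-- Let `α` be a `∥`-preserving semilinear bijection with `α(1) = 1`. If for some line
`L ∈ 𝒜` the classes `S(L)` and `S(α(L))` are of the same kind then `α(ℱ) = ℱ`; if they
are of different kind then `α(ℱ) = 𝒜 \ ℱ`. -/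
theorem preserving_semilinear_calF
    (hcenter : CenterEqF F H) (hdim : Module.finrank F H = 4)
    (par : Line F H → Line F H → Prop) (hpar : IsCliffordLike F H par)
    (α : H → H) (hα : IsSemilinear F H α)
    (hpres : Preserves F H α par) (h1 : α 1 = 1) :
    ((∃ L L' : Line F H, (1 : H) ∈ L.1 ∧ (L'.1 : Set H) = α '' (L.1 : Set H) ∧
        ((parClass F H par L = leftClass F H L ∧
            parClass F H par L' = leftClass F H L') ∨
         (parClass F H par L = rightClass F H L ∧
            parClass F H par L' = rightClass F H L'))) →
      imageLines F H α (calF F H par) = calF F H par) ∧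
    ((∃ L L' : Line F H, (1 : H) ∈ L.1 ∧ (L'.1 : Set H) = α '' (L.1 : Set H) ∧
        ((parClass F H par L = leftClass F H L ∧
            parClass F H par L' = rightClass F H L') ∨
         (parClass F H par L = rightClass F H L ∧
            parClass F H par L' = leftClass F H L'))) →
      imageLines F H α (calF F H par) = starLines F H \ calF F H par) := by
  have hright {L : Line F H} (hL : (1 : H) ∈ L.1) :=
    parClass_eq_rightClass_iff hcenter hdim hpar hL
  constructor
  · rintro ⟨L, L', hL, hL', hLL'⟩
    have hL'1 := (hα.one_mem_iff h1 hL').2 hL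
    refine imageLines_calF_of_kind_iff hcenter hdim hpar hα hpres h1 hL hL' ?_
    rcases hLL' with ⟨h, h'⟩ | ⟨h, h'⟩
    · exact iff_of_true h h'
    · exact iff_of_false ((hright hL).1 h) ((hright hL'1).1 h')
  · rintro ⟨L, L', hL, hL', hLL'⟩
    have hL'1 := (hα.one_mem_iff h1 hL').2 hL
    refine imageLines_calF_of_not_kind_iff hcenter hdim hpar hα hpres h1 hL hL' ?_
    rcases hLL' with ⟨h, h'⟩ | ⟨h, h'⟩
    · exact fun hiff => (hright hL'1).1 h' (hiff.1 h)
    · exact fun hiff => (hright hL).1 h (hiff.2 h')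
end

section
/- Let ∥ be a Clifford-like parallelism. A semilinear bijection β : H → H preserves ∥ if and only if the map α : H → H defined by α(x) := β(1)⁻¹·β(x) is either (i) a ring automorphism of H with α(ℱ) = ℱ, or (ii) a ring antiautomorphism of H (an additive bijection with α(1) = 1 and α(x·y) = α(y)·α(x) for all x, y) with α(ℱ) = 𝒜 \ ℱ; equivalently, β factorises as β = λ_{β(1)} ∘ α with λ_{β(1)} the left translation x ↦ β(1)·x and α as in (i) or (ii). -/
variable (F H : Type*) [Field F] [DivisionRing H] [Algebra F H]

namespace CLPaux

open Submodule Module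

noncomputable section

variable {F H : Type*} [Field F] [DivisionRing H] [Algebra F H]

abbrev Fone (F H : Type*) [Field F] [DivisionRing H] [Algebra F H] : Submodule F H :=
  Submodule.span F {(1:H)}

lemma mem_Fone {x : H} : x ∈ Fone F H ↔ ∃ a : F, a • (1:H) = x := Submodule.mem_span_singleton

lemma central_iff (hcenter : CenterEqF F H) {z : H} :
    (∀ x, z * x = x * z) ↔ z ∈ Fone F H := by
  rw [hcenter z]
  constructor
  · rintro ⟨a, rfl⟩
    exact mem_Fone.2 ⟨a, (Algebra.algebraMap_eq_smul_one a).symm⟩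
  · rintro hz
    obtain ⟨a, rfl⟩ := mem_Fone.1 hz
    exact ⟨a, by rw [Algebra.algebraMap_eq_smul_one]⟩

lemma exists_not_mem {A : Submodule F H} (hA : A ≠ ⊤) : ∃ z, z ∉ A := by
  by_contra h
  push_neg at h
  exact hA (Submodule.eq_top_iff'.2 h)

lemma exists_not_mem_pair {A B : Submodule F H} (hA : A ≠ ⊤) (hB : B ≠ ⊤) :
    ∃ z, z ∉ A ∧ z ∉ B := by
  obtain ⟨a, ha⟩ := exists_not_mem hA
  obtain ⟨b, hb⟩ := exists_not_mem hB
  by_cases h1 : a ∈ B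
  · by_cases h2 : b ∈ A
    · refine ⟨a + b, fun h => ha ?_, fun h => hb ?_⟩
      · simpa using A.sub_mem h h2
      · simpa using B.sub_mem h h1
    · exact ⟨b, h2, hb⟩
  · exact ⟨a, ha, h1⟩

lemma li_pair {u w : H} (hu : u ≠ 0) (hw : w ∉ Submodule.span F {u}) :
    LinearIndependent F ![u, w] := by
  rw [linearIndependent_fin2]
  refine ⟨fun h => hw ?_, fun a ha => ?_⟩
  · simp only [Matrix.cons_val_one, Matrix.head_cons] at h
    simp at h; simp [h]
  simp only [Matrix.cons_val_one, Matrix.head_cons, Matrix.cons_val_zero] at ha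
  apply hw
  have ha' : a ≠ 0 := by rintro rfl; simp at ha; exact hu ha.symm
  rw [Submodule.mem_span_singleton]
  exact ⟨a⁻¹, by rw [← ha, smul_smul, inv_mul_cancel₀ ha', one_smul]⟩

lemma span_pair_eq_range {u w : H} : Submodule.span F {u, w} = Submodule.span F (Set.range ![u, w]) := by
  congr 1
  ext x
  simp only [Matrix.range_cons, Matrix.range_empty, Set.union_empty, Set.union_singleton,
    Set.mem_insert_iff, Set.mem_singleton_iff]
  tauto

lemma finrank_span_pair {u w : H} (h : LinearIndependent F ![u, w]) :
    finrank F (Submodule.span F {u, w}) = 2 := by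
  rw [span_pair_eq_range, finrank_span_eq_card h]
  simp

def cent (F : Type*) {H : Type*} [Field F] [DivisionRing H] [Algebra F H] (y : H) :
    Submodule F H where
  carrier := {z | z * y = y * z}
  add_mem' := by
    intro a b ha hb
    simp only [Set.mem_setOf_eq] at *
    rw [add_mul, mul_add, ha, hb]
  zero_mem' := by simp
  smul_mem' := by
    intro c z hz
    simp only [Set.mem_setOf_eq] at *
    rw [smul_mul_assoc, hz, mul_smul_comm]

lemma mem_cent {y z : H} : z ∈ cent F y ↔ z * y = y * z := Iff.rfl

lemma mul_mem_cent {y z w : H} (hz : z ∈ cent F y) (hw : w ∈ cent F y) :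
    z * w ∈ cent F y := by
  rw [mem_cent] at *
  rw [mul_assoc, hw, ← mul_assoc, hz, mul_assoc]

lemma inv_mem_cent {y z : H} (hz : z ∈ cent F y) : z⁻¹ ∈ cent F y := by
  rcases eq_or_ne z 0 with rfl | h0
  · simpa using hz
  rw [mem_cent] at *
  have h := congrArg (fun t => z⁻¹ * (t * z⁻¹)) hz
  simp only [mul_assoc] at h
  rw [inv_mul_cancel_left₀ h0, mul_inv_cancel₀ h0, mul_one] at h
  exact h.symm

lemma cent_ne_top (hcenter : CenterEqF F H) {y : H} (hy : y ∉ Fone F H) :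
    cent F y ≠ ⊤ := by
  intro h
  apply hy
  rw [← central_iff hcenter]
  intro x
  exact (mem_cent.1 (h ▸ Submodule.mem_top : x ∈ cent F y)).symm

def rmulL (F : Type*) {H : Type*} [Field F] [DivisionRing H] [Algebra F H] (h : H) :
    H →ₗ[F] H where
  toFun x := x * h
  map_add' x y := add_mul x y h
  map_smul' a x := by simp [smul_mul_assoc]

def rmulE (F : Type*) {H : Type*} [Field F] [DivisionRing H] [Algebra F H] (h : H)
    (hh : h ≠ 0) : H ≃ₗ[F] H :=
  LinearEquiv.ofLinear (rmulL F h) (rmulL F h⁻¹)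
    (by ext x; simp [rmulL, mul_assoc, inv_mul_cancel₀ hh])
    (by ext x; simp [rmulL, mul_assoc, mul_inv_cancel₀ hh])

lemma finrank_cent_le_two (hcenter : CenterEqF F H) (hdim : Module.finrank F H = 4)
    {y : H} (hy : y ∉ Fone F H) : finrank F (cent F y) ≤ 2 := by
  haveI : FiniteDimensional F H := .of_finrank_pos (by rw [hdim]; norm_num)
  obtain ⟨h, hh⟩ := exists_not_mem (cent_ne_top hcenter hy)
  have h0 : h ≠ 0 := fun e => hh (e ▸ (cent F y).zero_mem)
  set K := cent F y with hK
  set Kh := K.map (rmulE F h h0).toLinearMap with hKh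
  have hrank : finrank F Kh = finrank F K := (LinearEquiv.finrank_map_eq _ _)
  have hint : K ⊓ Kh = ⊥ := by
    rw [eq_bot_iff]
    rintro z ⟨hz1, hz2⟩
    obtain ⟨k, hk, rfl⟩ := Submodule.mem_map.1 hz2
    have hkz : (rmulE F h h0).toLinearMap k = k * h := rfl
    rw [hkz] at hz1 ⊢
    rcases eq_or_ne k 0 with rfl | hk0
    · simp
    exfalso
    apply hh
    have : h = k⁻¹ * (k * h) := by rw [← mul_assoc, inv_mul_cancel₀ hk0, one_mul]
    exact this ▸ mul_mem_cent (inv_mem_cent hk) hz1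
  have hsum := Submodule.finrank_sup_add_finrank_inf_eq K Kh
  rw [hint, finrank_bot] at hsum
  have hle : finrank F ↥(K ⊔ Kh) ≤ 4 := hdim ▸ Submodule.finrank_le _
  omega

lemma cent_eq_span (hcenter : CenterEqF F H) (hdim : Module.finrank F H = 4)
    {y : H} (hy : y ∉ Fone F H) : cent F y = Submodule.span F {1, y} := by
  haveI : FiniteDimensional F H := .of_finrank_pos (by rw [hdim]; norm_num)
  have hle : Submodule.span F {(1:H), y} ≤ cent F y := by
    rw [Submodule.span_le]
    rintro z hz
    rcases hz with rfl | hz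
    · exact mem_cent.2 (by rw [one_mul, mul_one])
    · rcases hz with rfl
      exact mem_cent.2 rfl
  have h2 : finrank F (Submodule.span F {(1:H), y}) = 2 :=
    finrank_span_pair (li_pair one_ne_zero hy)
  exact (Submodule.eq_of_le_of_finrank_le hle
    (by rw [h2]; exact finrank_cent_le_two hcenter hdim hy)).symm

lemma mem_span_one_y {y z : H} (hz : z ∈ Submodule.span F {(1:H), y}) :
    ∃ a b : F, a • (1:H) + b • y = z := Submodule.mem_span_pair.1 hz

lemma line_gen (hdim : Module.finrank F H = 4) {L : Line F H} (h1 : (1:H) ∈ L.1) :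
    ∃ y, y ∉ Fone F H ∧ y ∈ L.1 ∧ L.1 = Submodule.span F {1, y} := by
  haveI : FiniteDimensional F H := .of_finrank_pos (by rw [hdim]; norm_num)
  have hnle : ¬(L.1 ≤ Fone F H) := by
    intro hle
    have := Submodule.finrank_mono hle
    rw [L.2, finrank_span_singleton (one_ne_zero : (1:H) ≠ 0)] at this
    omega
  obtain ⟨y, hyL, hy⟩ := SetLike.not_le_iff_exists.1 hnle
  refine ⟨y, hy, hyL, ?_⟩
  have hle : Submodule.span F {(1:H), y} ≤ L.1 := by
    rw [Submodule.span_le]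
    rintro z hz
    rcases hz with rfl | hz
    · exact h1
    · rcases hz with rfl; exact hyL
  exact (Submodule.eq_of_le_of_finrank_le hle
    (by rw [L.2, finrank_span_pair (li_pair one_ne_zero hy)])).symm

lemma line_mul_mem (hcenter : CenterEqF F H) (hdim : Module.finrank F H = 4)
    {L : Line F H} (h1 : (1:H) ∈ L.1) {z w : H} (hz : z ∈ L.1) (hw : w ∈ L.1) :
    z * w ∈ L.1 := by
  obtain ⟨y, hy, hyL, hLs⟩ := line_gen hdim h1
  have h' : L.1 = cent F y := hLs.trans (cent_eq_span hcenter hdim hy).symm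
  rw [h'] at hz hw ⊢
  exact mul_mem_cent hz hw

lemma line_inv_mem (hcenter : CenterEqF F H) (hdim : Module.finrank F H = 4)
    {L : Line F H} (h1 : (1:H) ∈ L.1) {z : H} (hz : z ∈ L.1) : z⁻¹ ∈ L.1 := by
  obtain ⟨y, hy, hyL, hLs⟩ := line_gen hdim h1
  have h' : L.1 = cent F y := hLs.trans (cent_eq_span hcenter hdim hy).symm
  rw [h'] at hz ⊢
  exact inv_mem_cent hz

lemma line_comm (hcenter : CenterEqF F H) (hdim : Module.finrank F H = 4)
    {L : Line F H} (h1 : (1:H) ∈ L.1) {z w : H} (hz : z ∈ L.1) (hw : w ∈ L.1) :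
    z * w = w * z := by
  obtain ⟨y, hy, hyL, hLs⟩ := line_gen hdim h1
  have hzy : z * y = y * z := mem_cent.1 (by
    rw [cent_eq_span hcenter hdim hy, ← hLs]; exact hz)
  obtain ⟨a, b, hab⟩ := mem_span_one_y (hLs ▸ hw)
  calc z * w = z * (a • 1 + b • y) := by rw [hab]
    _ = a • z + b • (z * y) := by rw [mul_add, mul_smul_comm, mul_smul_comm, mul_one]
    _ = a • z + b • (y * z) := by rw [hzy]
    _ = (a • 1 + b • y) * z := by rw [add_mul, smul_mul_assoc, smul_mul_assoc, one_mul]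
    _ = w * z := by rw [hab]

def mkLine {y : H} (hy : y ∉ Fone F H) : Line F H :=
  ⟨Submodule.span F {1, y}, finrank_span_pair (li_pair one_ne_zero hy)⟩

lemma mkLine_one_mem {y : H} (hy : y ∉ Fone F H) : (1:H) ∈ (mkLine hy).1 :=
  Submodule.subset_span (by simp)

lemma mkLine_self_mem {y : H} (hy : y ∉ Fone F H) : y ∈ (mkLine hy).1 :=
  Submodule.subset_span (by simp)

lemma mem_limg {g x : H} (hg : g ≠ 0) {S : Set H} :
    x ∈ (fun m => g * m) '' S ↔ g⁻¹ * x ∈ S := by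
  constructor
  · rintro ⟨m, hm, rfl⟩
    simpa [inv_mul_cancel_left₀ hg] using hm
  · intro h
    exact ⟨g⁻¹ * x, h, by show g * (g⁻¹ * x) = x; rw [mul_inv_cancel_left₀ hg]⟩

lemma mem_rimg {g x : H} (hg : g ≠ 0) {S : Set H} :
    x ∈ (fun m => m * g) '' S ↔ x * g⁻¹ ∈ S := by
  constructor
  · rintro ⟨m, hm, rfl⟩
    simpa [mul_assoc, mul_inv_cancel₀ hg] using hm
  · intro h
    exact ⟨x * g⁻¹, h, by show x * g⁻¹ * g = x; rw [inv_mul_cancel_right₀ hg]⟩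

lemma lcoset_eq (hcenter : CenterEqF F H) (hdim : Module.finrank F H = 4)
    {L : Line F H} (h1 : (1:H) ∈ L.1) {g x : H} (hx : x ≠ 0)
    (hmem : x ∈ (fun m => g * m) '' (L.1 : Set H)) :
    (fun m => g * m) '' (L.1 : Set H) = (fun m => x * m) '' (L.1 : Set H) := by
  obtain ⟨w, hw, rfl⟩ := hmem
  have hw0 : w ≠ 0 := by rintro rfl; simp at hx
  ext z
  constructor
  · rintro ⟨m, hm, rfl⟩
    exact ⟨w⁻¹ * m,
      line_mul_mem hcenter hdim h1 (line_inv_mem hcenter hdim h1 hw) hm,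
      by simp only; rw [mul_assoc, mul_inv_cancel_left₀ hw0]⟩
  · rintro ⟨m, hm, rfl⟩
    exact ⟨w * m, line_mul_mem hcenter hdim h1 hw hm, by simp only [mul_assoc]⟩

lemma rcoset_eq (hcenter : CenterEqF F H) (hdim : Module.finrank F H = 4)
    {L : Line F H} (h1 : (1:H) ∈ L.1) {g x : H} (hx : x ≠ 0)
    (hmem : x ∈ (fun m => m * g) '' (L.1 : Set H)) :
    (fun m => m * g) '' (L.1 : Set H) = (fun m => m * x) '' (L.1 : Set H) := by
  obtain ⟨w, hw, rfl⟩ := hmem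
  have hw0 : w ≠ 0 := by rintro rfl; simp at hx
  ext z
  constructor
  · rintro ⟨m, hm, rfl⟩
    refine ⟨m * w⁻¹,
      line_mul_mem hcenter hdim h1 hm (line_inv_mem hcenter hdim h1 hw), ?_⟩
    simp only
    rw [mul_assoc, inv_mul_cancel_left₀ hw0]
  · rintro ⟨m, hm, rfl⟩
    exact ⟨m * w, line_mul_mem hcenter hdim h1 hm hw, by simp only [mul_assoc]⟩

structure SLB (F H : Type*) [Field F] [DivisionRing H] [Algebra F H] where
  f : H → H
  finv : H → H
  σ : F ≃+* F
  add : ∀ x y, f (x + y) = f x + f y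
  smul : ∀ (a : F) (x : H), f (a • x) = σ a • f x
  left_inv : ∀ x, finv (f x) = x
  right_inv : ∀ x, f (finv x) = x

namespace SLB

variable (φ : SLB F H)

lemma inj : Function.Injective φ.f := fun x y h => by
  rw [← φ.left_inv x, h, φ.left_inv]

lemma map_zero : φ.f 0 = 0 := by
  have := φ.add 0 0
  rw [add_zero] at this
  have h := congrArg (fun t => t - φ.f 0) this
  simpa using h.symm

lemma ne_zero {x : H} (hx : x ≠ 0) : φ.f x ≠ 0 := fun h =>
  hx (φ.inj (h.trans φ.map_zero.symm))

def symm : SLB F H where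
  f := φ.finv
  finv := φ.f
  σ := φ.σ.symm
  add x y := by
    apply φ.inj
    rw [φ.add, φ.right_inv, φ.right_inv, φ.right_inv]
  smul a x := by
    apply φ.inj
    rw [φ.right_inv, φ.smul, RingEquiv.apply_symm_apply, φ.right_inv]
  left_inv := φ.right_inv
  right_inv := φ.left_inv

lemma finv_zero : φ.finv 0 = 0 := φ.symm.map_zero

lemma finv_add : ∀ x y : H, φ.finv (x + y) = φ.finv x + φ.finv y := φ.symm.add

def mapSub (M : Submodule F H) : Submodule F H where
  carrier := φ.f '' (M : Set H)
  add_mem' := by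
    rintro a b ⟨x, hx, rfl⟩ ⟨y, hy, rfl⟩
    exact ⟨x + y, M.add_mem hx hy, φ.add x y⟩
  zero_mem' := ⟨0, M.zero_mem, φ.map_zero⟩
  smul_mem' := by
    rintro c x ⟨m, hm, rfl⟩
    refine ⟨φ.σ.symm c • m, M.smul_mem _ hm, ?_⟩
    rw [φ.smul, RingEquiv.apply_symm_apply]

lemma mapSub_coe (M : Submodule F H) : (φ.mapSub M : Set H) = φ.f '' (M : Set H) := rfl

lemma exists_pair_of_finrank_two {M : Submodule F H} (hM : finrank F M = 2) :
    ∃ u w : H, u ≠ 0 ∧ w ∉ Submodule.span F {u} ∧ u ∈ M ∧ w ∈ M ∧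
      M = Submodule.span F {u, w} := by
  haveI : FiniteDimensional F M := .of_finrank_eq_succ hM
  have hbot : M ≠ ⊥ := by
    intro h
    rw [h, finrank_bot] at hM
    omega
  obtain ⟨u, huM, hu⟩ := Submodule.ne_bot_iff M |>.1 hbot
  have hnle : ¬(M ≤ Submodule.span F {u}) := by
    intro hle
    have := Submodule.finrank_mono hle
    rw [hM, finrank_span_singleton hu] at this
    omega
  obtain ⟨w, hwM, hw⟩ := SetLike.not_le_iff_exists.1 hnle
  refine ⟨u, w, hu, hw, huM, hwM, ?_⟩
  have hle : Submodule.span F {u, w} ≤ M := by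
    rw [Submodule.span_le]
    rintro z hz
    rcases hz with rfl | hz
    · exact huM
    · rcases hz with rfl; exact hwM
  exact (Submodule.eq_of_le_of_finrank_le hle
    (by rw [hM, finrank_span_pair (li_pair hu hw)])).symm

lemma finrank_mapSub {M : Submodule F H} (hM : finrank F M = 2) :
    finrank F (φ.mapSub M) = 2 := by
  obtain ⟨u, w, hu, hw, huM, hwM, rfl⟩ := exists_pair_of_finrank_two hM
  have himg : φ.mapSub (Submodule.span F {u, w}) = Submodule.span F {φ.f u, φ.f w} := by
    apply le_antisymm
    · rintro z ⟨m, hm, rfl⟩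
      obtain ⟨a, b, hab⟩ := Submodule.mem_span_pair.1 hm
      rw [← hab, φ.add, φ.smul, φ.smul]
      exact Submodule.add_mem _
        (Submodule.smul_mem _ _ (Submodule.subset_span (by simp)))
        (Submodule.smul_mem _ _ (Submodule.subset_span (by simp)))
    · rw [Submodule.span_le]
      rintro z hz
      rcases hz with rfl | hz
      · exact ⟨u, Submodule.subset_span (by simp), rfl⟩
      · rcases hz with rfl
        exact ⟨w, Submodule.subset_span (by simp), rfl⟩
  rw [himg]
  apply finrank_span_pair
  apply li_pair (φ.ne_zero hu)
  intro hmem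
  apply hw
  obtain ⟨a, ha⟩ := Submodule.mem_span_singleton.1 hmem
  rw [Submodule.mem_span_singleton]
  refine ⟨φ.σ.symm a, φ.inj ?_⟩
  rw [φ.smul, RingEquiv.apply_symm_apply, ha]

def lineMap (M : Line F H) : Line F H := ⟨φ.mapSub M.1, φ.finrank_mapSub M.2⟩

lemma lineMap_coe (M : Line F H) : ((φ.lineMap M).1 : Set H) = φ.f '' (M.1 : Set H) := rfl

lemma lineMap_symm_cancel (M : Line F H) : φ.lineMap (φ.symm.lineMap M) = M := by
  apply Subtype.ext
  apply SetLike.coe_injective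
  rw [lineMap_coe, lineMap_coe]
  show φ.f '' (φ.finv '' _) = _
  rw [Set.image_image]
  simp only [φ.right_inv, Set.image_id']

lemma symm_lineMap_cancel (M : Line F H) : φ.symm.lineMap (φ.lineMap M) = M := by
  apply Subtype.ext
  apply SetLike.coe_injective
  rw [lineMap_coe, lineMap_coe]
  show φ.finv '' (φ.f '' _) = _
  rw [Set.image_image]
  simp only [φ.left_inv, Set.image_id']

lemma mem_lineMap {x : H} {M : Line F H} (hx : x ∈ M.1) : φ.f x ∈ (φ.lineMap M).1 :=
  ⟨x, hx, rfl⟩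

lemma one_mem_lineMap (h1 : φ.f 1 = 1) {M : Line F H} (hM : (1:H) ∈ M.1) :
    (1:H) ∈ (φ.lineMap M).1 := ⟨1, hM, h1⟩

end SLB

lemma preserves_iff_lineMap (φ : SLB F H) (par : Line F H → Line F H → Prop) :
    Preserves F H φ.f par ↔ ∀ M N, par M N ↔ par (φ.lineMap M) (φ.lineMap N) := by
  constructor
  · intro h M N
    exact h M N _ _ rfl rfl
  · intro h M N M' N' hM hN
    have hM' : M' = φ.lineMap M := Subtype.ext (SetLike.coe_injective hM)
    have hN' : N' = φ.lineMap N := Subtype.ext (SetLike.coe_injective hN)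
    rw [hM', hN']
    exact h M N

def lmulSLB (b : H) (hb : b ≠ 0) : SLB F H where
  f x := b * x
  finv x := b⁻¹ * x
  σ := RingEquiv.refl F
  add x y := mul_add b x y
  smul a x := by simp [mul_smul_comm]
  left_inv x := by rw [inv_mul_cancel_left₀ hb]
  right_inv x := by rw [mul_inv_cancel_left₀ hb]

lemma image_lmul_lmul (g b : H) (S : Set H) :
    (fun m => g * m) '' ((fun m => b * m) '' S) = (fun m => (g * b) * m) '' S := by
  simp only [Set.image_image, mul_assoc]

lemma image_rmul_lmul (g b : H) (S : Set H) :
    (fun m => m * g) '' ((fun m => b * m) '' S) = (fun m => b * m) '' ((fun m => m * g) '' S) := by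
  simp only [Set.image_image, mul_assoc]

variable {par : Line F H → Line F H → Prop}

lemma parClass_eq (hpar : IsCliffordLike F H par) {P Q : Line F H} (h : par P Q) :
    parClass F H par P = parClass F H par Q := by
  have E := hpar.1.1
  ext R
  exact ⟨fun hR => E.trans hR h, fun hR => E.trans hR (E.symm h)⟩

lemma lmul_par (hpar : IsCliffordLike F H par) {b : H} (hb : b ≠ 0)
    {M N : Line F H} (h : par M N) :
    par ((lmulSLB b hb).lineMap M) ((lmulSLB b hb).lineMap N) := by
  have E := hpar.1.1
  set τ := lmulSLB (F := F) b hb with hτ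
  have hτM : ((τ.lineMap M).1 : Set H) = (fun m => b * m) '' (M.1 : Set H) := rfl
  have hτN : ((τ.lineMap N).1 : Set H) = (fun m => b * m) '' (N.1 : Set H) := rfl
  have hNM : par N M := E.symm h
  rcases hpar.2 M with hM | hM
  · have hNlc : N ∈ leftClass F H M := hM ▸ hNM
    obtain ⟨g, hg, hs⟩ := hNlc
    have h1 : par (τ.lineMap M) M := by
      have hmem : (τ.lineMap M) ∈ leftClass F H M := by
        refine ⟨b⁻¹, inv_ne_zero hb, ?_⟩
        rw [hτM, image_lmul_lmul]
        simp [inv_mul_cancel₀ hb]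
      exact (hM.symm ▸ hmem : (τ.lineMap M) ∈ parClass F H par M)
    have h2 : par (τ.lineMap N) M := by
      have hmem : (τ.lineMap N) ∈ leftClass F H M := by
        refine ⟨g * b⁻¹, mul_ne_zero hg (inv_ne_zero hb), ?_⟩
        rw [hτN, image_lmul_lmul, inv_mul_cancel_right₀ hb]
        exact hs
      exact (hM.symm ▸ hmem : (τ.lineMap N) ∈ parClass F H par M)
    exact E.trans h1 (E.symm h2)
  · rcases hpar.2 (τ.lineMap M) with hbM | hbM
    · have hMmem : M ∈ leftClass F H (τ.lineMap M) := ⟨b, hb, hτM⟩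
      have hM1 : par M (τ.lineMap M) :=
        (hbM.symm ▸ hMmem : M ∈ parClass F H par (τ.lineMap M))
      have hN1 : par N (τ.lineMap M) := E.trans hNM hM1
      have hNlc : N ∈ leftClass F H (τ.lineMap M) := hbM ▸ hN1
      obtain ⟨g, hg, hs⟩ := hNlc
      have h2 : par (τ.lineMap N) (τ.lineMap M) := by
        have hmem : (τ.lineMap N) ∈ leftClass F H (τ.lineMap M) := by
          refine ⟨g * b⁻¹, mul_ne_zero hg (inv_ne_zero hb), ?_⟩
          rw [hτN, image_lmul_lmul, inv_mul_cancel_right₀ hb]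
          exact hs
        exact (hbM.symm ▸ hmem : (τ.lineMap N) ∈ parClass F H par (τ.lineMap M))
      exact E.symm h2
    · have hNrc : N ∈ rightClass F H M := hM ▸ hNM
      obtain ⟨g, hg, hs⟩ := hNrc
      have h2 : par (τ.lineMap N) (τ.lineMap M) := by
        have hmem : (τ.lineMap N) ∈ rightClass F H (τ.lineMap M) := by
          refine ⟨g, hg, ?_⟩
          rw [hτN, hτM, image_rmul_lmul, ← hs]
        exact (hbM.symm ▸ hmem : (τ.lineMap N) ∈ parClass F H par (τ.lineMap M))
      exact E.symm h2

lemma lmul_lineMap_inv_cancel {b : H} (hb : b ≠ 0) (M : Line F H) :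
    (lmulSLB (F := F) (H := H) b⁻¹ (inv_ne_zero hb)).lineMap ((lmulSLB b hb).lineMap M) = M := by
  apply Subtype.ext
  apply SetLike.coe_injective
  show (fun m => b⁻¹ * m) '' ((fun m => b * m) '' (M.1 : Set H)) = (M.1 : Set H)
  rw [image_lmul_lmul]
  simp [inv_mul_cancel₀ hb]

lemma preserves_lmul (hpar : IsCliffordLike F H par) {b : H} (hb : b ≠ 0) :
    Preserves F H (fun x => b * x) par := by
  rw [show (fun x => b * x) = (lmulSLB (F := F) b hb).f from rfl,
    preserves_iff_lineMap]
  intro M N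
  constructor
  · exact lmul_par hpar hb
  · intro h
    have h2 := lmul_par hpar (inv_ne_zero hb) h
    rwa [lmul_lineMap_inv_cancel hb, lmul_lineMap_inv_cancel hb] at h2

def rmulSLB (b : H) (hb : b ≠ 0) : SLB F H where
  f x := x * b
  finv x := x * b⁻¹
  σ := RingEquiv.refl F
  add x y := add_mul x y b
  smul a x := by simp [smul_mul_assoc]
  left_inv x := by rw [mul_inv_cancel_right₀ hb]
  right_inv x := by rw [inv_mul_cancel_right₀ hb]

lemma image_rmul_rmul (g b : H) (S : Set H) :
    (fun m => m * g) '' ((fun m => m * b) '' S) = (fun m => m * (b * g)) '' S := by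
  simp only [Set.image_image, mul_assoc]

lemma line_ne_top (hdim : Module.finrank F H = 4) (L : Line F H) : L.1 ≠ ⊤ := by
  intro he
  have h2 := L.2
  rw [he, finrank_top, hdim] at h2
  omega

lemma line_eq_span (hdim : Module.finrank F H = 4) {L : Line F H} (h1 : (1:H) ∈ L.1)
    {y : H} (hyL : y ∈ L.1) (hy : y ∉ Fone F H) :
    L.1 = Submodule.span F {1, y} := by
  haveI : FiniteDimensional F H := .of_finrank_pos (by rw [hdim]; norm_num)
  have hle : Submodule.span F {(1:H), y} ≤ L.1 := by
    rw [Submodule.span_le]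
    rintro z hz
    rcases hz with rfl | hz
    · exact h1
    · rcases hz with rfl; exact hyL
  exact (Submodule.eq_of_le_of_finrank_le hle
    (by rw [L.2, finrank_span_pair (li_pair one_ne_zero hy)])).symm

lemma cent_le_line (hcenter : CenterEqF F H) (hdim : Module.finrank F H = 4)
    {L : Line F H} (h1 : (1:H) ∈ L.1) {y z : H} (hyL : y ∈ L.1) (hy : y ∉ Fone F H)
    (hcomm : z * y = y * z) : z ∈ L.1 := by
  rw [line_eq_span hdim h1 hyL hy, ← cent_eq_span hcenter hdim hy]
  exact mem_cent.2 hcomm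

lemma SLB_mem_Fone (φ : SLB F H) (h1 : φ.f 1 = 1) {x : H} :
    φ.f x ∈ Fone F H ↔ x ∈ Fone F H := by
  have hfinv1 : φ.finv 1 = 1 := by
    calc φ.finv 1 = φ.finv (φ.f 1) := by rw [h1]
      _ = 1 := φ.left_inv 1
  constructor
  · rintro hm
    obtain ⟨a, ha⟩ := mem_Fone.1 hm
    have : x = φ.σ.symm a • (1:H) := by
      apply φ.inj
      rw [φ.smul, RingEquiv.apply_symm_apply, h1, ha]
    exact this ▸ mem_Fone.2 ⟨φ.σ.symm a, rfl⟩
  · rintro hm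
    obtain ⟨a, rfl⟩ := mem_Fone.1 hm
    rw [φ.smul, h1]
    exact mem_Fone.2 ⟨φ.σ a, rfl⟩

lemma wlemma_left (hcenter : CenterEqF F H) (hdim : Module.finrank F H = 4)
    {W : Line F H} (hW : (1:H) ∈ W.1) (h : H → H)
    (hadd : ∀ x y, h (x + y) = h x + h y)
    (hmem : ∀ z : H, z ≠ 0 → h z ∈ (fun m => z * m) '' (W.1 : Set H)) :
    ∀ z, h z = z * h 1 := by
  haveI : FiniteDimensional F H := .of_finrank_pos (by rw [hdim]; norm_num)
  have h0 : h 0 = 0 := by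
    have h' := hadd 0 0
    rw [add_zero] at h'
    have h'' := congrArg (fun t => t - h 0) h'
    simpa using h''.symm
  have hwmem : ∀ z : H, z ≠ 0 → z⁻¹ * h z ∈ W.1 := fun z hz =>
    (mem_limg hz).1 (hmem z hz)
  have hzw : ∀ z : H, z ≠ 0 → h z = z * (z⁻¹ * h z) := fun z hz =>
    (mul_inv_cancel_left₀ hz _).symm
  have step1 : ∀ z z' : H, z ≠ 0 → z' ≠ 0 →
      z' ∉ (fun m => z * m) '' (W.1 : Set H) → z⁻¹ * h z = z'⁻¹ * h z' := by
    intro z z' hz hz' hnm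
    have hzz' : z + z' ≠ 0 := by
      intro hzz
      exact hnm ⟨(-1 : H), Submodule.neg_mem _ hW, by
        show z * (-1) = z'
        rw [mul_neg_one, ← eq_neg_of_add_eq_zero_right hzz]⟩
    set w1 := z⁻¹ * h z with hw1d
    set w2 := z'⁻¹ * h z' with hw2d
    set w3 := (z + z')⁻¹ * h (z + z') with hw3d
    have heq : z * w3 + z' * w3 = z * w1 + z' * w2 := by
      have e := hadd z z'
      rw [hzw z hz, hzw z' hz', hzw _ hzz', add_mul] at e
      exact e
    by_cases hc : w2 = w3
    · have e2 := heq
      rw [← hc] at e2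
      exact (mul_left_cancel₀ hz (add_right_cancel e2)).symm
    · exfalso
      have hw31 : w3 ≠ w1 := by
        intro he
        apply hc
        rw [he] at heq
        exact (mul_left_cancel₀ hz' (add_left_cancel heq)).symm.trans he.symm
      have hkey : z * (w3 - w1) = z' * (w2 - w3) := by
        rw [mul_sub, mul_sub, sub_eq_sub_iff_add_eq_add]
        exact heq.trans (add_comm _ _)
      set d := w3 - w1 with hdd
      set d' := w2 - w3 with hdd'
      have hd : d ≠ 0 := sub_ne_zero.2 hw31
      have hd' : d' ≠ 0 := sub_ne_zero.2 hc
      have hdW : d ∈ W.1 := Submodule.sub_mem _ (hwmem _ hzz') (hwmem z hz)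
      have hd'W : d' ∈ W.1 := Submodule.sub_mem _ (hwmem z' hz') (hwmem _ hzz')
      have hz_eq : z = z' * (d' * d⁻¹) := by
        rw [← mul_assoc, ← hkey, mul_assoc, mul_inv_cancel₀ hd, mul_one]
      apply hnm
      refine ⟨d * d'⁻¹,
        line_mul_mem hcenter hdim hW hdW (line_inv_mem hcenter hdim hW hd'W), ?_⟩
      show z * (d * d'⁻¹) = z'
      have hone : (d' * d⁻¹) * (d * d'⁻¹) = 1 := by
        rw [mul_assoc, inv_mul_cancel_left₀ hd, mul_inv_cancel₀ hd']
      rw [hz_eq, mul_assoc, hone, mul_one]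
  have step2 : ∀ z z' : H, z ≠ 0 → z' ≠ 0 → z⁻¹ * h z = z'⁻¹ * h z' := by
    intro z z' hz hz'
    by_cases hmem' : z' ∈ (fun m => z * m) '' (W.1 : Set H)
    · have hzW : ((lmulSLB z hz).lineMap W).1 ≠ ⊤ := line_ne_top hdim _
      have hz'W : ((lmulSLB z' hz').lineMap W).1 ≠ ⊤ := line_ne_top hdim _
      obtain ⟨z'', hz''1, hz''2⟩ := exists_not_mem_pair hzW hz'W
      have hz''0 : z'' ≠ 0 := fun he => hz''1 (he ▸ Submodule.zero_mem _)
      have e1 := step1 z z'' hz hz''0 hz''1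
      have e2 := step1 z' z'' hz' hz''0 hz''2
      exact e1.trans e2.symm
    · exact step1 z z' hz hz' hmem'
  intro z
  rcases eq_or_ne z 0 with rfl | hz
  · rw [h0, zero_mul]
  · have e := step2 z 1 hz one_ne_zero
    rw [inv_one, one_mul] at e
    rw [hzw z hz, e]

lemma wlemma_right (hcenter : CenterEqF F H) (hdim : Module.finrank F H = 4)
    {W : Line F H} (hW : (1:H) ∈ W.1) (h : H → H)
    (hadd : ∀ x y, h (x + y) = h x + h y)
    (hmem : ∀ z : H, z ≠ 0 → h z ∈ (fun m => m * z) '' (W.1 : Set H)) :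
    ∀ z, h z = h 1 * z := by
  haveI : FiniteDimensional F H := .of_finrank_pos (by rw [hdim]; norm_num)
  have h0 : h 0 = 0 := by
    have h' := hadd 0 0
    rw [add_zero] at h'
    have h'' := congrArg (fun t => t - h 0) h'
    simpa using h''.symm
  have hwmem : ∀ z : H, z ≠ 0 → h z * z⁻¹ ∈ W.1 := fun z hz =>
    (mem_rimg hz).1 (hmem z hz)
  have hzw : ∀ z : H, z ≠ 0 → h z = (h z * z⁻¹) * z := fun z hz =>
    (inv_mul_cancel_right₀ hz _).symm
  have step1 : ∀ z z' : H, z ≠ 0 → z' ≠ 0 →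
      z' ∉ (fun m => m * z) '' (W.1 : Set H) → h z * z⁻¹ = h z' * z'⁻¹ := by
    intro z z' hz hz' hnm
    have hzz' : z + z' ≠ 0 := by
      intro hzz
      exact hnm ⟨(-1 : H), Submodule.neg_mem _ hW, by
        show (-1) * z = z'
        rw [neg_one_mul, ← eq_neg_of_add_eq_zero_right hzz]⟩
    set w1 := h z * z⁻¹ with hw1d
    set w2 := h z' * z'⁻¹ with hw2d
    set w3 := h (z + z') * (z + z')⁻¹ with hw3d
    have heq : w3 * z + w3 * z' = w1 * z + w2 * z' := by
      have e := hadd z z'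
      rw [hzw z hz, hzw z' hz', hzw _ hzz', mul_add] at e
      exact e
    by_cases hc : w2 = w3
    · have e2 := heq
      rw [← hc] at e2
      exact (mul_right_cancel₀ hz (add_right_cancel e2)).symm
    · exfalso
      have hw31 : w3 ≠ w1 := by
        intro he
        apply hc
        rw [he] at heq
        exact (mul_right_cancel₀ hz' (add_left_cancel heq)).symm.trans he.symm
      have hkey : (w3 - w1) * z = (w2 - w3) * z' := by
        rw [sub_mul, sub_mul, sub_eq_sub_iff_add_eq_add]
        exact heq.trans (add_comm _ _)
      set d := w3 - w1 with hdd
      set d' := w2 - w3 with hdd'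
      have hd : d ≠ 0 := sub_ne_zero.2 hw31
      have hd' : d' ≠ 0 := sub_ne_zero.2 hc
      have hdW : d ∈ W.1 := Submodule.sub_mem _ (hwmem _ hzz') (hwmem z hz)
      have hd'W : d' ∈ W.1 := Submodule.sub_mem _ (hwmem z' hz') (hwmem _ hzz')
      have hz_eq : z = (d⁻¹ * d') * z' := by
        rw [mul_assoc, ← hkey, ← mul_assoc, inv_mul_cancel₀ hd, one_mul]
      apply hnm
      refine ⟨d'⁻¹ * d,
        line_mul_mem hcenter hdim hW (line_inv_mem hcenter hdim hW hd'W) hdW, ?_⟩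
      show (d'⁻¹ * d) * z = z'
      have hone : (d'⁻¹ * d) * (d⁻¹ * d') = 1 := by
        rw [mul_assoc, mul_inv_cancel_left₀ hd, inv_mul_cancel₀ hd']
      rw [hz_eq, ← mul_assoc, hone, one_mul]
  have step2 : ∀ z z' : H, z ≠ 0 → z' ≠ 0 → h z * z⁻¹ = h z' * z'⁻¹ := by
    intro z z' hz hz'
    by_cases hmem' : z' ∈ (fun m => m * z) '' (W.1 : Set H)
    · have hzW : ((rmulSLB z hz).lineMap W).1 ≠ ⊤ := line_ne_top hdim _
      have hz'W : ((rmulSLB z' hz').lineMap W).1 ≠ ⊤ := line_ne_top hdim _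
      obtain ⟨z'', hz''1, hz''2⟩ := exists_not_mem_pair hzW hz'W
      have hz''0 : z'' ≠ 0 := fun he => hz''1 (he ▸ Submodule.zero_mem _)
      have e1 := step1 z z'' hz hz''0 hz''1
      have e2 := step1 z' z'' hz' hz''0 hz''2
      exact e1.trans e2.symm
    · exact step1 z z' hz hz' hmem'
  intro z
  rcases eq_or_ne z 0 with rfl | hz
  · rw [h0, mul_zero]
  · have e := step2 z 1 hz one_ne_zero
    rw [inv_one, mul_one] at e
    rw [hzw z hz, e]

def FmlA (α : H → H) (L : Line F H) : Prop := ∀ x y : H, y ∈ L.1 → α (x * y) = α x * α y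
def FmlB (α : H → H) (L : Line F H) : Prop := ∀ x y : H, y ∈ L.1 → α (x * y) = α y * α x
def FmlC (α : H → H) (L : Line F H) : Prop := ∀ x y : H, y ∈ L.1 → α (y * x) = α y * α x
def FmlD (α : H → H) (L : Line F H) : Prop := ∀ x y : H, y ∈ L.1 → α (y * x) = α x * α y

lemma SLB.finv_one (φ : SLB F H) (h1 : φ.f 1 = 1) : φ.finv 1 = 1 := by
  calc φ.finv 1 = φ.finv (φ.f 1) := by rw [h1]
    _ = 1 := φ.left_inv 1

section FmlBranches

lemma key_left (hpar : IsCliffordLike F H par)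
    {L : Line F H} (hcl : parClass F H par L = leftClass F H L) :
    ∀ (x : H) (hx : x ≠ 0), par ((lmulSLB x hx).lineMap L) L := by
  intro x hx
  have hmem : ((lmulSLB x hx).lineMap L) ∈ leftClass F H L := by
    refine ⟨x⁻¹, inv_ne_zero hx, ?_⟩
    show (L.1 : Set H) = (fun m => x⁻¹ * m) '' ((fun m => x * m) '' (L.1 : Set H))
    rw [image_lmul_lmul]
    simp [inv_mul_cancel₀ hx]
  exact (hcl.symm ▸ hmem : _ ∈ parClass F H par L)

lemma key_right (hpar : IsCliffordLike F H par)
    {L : Line F H} (hcl : parClass F H par L = rightClass F H L) :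
    ∀ (x : H) (hx : x ≠ 0), par ((rmulSLB x hx).lineMap L) L := by
  intro x hx
  have hmem : ((rmulSLB x hx).lineMap L) ∈ rightClass F H L := by
    refine ⟨x⁻¹, inv_ne_zero hx, ?_⟩
    show (L.1 : Set H) = (fun m => m * x⁻¹) '' ((fun m => m * x) '' (L.1 : Set H))
    rw [image_rmul_rmul]
    simp [mul_inv_cancel₀ hx]
  exact (hcl.symm ▸ hmem : _ ∈ parClass F H par L)

lemma fml_LL (hcenter : CenterEqF F H) (hdim : Module.finrank F H = 4)
    (hpar : IsCliffordLike F H par) (φ : SLB F H) (h1 : φ.f 1 = 1)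
    (hpres : ∀ M N, par M N ↔ par (φ.lineMap M) (φ.lineMap N))
    {L : Line F H} (hL : (1:H) ∈ L.1)
    (hcl : parClass F H par L = leftClass F H L)
    (hclW : parClass F H par (φ.lineMap L) = leftClass F H (φ.lineMap L)) :
    FmlA φ.f L := by
  have hW1 : (1:H) ∈ (φ.lineMap L).1 := φ.one_mem_lineMap h1 hL
  have hfinv1 := φ.finv_one h1
  have hfinvadd := φ.finv_add
  have hfinvne : ∀ {z : H}, z ≠ 0 → φ.finv z ≠ 0 := by
    intro z hz he
    exact hz (by rw [← φ.right_inv z, he, φ.map_zero])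
  have key := key_left hpar hcl
  set W := φ.lineMap L with hWdef
  have imgeq : ∀ (x : H) (hx : x ≠ 0),
      ((φ.lineMap ((lmulSLB x hx).lineMap L)).1 : Set H) =
        (fun m => φ.f x * m) '' (W.1 : Set H) := by
    intro x hx
    have hp2 : par (φ.lineMap ((lmulSLB x hx).lineMap L)) W := (hpres _ _).1 (key x hx)
    have hmem : φ.lineMap ((lmulSLB x hx).lineMap L) ∈ leftClass F H W := hclW ▸ hp2
    obtain ⟨g, hg, hs⟩ := hmem
    have hXset : ((φ.lineMap ((lmulSLB x hx).lineMap L)).1 : Set H) =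
        (fun m => g⁻¹ * m) '' (W.1 : Set H) := by
      rw [hs, image_lmul_lmul]
      simp [inv_mul_cancel₀ hg]
    have hfx : φ.f x ∈ ((φ.lineMap ((lmulSLB x hx).lineMap L)).1 : Set H) :=
      ⟨x, ⟨1, hL, by show x * 1 = x; rw [mul_one]⟩, rfl⟩
    rw [hXset] at hfx ⊢
    exact lcoset_eq hcenter hdim hW1 (φ.ne_zero hx) hfx
  intro x y hyL
  rcases eq_or_ne x 0 with rfl | hx
  · rw [zero_mul, φ.map_zero, zero_mul]
  have hadd' : ∀ a b : H, φ.f (φ.finv (a + b) * y) = φ.f (φ.finv a * y) + φ.f (φ.finv b * y) := by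
    intro a b
    rw [hfinvadd, add_mul, φ.add]
  have hmem' : ∀ z : H, z ≠ 0 → φ.f (φ.finv z * y) ∈ (fun m => z * m) '' (W.1 : Set H) := by
    intro z hz
    have hxz := hfinvne hz
    have himg : φ.f (φ.finv z * y) ∈
        ((φ.lineMap ((lmulSLB (φ.finv z) hxz).lineMap L)).1 : Set H) :=
      ⟨φ.finv z * y, ⟨y, hyL, rfl⟩, rfl⟩
    rw [imgeq _ hxz] at himg
    rwa [φ.right_inv] at himg
  have hcalc := wlemma_left hcenter hdim hW1 _ hadd' hmem' (φ.f x)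
  simp only [φ.left_inv, hfinv1, one_mul] at hcalc
  exact hcalc

lemma fml_LR (hcenter : CenterEqF F H) (hdim : Module.finrank F H = 4)
    (hpar : IsCliffordLike F H par) (φ : SLB F H) (h1 : φ.f 1 = 1)
    (hpres : ∀ M N, par M N ↔ par (φ.lineMap M) (φ.lineMap N))
    {L : Line F H} (hL : (1:H) ∈ L.1)
    (hcl : parClass F H par L = leftClass F H L)
    (hclW : parClass F H par (φ.lineMap L) = rightClass F H (φ.lineMap L)) :
    FmlB φ.f L := by
  have hW1 : (1:H) ∈ (φ.lineMap L).1 := φ.one_mem_lineMap h1 hL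
  have hfinv1 := φ.finv_one h1
  have hfinvadd := φ.finv_add
  have hfinvne : ∀ {z : H}, z ≠ 0 → φ.finv z ≠ 0 := by
    intro z hz he
    exact hz (by rw [← φ.right_inv z, he, φ.map_zero])
  have key := key_left hpar hcl
  set W := φ.lineMap L with hWdef
  have imgeq : ∀ (x : H) (hx : x ≠ 0),
      ((φ.lineMap ((lmulSLB x hx).lineMap L)).1 : Set H) =
        (fun m => m * φ.f x) '' (W.1 : Set H) := by
    intro x hx
    have hp2 : par (φ.lineMap ((lmulSLB x hx).lineMap L)) W := (hpres _ _).1 (key x hx)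
    have hmem : φ.lineMap ((lmulSLB x hx).lineMap L) ∈ rightClass F H W := hclW ▸ hp2
    obtain ⟨g, hg, hs⟩ := hmem
    have hXset : ((φ.lineMap ((lmulSLB x hx).lineMap L)).1 : Set H) =
        (fun m => m * g⁻¹) '' (W.1 : Set H) := by
      rw [hs, image_rmul_rmul]
      simp [mul_inv_cancel₀ hg]
    have hfx : φ.f x ∈ ((φ.lineMap ((lmulSLB x hx).lineMap L)).1 : Set H) :=
      ⟨x, ⟨1, hL, by show x * 1 = x; rw [mul_one]⟩, rfl⟩
    rw [hXset] at hfx ⊢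
    exact rcoset_eq hcenter hdim hW1 (φ.ne_zero hx) hfx
  intro x y hyL
  rcases eq_or_ne x 0 with rfl | hx
  · rw [zero_mul, φ.map_zero, mul_zero]
  have hadd' : ∀ a b : H, φ.f (φ.finv (a + b) * y) = φ.f (φ.finv a * y) + φ.f (φ.finv b * y) := by
    intro a b
    rw [hfinvadd, add_mul, φ.add]
  have hmem' : ∀ z : H, z ≠ 0 → φ.f (φ.finv z * y) ∈ (fun m => m * z) '' (W.1 : Set H) := by
    intro z hz
    have hxz := hfinvne hz
    have himg : φ.f (φ.finv z * y) ∈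
        ((φ.lineMap ((lmulSLB (φ.finv z) hxz).lineMap L)).1 : Set H) :=
      ⟨φ.finv z * y, ⟨y, hyL, rfl⟩, rfl⟩
    rw [imgeq _ hxz] at himg
    rwa [φ.right_inv] at himg
  have hcalc := wlemma_right hcenter hdim hW1 _ hadd' hmem' (φ.f x)
  simp only [φ.left_inv, hfinv1, one_mul] at hcalc
  exact hcalc

lemma fml_RL (hcenter : CenterEqF F H) (hdim : Module.finrank F H = 4)
    (hpar : IsCliffordLike F H par) (φ : SLB F H) (h1 : φ.f 1 = 1)
    (hpres : ∀ M N, par M N ↔ par (φ.lineMap M) (φ.lineMap N))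
    {L : Line F H} (hL : (1:H) ∈ L.1)
    (hcl : parClass F H par L = rightClass F H L)
    (hclW : parClass F H par (φ.lineMap L) = leftClass F H (φ.lineMap L)) :
    FmlD φ.f L := by
  have hW1 : (1:H) ∈ (φ.lineMap L).1 := φ.one_mem_lineMap h1 hL
  have hfinv1 := φ.finv_one h1
  have hfinvadd := φ.finv_add
  have hfinvne : ∀ {z : H}, z ≠ 0 → φ.finv z ≠ 0 := by
    intro z hz he
    exact hz (by rw [← φ.right_inv z, he, φ.map_zero])
  have key := key_right hpar hcl
  set W := φ.lineMap L with hWdef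
  have imgeq : ∀ (x : H) (hx : x ≠ 0),
      ((φ.lineMap ((rmulSLB x hx).lineMap L)).1 : Set H) =
        (fun m => φ.f x * m) '' (W.1 : Set H) := by
    intro x hx
    have hp2 : par (φ.lineMap ((rmulSLB x hx).lineMap L)) W := (hpres _ _).1 (key x hx)
    have hmem : φ.lineMap ((rmulSLB x hx).lineMap L) ∈ leftClass F H W := hclW ▸ hp2
    obtain ⟨g, hg, hs⟩ := hmem
    have hXset : ((φ.lineMap ((rmulSLB x hx).lineMap L)).1 : Set H) =
        (fun m => g⁻¹ * m) '' (W.1 : Set H) := by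
      rw [hs, image_lmul_lmul]
      simp [inv_mul_cancel₀ hg]
    have hfx : φ.f x ∈ ((φ.lineMap ((rmulSLB x hx).lineMap L)).1 : Set H) :=
      ⟨x, ⟨1, hL, by show 1 * x = x; rw [one_mul]⟩, rfl⟩
    rw [hXset] at hfx ⊢
    exact lcoset_eq hcenter hdim hW1 (φ.ne_zero hx) hfx
  intro x y hyL
  rcases eq_or_ne x 0 with rfl | hx
  · rw [mul_zero, φ.map_zero, zero_mul]
  have hadd' : ∀ a b : H, φ.f (y * φ.finv (a + b)) = φ.f (y * φ.finv a) + φ.f (y * φ.finv b) := by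
    intro a b
    rw [hfinvadd, mul_add, φ.add]
  have hmem' : ∀ z : H, z ≠ 0 → φ.f (y * φ.finv z) ∈ (fun m => z * m) '' (W.1 : Set H) := by
    intro z hz
    have hxz := hfinvne hz
    have himg : φ.f (y * φ.finv z) ∈
        ((φ.lineMap ((rmulSLB (φ.finv z) hxz).lineMap L)).1 : Set H) :=
      ⟨y * φ.finv z, ⟨y, hyL, rfl⟩, rfl⟩
    rw [imgeq _ hxz] at himg
    rwa [φ.right_inv] at himg
  have hcalc := wlemma_left hcenter hdim hW1 _ hadd' hmem' (φ.f x)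
  simp only [φ.left_inv, hfinv1, mul_one] at hcalc
  exact hcalc

lemma fml_RR (hcenter : CenterEqF F H) (hdim : Module.finrank F H = 4)
    (hpar : IsCliffordLike F H par) (φ : SLB F H) (h1 : φ.f 1 = 1)
    (hpres : ∀ M N, par M N ↔ par (φ.lineMap M) (φ.lineMap N))
    {L : Line F H} (hL : (1:H) ∈ L.1)
    (hcl : parClass F H par L = rightClass F H L)
    (hclW : parClass F H par (φ.lineMap L) = rightClass F H (φ.lineMap L)) :
    FmlC φ.f L := by
  have hW1 : (1:H) ∈ (φ.lineMap L).1 := φ.one_mem_lineMap h1 hL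
  have hfinv1 := φ.finv_one h1
  have hfinvadd := φ.finv_add
  have hfinvne : ∀ {z : H}, z ≠ 0 → φ.finv z ≠ 0 := by
    intro z hz he
    exact hz (by rw [← φ.right_inv z, he, φ.map_zero])
  have key := key_right hpar hcl
  set W := φ.lineMap L with hWdef
  have imgeq : ∀ (x : H) (hx : x ≠ 0),
      ((φ.lineMap ((rmulSLB x hx).lineMap L)).1 : Set H) =
        (fun m => m * φ.f x) '' (W.1 : Set H) := by
    intro x hx
    have hp2 : par (φ.lineMap ((rmulSLB x hx).lineMap L)) W := (hpres _ _).1 (key x hx)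
    have hmem : φ.lineMap ((rmulSLB x hx).lineMap L) ∈ rightClass F H W := hclW ▸ hp2
    obtain ⟨g, hg, hs⟩ := hmem
    have hXset : ((φ.lineMap ((rmulSLB x hx).lineMap L)).1 : Set H) =
        (fun m => m * g⁻¹) '' (W.1 : Set H) := by
      rw [hs, image_rmul_rmul]
      simp [mul_inv_cancel₀ hg]
    have hfx : φ.f x ∈ ((φ.lineMap ((rmulSLB x hx).lineMap L)).1 : Set H) :=
      ⟨x, ⟨1, hL, by show 1 * x = x; rw [one_mul]⟩, rfl⟩
    rw [hXset] at hfx ⊢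
    exact rcoset_eq hcenter hdim hW1 (φ.ne_zero hx) hfx
  intro x y hyL
  rcases eq_or_ne x 0 with rfl | hx
  · rw [mul_zero, φ.map_zero, mul_zero]
  have hadd' : ∀ a b : H, φ.f (y * φ.finv (a + b)) = φ.f (y * φ.finv a) + φ.f (y * φ.finv b) := by
    intro a b
    rw [hfinvadd, mul_add, φ.add]
  have hmem' : ∀ z : H, z ≠ 0 → φ.f (y * φ.finv z) ∈ (fun m => m * z) '' (W.1 : Set H) := by
    intro z hz
    have hxz := hfinvne hz
    have himg : φ.f (y * φ.finv z) ∈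
        ((φ.lineMap ((rmulSLB (φ.finv z) hxz).lineMap L)).1 : Set H) :=
      ⟨y * φ.finv z, ⟨y, hyL, rfl⟩, rfl⟩
    rw [imgeq _ hxz] at himg
    rwa [φ.right_inv] at himg
  have hcalc := wlemma_right hcenter hdim hW1 _ hadd' hmem' (φ.f x)
  simp only [φ.left_inv, hfinv1, mul_one] at hcalc
  exact hcalc

lemma formula_of_starline (hcenter : CenterEqF F H) (hdim : Module.finrank F H = 4)
    (hpar : IsCliffordLike F H par) (φ : SLB F H) (h1 : φ.f 1 = 1)
    (hpres : ∀ M N, par M N ↔ par (φ.lineMap M) (φ.lineMap N))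
    {L : Line F H} (hL : (1:H) ∈ L.1) :
    (FmlA φ.f L ∨ FmlB φ.f L) ∨ (FmlC φ.f L ∨ FmlD φ.f L) := by
  rcases hpar.2 L with hcl | hcl <;> rcases hpar.2 (φ.lineMap L) with hclW | hclW
  · exact Or.inl (Or.inl (fml_LL hcenter hdim hpar φ h1 hpres hL hcl hclW))
  · exact Or.inl (Or.inr (fml_LR hcenter hdim hpar φ h1 hpres hL hcl hclW))
  · exact Or.inr (Or.inr (fml_RL hcenter hdim hpar φ h1 hpres hL hcl hclW))
  · exact Or.inr (Or.inl (fml_RR hcenter hdim hpar φ h1 hpres hL hcl hclW))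

end FmlBranches

lemma mem_line_of_comm_img (hcenter : CenterEqF F H) (hdim : Module.finrank F H = 4)
    (φ : SLB F H) (h1 : φ.f 1 = 1) {L : Line F H} (hL : (1:H) ∈ L.1) {y z : H}
    (hyL : y ∈ L.1) (hy : y ∉ Fone F H)
    (hcomm : φ.f z * φ.f y = φ.f y * φ.f z) : z ∈ L.1 := by
  have hay : φ.f y ∉ Fone F H := fun hm => hy ((SLB_mem_Fone φ h1).1 hm)
  have hmem : φ.f z ∈ (φ.lineMap L).1 :=
    cent_le_line hcenter hdim (φ.one_mem_lineMap h1 hL) (φ.mem_lineMap hyL) hay hcomm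
  obtain ⟨m, hm, he⟩ := hmem
  exact φ.inj he ▸ hm

lemma img_central (hcenter : CenterEqF F H) (φ : SLB F H) (h1 : φ.f 1 = 1) {y : H}
    (hc : ∀ x : H, φ.f x * φ.f y = φ.f y * φ.f x) : y ∈ Fone F H := by
  have hcen : ∀ z : H, (φ.f y) * z = z * (φ.f y) := by
    intro z
    have := hc (φ.finv z)
    rw [φ.right_inv] at this
    exact this.symm
  exact (SLB_mem_Fone φ h1).1 ((central_iff hcenter).1 hcen)

lemma src_central (hcenter : CenterEqF F H) {y : H}
    (hc : ∀ x : H, x * y = y * x) : y ∈ Fone F H :=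
  (central_iff hcenter).1 fun x => (hc x).symm

lemma line_eq_of_le (hdim : Module.finrank F H = 4) {L₁ L₂ : Line F H}
    (hle : L₂.1 ≤ L₁.1) : L₂ = L₁ := by
  haveI : FiniteDimensional F H := .of_finrank_pos (by rw [hdim]; norm_num)
  exact Subtype.ext (Submodule.eq_of_le_of_finrank_le hle (by rw [L₁.2, L₂.2]))

lemma clash (hcenter : CenterEqF F H) (hdim : Module.finrank F H = 4)
    (φ : SLB F H) (h1 : φ.f 1 = 1)
    {L₁ L₂ : Line F H} (hL₁ : (1:H) ∈ L₁.1) (hL₂ : (1:H) ∈ L₂.1)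
    (hhomo : FmlA φ.f L₁ ∨ FmlC φ.f L₁) (hanti : FmlB φ.f L₂ ∨ FmlD φ.f L₂) : False := by
  obtain ⟨y₁, hy₁, hy₁L, -⟩ := line_gen hdim hL₁
  by_cases heq : L₂ = L₁
  · subst heq
    rcases hhomo with hA | hC <;> rcases hanti with hB | hD
    · exact hy₁ (img_central hcenter φ h1 fun x =>
        (hA x y₁ hy₁L).symm.trans (hB x y₁ hy₁L))
    · refine hy₁ (src_central hcenter fun x => φ.inj ?_)
      rw [hA x y₁ hy₁L, hD x y₁ hy₁L]
    · refine hy₁ (src_central hcenter fun x => φ.inj ?_)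
      rw [hC x y₁ hy₁L, hB x y₁ hy₁L]
    · exact hy₁ (img_central hcenter φ h1 fun x =>
        (hD x y₁ hy₁L).symm.trans (hC x y₁ hy₁L))
  · have hnle : ¬(L₂.1 ≤ L₁.1) := fun hle => heq (line_eq_of_le hdim hle)
    obtain ⟨y₂, hy₂L, hy₂⟩ := SetLike.not_le_iff_exists.1 hnle
    have hy₂F : y₂ ∉ Fone F H := fun hm =>
      hy₂ (Submodule.span_le.2 (by simpa using hL₁) hm)
    rcases hhomo with hA | hC <;> rcases hanti with hB | hD
    · -- A L₁, B L₂ : source commute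
      apply hy₂
      refine cent_le_line hcenter hdim hL₁ hy₁L hy₁ (φ.inj ?_)
      rw [hA y₂ y₁ hy₁L, hB y₁ y₂ hy₂L]
    · -- A L₁, D L₂ : image commute
      apply hy₂
      refine mem_line_of_comm_img hcenter hdim φ h1 hL₁ hy₁L hy₁ ?_
      rw [← hA y₂ y₁ hy₁L, ← hD y₁ y₂ hy₂L]
    · -- C L₁, B L₂ : image commute
      apply hy₂
      refine mem_line_of_comm_img hcenter hdim φ h1 hL₁ hy₁L hy₁ ?_
      rw [← hB y₁ y₂ hy₂L, ← hC y₂ y₁ hy₁L]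
    · -- C L₁, D L₂ : source commute
      apply hy₂
      refine cent_le_line hcenter hdim hL₁ hy₁L hy₁ (φ.inj ?_)
      rw [hD y₁ y₂ hy₂L, hC y₂ y₁ hy₁L]

lemma smul_one_mul' (c : F) (z : H) : (c • (1:H)) * z = c • z := by
  rw [smul_mul_assoc, one_mul]

lemma mul_smul_one' (c : F) (z : H) : z * (c • (1:H)) = c • z := by
  rw [mul_smul_comm, mul_one]

lemma global_formula (hcenter : CenterEqF F H) (hdim : Module.finrank F H = 4)
    (hpar : IsCliffordLike F H par) (φ : SLB F H) (h1 : φ.f 1 = 1)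
    (hpres : ∀ M N, par M N ↔ par (φ.lineMap M) (φ.lineMap N)) :
    (∀ x y : H, φ.f (x * y) = φ.f x * φ.f y) ∨
      (∀ x y : H, φ.f (x * y) = φ.f y * φ.f x) := by
  classical
  have scalar_ok : ∀ (u v : H), (v ∈ Fone F H ∨ u ∈ Fone F H) →
      φ.f (u * v) = φ.f u * φ.f v ∧ φ.f (u * v) = φ.f v * φ.f u := by
    rintro u v (hv | hu)
    · obtain ⟨c, rfl⟩ := mem_Fone.1 hv
      constructor
      · rw [mul_smul_one', φ.smul, φ.smul, h1, mul_smul_one']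
      · rw [mul_smul_one', φ.smul, φ.smul, h1, smul_one_mul']
    · obtain ⟨c, rfl⟩ := mem_Fone.1 hu
      constructor
      · rw [smul_one_mul', φ.smul, φ.smul, h1, smul_one_mul']
      · rw [smul_one_mul', φ.smul, φ.smul, h1, mul_smul_one']
  by_cases hall : ∀ L : Line F H, (1:H) ∈ L.1 → (FmlA φ.f L ∨ FmlC φ.f L)
  · left
    intro u v
    by_cases hv : v ∈ Fone F H
    · exact (scalar_ok u v (Or.inl hv)).1
    by_cases hu : u ∈ Fone F H
    · exact (scalar_ok u v (Or.inr hu)).1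
    have hu0 : u ≠ 0 := fun he => hu (he ▸ Submodule.zero_mem _)
    have hv0 : v ≠ 0 := fun he => hv (he ▸ Submodule.zero_mem _)
    have hαu0 : φ.f u ≠ 0 := φ.ne_zero hu0
    have hαv0 : φ.f v ≠ 0 := φ.ne_zero hv0
    rcases hall (mkLine hv) (mkLine_one_mem hv) with hAv | hCv
    · exact hAv u v (mkLine_self_mem hv)
    rcases hall (mkLine hu) (mkLine_one_mem hu) with hAu | hCu
    swap
    · exact hCu v u (mkLine_self_mem hu)
    -- patch case : FmlA on L_u, FmlC on L_v
    have hainv : φ.f u⁻¹ = (φ.f u)⁻¹ := by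
      apply eq_inv_of_mul_eq_one_left
      have := hAu u⁻¹ u (mkLine_self_mem hu)
      rw [inv_mul_cancel₀ hu0, h1] at this
      exact this.symm
    by_cases huv : u * v ∈ Fone F H
    · obtain ⟨c, hc⟩ := mem_Fone.1 huv
      have hveq : v = c • u⁻¹ := by
        have : u⁻¹ * (c • (1:H)) = v := by rw [hc, inv_mul_cancel_left₀ hu0]
        rw [← this, mul_smul_one']
      rw [← hc, φ.smul, h1, hveq, φ.smul, hainv, mul_smul_comm, mul_inv_cancel₀ hαu0]
    · rcases hall (mkLine huv) (mkLine_one_mem huv) with hA2 | hC2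
      · -- α(x·(uv)) = αx·α(uv) ; take z = v * u⁻¹
        have hzz : (v * u⁻¹) * (u * v) = v * v := by
          rw [mul_assoc, inv_mul_cancel_left₀ hu0]
        have e1 := hA2 (v * u⁻¹) (u * v) (mkLine_self_mem huv)
        have e2 := hCv v v (mkLine_self_mem hv)
        have e3 : φ.f (v * u⁻¹) = φ.f v * (φ.f u)⁻¹ := by
          rw [hCv u⁻¹ v (mkLine_self_mem hv), hainv]
        rw [hzz, e2, e3] at e1
        have hX0 : φ.f v * (φ.f u)⁻¹ ≠ 0 := mul_ne_zero hαv0 (inv_ne_zero hαu0)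
        apply mul_left_cancel₀ hX0
        rw [← e1, mul_assoc, inv_mul_cancel_left₀ hαu0]
      · -- α((uv)·x) = α(uv)·αx ; take w = v⁻¹ * u
        have hzz : (u * v) * (v⁻¹ * u) = u * u := by
          rw [mul_assoc, mul_inv_cancel_left₀ hv0]
        have e1 := hC2 (v⁻¹ * u) (u * v) (mkLine_self_mem huv)
        have e2 := hAu u u (mkLine_self_mem hu)
        have e3 : φ.f (v⁻¹ * u) = (φ.f v)⁻¹ * φ.f u := by
          have h4 := hCv (v⁻¹ * u) v (mkLine_self_mem hv)
          rw [mul_inv_cancel_left₀ hv0] at h4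
          apply mul_left_cancel₀ hαv0
          rw [← h4, mul_inv_cancel_left₀ hαv0]
        rw [hzz, e2, e3] at e1
        have hX0 : (φ.f v)⁻¹ * φ.f u ≠ 0 := mul_ne_zero (inv_ne_zero hαv0) hαu0
        apply mul_right_cancel₀ hX0
        rw [← e1, mul_assoc, mul_inv_cancel_left₀ hαv0]
  · right
    push_neg at hall
    obtain ⟨L₀, hL₀1, hnot⟩ := hall
    have hanti₀ : FmlB φ.f L₀ ∨ FmlD φ.f L₀ := by
      rcases formula_of_starline hcenter hdim hpar φ h1 hpres hL₀1 with (hA | hB) | (hC | hD)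
      · exact absurd hA hnot.1
      · exact Or.inl hB
      · exact absurd hC hnot.2
      · exact Or.inr hD
    have hall' : ∀ L : Line F H, (1:H) ∈ L.1 → (FmlB φ.f L ∨ FmlD φ.f L) := by
      intro L hL
      rcases formula_of_starline hcenter hdim hpar φ h1 hpres hL with (hA | hB) | (hC | hD)
      · exact absurd (clash hcenter hdim φ h1 hL hL₀1 (Or.inl hA) hanti₀) not_false
      · exact Or.inl hB
      · exact absurd (clash hcenter hdim φ h1 hL hL₀1 (Or.inr hC) hanti₀) not_false
      · exact Or.inr hD
    intro u v
    by_cases hv : v ∈ Fone F H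
    · exact (scalar_ok u v (Or.inl hv)).2
    by_cases hu : u ∈ Fone F H
    · exact (scalar_ok u v (Or.inr hu)).2
    have hu0 : u ≠ 0 := fun he => hu (he ▸ Submodule.zero_mem _)
    have hv0 : v ≠ 0 := fun he => hv (he ▸ Submodule.zero_mem _)
    have hαu0 : φ.f u ≠ 0 := φ.ne_zero hu0
    have hαv0 : φ.f v ≠ 0 := φ.ne_zero hv0
    rcases hall' (mkLine hv) (mkLine_one_mem hv) with hBv | hDv
    · exact hBv u v (mkLine_self_mem hv)
    rcases hall' (mkLine hu) (mkLine_one_mem hu) with hBu | hDu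
    swap
    · exact hDu v u (mkLine_self_mem hu)
    -- patch case : FmlB on L_u, FmlD on L_v
    have hainv : φ.f u⁻¹ = (φ.f u)⁻¹ := by
      apply eq_inv_of_mul_eq_one_right
      have := hBu u⁻¹ u (mkLine_self_mem hu)
      rw [inv_mul_cancel₀ hu0, h1] at this
      exact this.symm
    by_cases huv : u * v ∈ Fone F H
    · obtain ⟨c, hc⟩ := mem_Fone.1 huv
      have hveq : v = c • u⁻¹ := by
        have : u⁻¹ * (c • (1:H)) = v := by rw [hc, inv_mul_cancel_left₀ hu0]
        rw [← this, mul_smul_one']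
      rw [← hc, φ.smul, h1, hveq, φ.smul, hainv, smul_mul_assoc, inv_mul_cancel₀ hαu0]
    · rcases hall' (mkLine huv) (mkLine_one_mem huv) with hB2 | hD2
      · -- α(x·(uv)) = α(uv)·αx ; take z = v * u⁻¹
        have hzz : (v * u⁻¹) * (u * v) = v * v := by
          rw [mul_assoc, inv_mul_cancel_left₀ hu0]
        have e1 := hB2 (v * u⁻¹) (u * v) (mkLine_self_mem huv)
        have e2 := hDv v v (mkLine_self_mem hv)
        have e3 : φ.f (v * u⁻¹) = (φ.f u)⁻¹ * φ.f v := by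
          rw [hDv u⁻¹ v (mkLine_self_mem hv), hainv]
        rw [hzz, e2, e3] at e1
        have hX0 : (φ.f u)⁻¹ * φ.f v ≠ 0 := mul_ne_zero (inv_ne_zero hαu0) hαv0
        apply mul_right_cancel₀ hX0
        rw [← e1, mul_assoc, mul_inv_cancel_left₀ hαu0]
      · -- α((uv)·x) = αx·α(uv) ; take w = v⁻¹ * u
        have hzz : (u * v) * (v⁻¹ * u) = u * u := by
          rw [mul_assoc, mul_inv_cancel_left₀ hv0]
        have e1 := hD2 (v⁻¹ * u) (u * v) (mkLine_self_mem huv)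
        have e2 := hBu u u (mkLine_self_mem hu)
        have e3 : φ.f (v⁻¹ * u) = φ.f u * (φ.f v)⁻¹ := by
          have h4 := hDv (v⁻¹ * u) v (mkLine_self_mem hv)
          rw [mul_inv_cancel_left₀ hv0] at h4
          apply mul_right_cancel₀ hαv0
          rw [← h4, inv_mul_cancel_right₀ hαv0]
        rw [hzz, e2, e3] at e1
        have hX0 : φ.f u * (φ.f v)⁻¹ ≠ 0 := mul_ne_zero hαu0 (inv_ne_zero hαv0)
        apply mul_left_cancel₀ hX0
        rw [← e1, mul_assoc, inv_mul_cancel_left₀ hαv0]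

lemma fmlA_of_mul (φ : SLB F H) (hmul : ∀ x y : H, φ.f (x * y) = φ.f x * φ.f y)
    (L : Line F H) : FmlA φ.f L := fun x y _ => hmul x y

lemma fmlB_of_anti (φ : SLB F H) (hanti : ∀ x y : H, φ.f (x * y) = φ.f y * φ.f x)
    (L : Line F H) : FmlB φ.f L := fun x y _ => hanti x y

lemma left_to_left (hcenter : CenterEqF F H) (hdim : Module.finrank F H = 4)
    (hpar : IsCliffordLike F H par) (φ : SLB F H) (h1 : φ.f 1 = 1)
    (hpres : ∀ M N, par M N ↔ par (φ.lineMap M) (φ.lineMap N))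
    (hmul : ∀ x y : H, φ.f (x * y) = φ.f x * φ.f y)
    {L : Line F H} (hL : (1:H) ∈ L.1)
    (hcl : parClass F H par L = leftClass F H L) :
    parClass F H par (φ.lineMap L) = leftClass F H (φ.lineMap L) := by
  rcases hpar.2 (φ.lineMap L) with h | h
  · exact h
  · exact (clash hcenter hdim φ h1 hL hL (Or.inl (fmlA_of_mul φ hmul L))
      (Or.inl (fml_LR hcenter hdim hpar φ h1 hpres hL hcl h))).elim

lemma right_to_right (hcenter : CenterEqF F H) (hdim : Module.finrank F H = 4)
    (hpar : IsCliffordLike F H par) (φ : SLB F H) (h1 : φ.f 1 = 1)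
    (hpres : ∀ M N, par M N ↔ par (φ.lineMap M) (φ.lineMap N))
    (hmul : ∀ x y : H, φ.f (x * y) = φ.f x * φ.f y)
    {L : Line F H} (hL : (1:H) ∈ L.1)
    (hcl : parClass F H par L = rightClass F H L) :
    parClass F H par (φ.lineMap L) = rightClass F H (φ.lineMap L) := by
  rcases hpar.2 (φ.lineMap L) with h | h
  · exact (clash hcenter hdim φ h1 hL hL (Or.inl (fmlA_of_mul φ hmul L))
      (Or.inr (fml_RL hcenter hdim hpar φ h1 hpres hL hcl h))).elim
  · exact h

lemma right_to_left_anti (hcenter : CenterEqF F H) (hdim : Module.finrank F H = 4)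
    (hpar : IsCliffordLike F H par) (φ : SLB F H) (h1 : φ.f 1 = 1)
    (hpres : ∀ M N, par M N ↔ par (φ.lineMap M) (φ.lineMap N))
    (hanti : ∀ x y : H, φ.f (x * y) = φ.f y * φ.f x)
    {L : Line F H} (hL : (1:H) ∈ L.1)
    (hcl : parClass F H par L = rightClass F H L) :
    parClass F H par (φ.lineMap L) = leftClass F H (φ.lineMap L) := by
  rcases hpar.2 (φ.lineMap L) with h | h
  · exact h
  · exact (clash hcenter hdim φ h1 hL hL
      (Or.inr (fml_RR hcenter hdim hpar φ h1 hpres hL hcl h))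
      (Or.inl (fmlB_of_anti φ hanti L))).elim

lemma symm_pres (φ : SLB F H)
    (hpres : ∀ M N, par M N ↔ par (φ.lineMap M) (φ.lineMap N)) :
    ∀ M N, par M N ↔ par (φ.symm.lineMap M) (φ.symm.lineMap N) := by
  intro M N
  have h2 := hpres (φ.symm.lineMap M) (φ.symm.lineMap N)
  rw [φ.lineMap_symm_cancel, φ.lineMap_symm_cancel] at h2
  exact h2.symm

lemma symm_mul (φ : SLB F H) (hmul : ∀ x y : H, φ.f (x * y) = φ.f x * φ.f y) :
    ∀ x y : H, φ.symm.f (x * y) = φ.symm.f x * φ.symm.f y := by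
  intro x y
  apply φ.inj
  show φ.f (φ.finv (x * y)) = φ.f (φ.finv x * φ.finv y)
  rw [φ.right_inv, hmul, φ.right_inv, φ.right_inv]

lemma symm_anti (φ : SLB F H) (hanti : ∀ x y : H, φ.f (x * y) = φ.f y * φ.f x) :
    ∀ x y : H, φ.symm.f (x * y) = φ.symm.f y * φ.symm.f x := by
  intro x y
  apply φ.inj
  show φ.f (φ.finv (x * y)) = φ.f (φ.finv y * φ.finv x)
  rw [φ.right_inv, hanti, φ.right_inv, φ.right_inv]

lemma image_calF_homo (hcenter : CenterEqF F H) (hdim : Module.finrank F H = 4)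
    (hpar : IsCliffordLike F H par) (φ : SLB F H) (h1 : φ.f 1 = 1)
    (hpres : ∀ M N, par M N ↔ par (φ.lineMap M) (φ.lineMap N))
    (hmul : ∀ x y : H, φ.f (x * y) = φ.f x * φ.f y) :
    imageLines F H φ.f (calF F H par) = calF F H par := by
  ext L'
  constructor
  · rintro ⟨L, ⟨hL1, hLcl⟩, hset⟩
    have hL'eq : L' = φ.lineMap L := Subtype.ext (SetLike.coe_injective hset)
    subst hL'eq
    exact ⟨φ.one_mem_lineMap h1 hL1,
      left_to_left hcenter hdim hpar φ h1 hpres hmul hL1 hLcl⟩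
  · rintro ⟨hL1, hLcl⟩
    refine ⟨φ.symm.lineMap L', ⟨φ.symm.one_mem_lineMap (φ.finv_one h1) hL1, ?_⟩, ?_⟩
    · exact left_to_left hcenter hdim hpar φ.symm (φ.finv_one h1) (symm_pres φ hpres)
        (symm_mul φ hmul) hL1 hLcl
    · exact (congrArg (fun t : Line F H => (t.1 : Set H)) (φ.lineMap_symm_cancel L')).symm

lemma image_calF_anti (hcenter : CenterEqF F H) (hdim : Module.finrank F H = 4)
    (hpar : IsCliffordLike F H par) (φ : SLB F H) (h1 : φ.f 1 = 1)
    (hpres : ∀ M N, par M N ↔ par (φ.lineMap M) (φ.lineMap N))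
    (hanti : ∀ x y : H, φ.f (x * y) = φ.f y * φ.f x) :
    imageLines F H φ.f (calF F H par) = starLines F H \ calF F H par := by
  ext L'
  constructor
  · rintro ⟨L, ⟨hL1, hLcl⟩, hset⟩
    have hL'eq : L' = φ.lineMap L := Subtype.ext (SetLike.coe_injective hset)
    subst hL'eq
    constructor
    · exact φ.one_mem_lineMap h1 hL1
    · rintro ⟨-, hcl'⟩
      exact (clash hcenter hdim φ h1 hL1 hL1
        (Or.inl (fml_LL hcenter hdim hpar φ h1 hpres hL1 hLcl hcl'))
        (Or.inl (fmlB_of_anti φ hanti L))).elim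
  · rintro ⟨hL'1, hL'nF⟩
    have hcl' : parClass F H par L' = rightClass F H L' := by
      rcases hpar.2 L' with h | h
      · exact absurd ⟨hL'1, h⟩ hL'nF
      · exact h
    refine ⟨φ.symm.lineMap L', ⟨φ.symm.one_mem_lineMap (φ.finv_one h1) hL'1, ?_⟩, ?_⟩
    · exact right_to_left_anti hcenter hdim hpar φ.symm (φ.finv_one h1) (symm_pres φ hpres)
        (symm_anti φ hanti) hL'1 hcl'
    · exact (congrArg (fun t : Line F H => (t.1 : Set H)) (φ.lineMap_symm_cancel L')).symm

lemma line_exists_ne_zero (L : Line F H) : ∃ x, x ∈ L.1 ∧ x ≠ 0 := by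
  have hb : L.1 ≠ ⊥ := by
    intro h
    have h2 := L.2
    rw [h, finrank_bot] at h2
    omega
  obtain ⟨x, hx, h0⟩ := (Submodule.ne_bot_iff L.1).1 hb
  exact ⟨x, hx, h0⟩

lemma leftClass_congr {L M : Line F H} {g : H} (hg : g ≠ 0)
    (hs : (L.1 : Set H) = (fun m => g * m) '' (M.1 : Set H)) :
    leftClass F H M = leftClass F H L := by
  ext N
  constructor
  · rintro ⟨h, hh, hMN⟩
    exact ⟨g * h, mul_ne_zero hg hh, by rw [hs, hMN, image_lmul_lmul]⟩
  · rintro ⟨h, hh, hLN⟩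
    refine ⟨g⁻¹ * h, mul_ne_zero (inv_ne_zero hg) hh, ?_⟩
    have hM : (M.1 : Set H) = (fun m => g⁻¹ * m) '' (L.1 : Set H) := by
      rw [hs, image_lmul_lmul]
      simp [inv_mul_cancel₀ hg]
    rw [hM, hLN, image_lmul_lmul]

lemma rightClass_congr {L M : Line F H} {g : H} (hg : g ≠ 0)
    (hs : (L.1 : Set H) = (fun m => m * g) '' (M.1 : Set H)) :
    rightClass F H M = rightClass F H L := by
  ext N
  constructor
  · rintro ⟨h, hh, hMN⟩
    exact ⟨h * g, mul_ne_zero hh hg, by rw [hs, hMN, image_rmul_rmul]⟩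
  · rintro ⟨h, hh, hLN⟩
    refine ⟨h * g⁻¹, mul_ne_zero hh (inv_ne_zero hg), ?_⟩
    have hM : (M.1 : Set H) = (fun m => m * g⁻¹) '' (L.1 : Set H) := by
      rw [hs, image_rmul_rmul]
      simp [mul_inv_cancel₀ hg]
    rw [hM, hLN, image_rmul_rmul]

lemma himage_lmul (φ : SLB F H) (hmul : ∀ x y : H, φ.f (x * y) = φ.f x * φ.f y)
    (g : H) (S : Set H) :
    φ.f '' ((fun m => g * m) '' S) = (fun m => φ.f g * m) '' (φ.f '' S) := by
  rw [Set.image_image, Set.image_image]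
  exact Set.image_congr' (fun x => hmul g x)

lemma himage_rmul (φ : SLB F H) (hmul : ∀ x y : H, φ.f (x * y) = φ.f x * φ.f y)
    (g : H) (S : Set H) :
    φ.f '' ((fun m => m * g) '' S) = (fun m => m * φ.f g) '' (φ.f '' S) := by
  rw [Set.image_image, Set.image_image]
  exact Set.image_congr' (fun x => hmul x g)

lemma himage_lmul_anti (φ : SLB F H) (hanti : ∀ x y : H, φ.f (x * y) = φ.f y * φ.f x)
    (g : H) (S : Set H) :
    φ.f '' ((fun m => g * m) '' S) = (fun m => m * φ.f g) '' (φ.f '' S) := by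
  rw [Set.image_image, Set.image_image]
  exact Set.image_congr' (fun x => hanti g x)

lemma himage_rmul_anti (φ : SLB F H) (hanti : ∀ x y : H, φ.f (x * y) = φ.f y * φ.f x)
    (g : H) (S : Set H) :
    φ.f '' ((fun m => m * g) '' S) = (fun m => φ.f g * m) '' (φ.f '' S) := by
  rw [Set.image_image, Set.image_image]
  exact Set.image_congr' (fun x => hanti x g)

lemma backward_homo (hpar : IsCliffordLike F H par) (φ : SLB F H)
    (hmul : ∀ x y : H, φ.f (x * y) = φ.f x * φ.f y)
    (hLL : ∀ L : Line F H, (1:H) ∈ L.1 → parClass F H par L = leftClass F H L →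
      parClass F H par (φ.lineMap L) = leftClass F H (φ.lineMap L))
    (hNN : ∀ L : Line F H, (1:H) ∈ L.1 → ¬(parClass F H par L = leftClass F H L) →
      ¬(parClass F H par (φ.lineMap L) = leftClass F H (φ.lineMap L)))
    {M N : Line F H} (h : par M N) : par (φ.lineMap M) (φ.lineMap N) := by
  have E := hpar.1.1
  have hNM : par N M := E.symm h
  obtain ⟨x, hxM, hx0⟩ := line_exists_ne_zero M
  have hphiL : ∀ L : Line F H, ((φ.lineMap L).1 : Set H) = φ.f '' (L.1 : Set H) := fun _ => rfl
  rcases hpar.2 M with hcl | hcl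
  · set L := (lmulSLB x⁻¹ (inv_ne_zero hx0)).lineMap M with hLdef
    have hL1 : (1:H) ∈ L.1 := ⟨x, hxM, by show x⁻¹ * x = 1; rw [inv_mul_cancel₀ hx0]⟩
    have hLset : (L.1 : Set H) = (fun m => x⁻¹ * m) '' (M.1 : Set H) := rfl
    have hMcongr : leftClass F H M = leftClass F H L :=
      leftClass_congr (inv_ne_zero hx0) hLset
    have hparLM : par L M := by
      have hm : L ∈ leftClass F H M := ⟨x, hx0, by
        rw [hLset, image_lmul_lmul]
        simp [mul_inv_cancel₀ hx0]⟩
      exact (hcl.symm ▸ hm : L ∈ parClass F H par M)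
    have hclL : parClass F H par L = leftClass F H L := by
      rw [parClass_eq hpar hparLM, hcl, hMcongr]
    have hclW := hLL L hL1 hclL
    have hφM : φ.lineMap M ∈ leftClass F H (φ.lineMap L) := by
      refine ⟨φ.f x⁻¹, φ.ne_zero (inv_ne_zero hx0), ?_⟩
      rw [hphiL L, hLset, himage_lmul φ hmul, hphiL M]
    have hN : N ∈ leftClass F H L := by
      have hm : N ∈ parClass F H par L := by
        rw [parClass_eq hpar hparLM]
        exact hNM
      rwa [hclL] at hm
    obtain ⟨g, hg, hgs⟩ := hN
    have hφN : φ.lineMap N ∈ leftClass F H (φ.lineMap L) := by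
      refine ⟨φ.f g, φ.ne_zero hg, ?_⟩
      rw [hphiL L, hgs, himage_lmul φ hmul, hphiL N]
    have p1 : par (φ.lineMap M) (φ.lineMap L) :=
      (hclW.symm ▸ hφM : _ ∈ parClass F H par (φ.lineMap L))
    have p2 : par (φ.lineMap N) (φ.lineMap L) :=
      (hclW.symm ▸ hφN : _ ∈ parClass F H par (φ.lineMap L))
    exact E.trans p1 (E.symm p2)
  · set L := (rmulSLB x⁻¹ (inv_ne_zero hx0)).lineMap M with hLdef
    have hL1 : (1:H) ∈ L.1 := ⟨x, hxM, by show x * x⁻¹ = 1; rw [mul_inv_cancel₀ hx0]⟩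
    have hLset : (L.1 : Set H) = (fun m => m * x⁻¹) '' (M.1 : Set H) := rfl
    have hMcongr : rightClass F H M = rightClass F H L :=
      rightClass_congr (inv_ne_zero hx0) hLset
    have hparLM : par L M := by
      have hm : L ∈ rightClass F H M := ⟨x, hx0, by
        rw [hLset, image_rmul_rmul]
        simp [inv_mul_cancel₀ hx0]⟩
      exact (hcl.symm ▸ hm : L ∈ parClass F H par M)
    have hclL : parClass F H par L = rightClass F H L := by
      rw [parClass_eq hpar hparLM, hcl, hMcongr]
    have hN : N ∈ rightClass F H L := by
      have hm : N ∈ parClass F H par L := by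
        rw [parClass_eq hpar hparLM]
        exact hNM
      rwa [hclL] at hm
    obtain ⟨g, hg, hgs⟩ := hN
    by_cases hLF : parClass F H par L = leftClass F H L
    · have hLR : leftClass F H L = rightClass F H L := by rw [← hLF, hclL]
      have hclW := hLL L hL1 hLF
      have hMright : M ∈ rightClass F H L := ⟨x⁻¹, inv_ne_zero hx0, hLset⟩
      have hMleft : M ∈ leftClass F H L := by rw [hLR]; exact hMright
      obtain ⟨h', hh', hhs⟩ := hMleft
      have hφM : φ.lineMap M ∈ leftClass F H (φ.lineMap L) := by
        refine ⟨φ.f h', φ.ne_zero hh', ?_⟩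
        rw [hphiL L, hhs, himage_lmul φ hmul, hphiL M]
      have hNleft : N ∈ leftClass F H L := by rw [hLR]; exact ⟨g, hg, hgs⟩
      obtain ⟨g2, hg2, hgs2⟩ := hNleft
      have hφN : φ.lineMap N ∈ leftClass F H (φ.lineMap L) := by
        refine ⟨φ.f g2, φ.ne_zero hg2, ?_⟩
        rw [hphiL L, hgs2, himage_lmul φ hmul, hphiL N]
      exact E.trans (hclW.symm ▸ hφM : _ ∈ parClass F H par (φ.lineMap L))
        (E.symm (hclW.symm ▸ hφN : _ ∈ parClass F H par (φ.lineMap L)))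
    · have hclW : parClass F H par (φ.lineMap L) = rightClass F H (φ.lineMap L) := by
        rcases hpar.2 (φ.lineMap L) with h2 | h2
        · exact absurd h2 (hNN L hL1 hLF)
        · exact h2
      have hφM : φ.lineMap M ∈ rightClass F H (φ.lineMap L) := by
        refine ⟨φ.f x⁻¹, φ.ne_zero (inv_ne_zero hx0), ?_⟩
        rw [hphiL L, hLset, himage_rmul φ hmul, hphiL M]
      have hφN : φ.lineMap N ∈ rightClass F H (φ.lineMap L) := by
        refine ⟨φ.f g, φ.ne_zero hg, ?_⟩
        rw [hphiL L, hgs, himage_rmul φ hmul, hphiL N]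
      exact E.trans (hclW.symm ▸ hφM : _ ∈ parClass F H par (φ.lineMap L))
        (E.symm (hclW.symm ▸ hφN : _ ∈ parClass F H par (φ.lineMap L)))

lemma backward_anti (hpar : IsCliffordLike F H par) (φ : SLB F H)
    (hanti : ∀ x y : H, φ.f (x * y) = φ.f y * φ.f x)
    (hLR : ∀ L : Line F H, (1:H) ∈ L.1 → parClass F H par L = leftClass F H L →
      parClass F H par (φ.lineMap L) = rightClass F H (φ.lineMap L))
    (hNL : ∀ L : Line F H, (1:H) ∈ L.1 → ¬(parClass F H par L = leftClass F H L) →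
      parClass F H par (φ.lineMap L) = leftClass F H (φ.lineMap L))
    {M N : Line F H} (h : par M N) : par (φ.lineMap M) (φ.lineMap N) := by
  have E := hpar.1.1
  have hNM : par N M := E.symm h
  obtain ⟨x, hxM, hx0⟩ := line_exists_ne_zero M
  have hphiL : ∀ L : Line F H, ((φ.lineMap L).1 : Set H) = φ.f '' (L.1 : Set H) := fun _ => rfl
  rcases hpar.2 M with hcl | hcl
  · set L := (lmulSLB x⁻¹ (inv_ne_zero hx0)).lineMap M with hLdef
    have hL1 : (1:H) ∈ L.1 := ⟨x, hxM, by show x⁻¹ * x = 1; rw [inv_mul_cancel₀ hx0]⟩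
    have hLset : (L.1 : Set H) = (fun m => x⁻¹ * m) '' (M.1 : Set H) := rfl
    have hMcongr : leftClass F H M = leftClass F H L :=
      leftClass_congr (inv_ne_zero hx0) hLset
    have hparLM : par L M := by
      have hm : L ∈ leftClass F H M := ⟨x, hx0, by
        rw [hLset, image_lmul_lmul]
        simp [mul_inv_cancel₀ hx0]⟩
      exact (hcl.symm ▸ hm : L ∈ parClass F H par M)
    have hclL : parClass F H par L = leftClass F H L := by
      rw [parClass_eq hpar hparLM, hcl, hMcongr]
    have hclW := hLR L hL1 hclL
    have hφM : φ.lineMap M ∈ rightClass F H (φ.lineMap L) := by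
      refine ⟨φ.f x⁻¹, φ.ne_zero (inv_ne_zero hx0), ?_⟩
      rw [hphiL L, hLset, himage_lmul_anti φ hanti, hphiL M]
    have hN : N ∈ leftClass F H L := by
      have hm : N ∈ parClass F H par L := by
        rw [parClass_eq hpar hparLM]
        exact hNM
      rwa [hclL] at hm
    obtain ⟨g, hg, hgs⟩ := hN
    have hφN : φ.lineMap N ∈ rightClass F H (φ.lineMap L) := by
      refine ⟨φ.f g, φ.ne_zero hg, ?_⟩
      rw [hphiL L, hgs, himage_lmul_anti φ hanti, hphiL N]
    exact E.trans (hclW.symm ▸ hφM : _ ∈ parClass F H par (φ.lineMap L))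
      (E.symm (hclW.symm ▸ hφN : _ ∈ parClass F H par (φ.lineMap L)))
  · set L := (rmulSLB x⁻¹ (inv_ne_zero hx0)).lineMap M with hLdef
    have hL1 : (1:H) ∈ L.1 := ⟨x, hxM, by show x * x⁻¹ = 1; rw [mul_inv_cancel₀ hx0]⟩
    have hLset : (L.1 : Set H) = (fun m => m * x⁻¹) '' (M.1 : Set H) := rfl
    have hMcongr : rightClass F H M = rightClass F H L :=
      rightClass_congr (inv_ne_zero hx0) hLset
    have hparLM : par L M := by
      have hm : L ∈ rightClass F H M := ⟨x, hx0, by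
        rw [hLset, image_rmul_rmul]
        simp [inv_mul_cancel₀ hx0]⟩
      exact (hcl.symm ▸ hm : L ∈ parClass F H par M)
    have hclL : parClass F H par L = rightClass F H L := by
      rw [parClass_eq hpar hparLM, hcl, hMcongr]
    have hN : N ∈ rightClass F H L := by
      have hm : N ∈ parClass F H par L := by
        rw [parClass_eq hpar hparLM]
        exact hNM
      rwa [hclL] at hm
    obtain ⟨g, hg, hgs⟩ := hN
    by_cases hLF : parClass F H par L = leftClass F H L
    · have hLR' : leftClass F H L = rightClass F H L := by rw [← hLF, hclL]
      have hclW := hLR L hL1 hLF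
      have hMright : M ∈ rightClass F H L := ⟨x⁻¹, inv_ne_zero hx0, hLset⟩
      have hMleft : M ∈ leftClass F H L := by rw [hLR']; exact hMright
      obtain ⟨h', hh', hhs⟩ := hMleft
      have hφM : φ.lineMap M ∈ rightClass F H (φ.lineMap L) := by
        refine ⟨φ.f h', φ.ne_zero hh', ?_⟩
        rw [hphiL L, hhs, himage_lmul_anti φ hanti, hphiL M]
      have hNleft : N ∈ leftClass F H L := by rw [hLR']; exact ⟨g, hg, hgs⟩
      obtain ⟨g2, hg2, hgs2⟩ := hNleft
      have hφN : φ.lineMap N ∈ rightClass F H (φ.lineMap L) := by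
        refine ⟨φ.f g2, φ.ne_zero hg2, ?_⟩
        rw [hphiL L, hgs2, himage_lmul_anti φ hanti, hphiL N]
      exact E.trans (hclW.symm ▸ hφM : _ ∈ parClass F H par (φ.lineMap L))
        (E.symm (hclW.symm ▸ hφN : _ ∈ parClass F H par (φ.lineMap L)))
    · have hclW := hNL L hL1 hLF
      have hφM : φ.lineMap M ∈ leftClass F H (φ.lineMap L) := by
        refine ⟨φ.f x⁻¹, φ.ne_zero (inv_ne_zero hx0), ?_⟩
        rw [hphiL L, hLset, himage_rmul_anti φ hanti, hphiL M]
      have hφN : φ.lineMap N ∈ leftClass F H (φ.lineMap L) := by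
        refine ⟨φ.f g, φ.ne_zero hg, ?_⟩
        rw [hphiL L, hgs, himage_rmul_anti φ hanti, hphiL N]
      exact E.trans (hclW.symm ▸ hφM : _ ∈ parClass F H par (φ.lineMap L))
        (E.symm (hclW.symm ▸ hφN : _ ∈ parClass F H par (φ.lineMap L)))

end

end CLPaux

/-- A semilinear bijection `β` preserves a Clifford-like parallelism `∥` if and only if
`β = λ_{β(1)} ∘ α`, where `α : x ↦ β(1)⁻¹·β(x)` is either an automorphism of `H` with
`α(ℱ) = ℱ` or an antiautomorphism of `H` with `α(ℱ) = 𝒜 \ ℱ`. -/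
theorem preserves_iff_factorisation
    (hcenter : CenterEqF F H) (hdim : Module.finrank F H = 4)
    (par : Line F H → Line F H → Prop) (hpar : IsCliffordLike F H par)
    (β : H → H) (hβ : IsSemilinear F H β) :
    Preserves F H β par ↔
      ((IsRingAutFn H (fun x => (β 1)⁻¹ * β x) ∧
          imageLines F H (fun x => (β 1)⁻¹ * β x) (calF F H par) = calF F H par) ∨
       (IsRingAntiAutFn H (fun x => (β 1)⁻¹ * β x) ∧
          imageLines F H (fun x => (β 1)⁻¹ * β x) (calF F H par) =
            starLines F H \ calF F H par)) := by
  classical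
  obtain ⟨hbij, hadd, σ, hsmul⟩ := hβ
  have hβ0 : β 0 = 0 := by
    have h' := hadd 0 0
    rw [add_zero] at h'
    have h'' := congrArg (fun t => t - β 0) h'
    simpa using h''.symm
  have hb : β 1 ≠ 0 := by
    intro he
    exact one_ne_zero (hbij.1 (he.trans hβ0.symm))
  let e := Equiv.ofBijective β hbij
  let φβ : CLPaux.SLB F H :=
    { f := β, finv := e.symm, σ := σ, add := hadd, smul := hsmul,
      left_inv := fun x => e.symm_apply_apply x,
      right_inv := fun x => e.apply_symm_apply x }
  let φα : CLPaux.SLB F H :=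
    { f := fun x => (β 1)⁻¹ * β x
      finv := fun z => e.symm (β 1 * z)
      σ := σ
      add := fun x y => by simp only [hadd, mul_add]
      smul := fun a x => by simp only [hsmul, mul_smul_comm]
      left_inv := fun x => by
        show e.symm (β 1 * ((β 1)⁻¹ * β x)) = x
        rw [mul_inv_cancel_left₀ hb]
        exact e.symm_apply_apply x
      right_inv := fun z => by
        show (β 1)⁻¹ * β (e.symm (β 1 * z)) = z
        have hz : β (e.symm (β 1 * z)) = β 1 * z := e.apply_symm_apply (β 1 * z)
        rw [hz, inv_mul_cancel_left₀ hb] }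
  have hα1 : φα.f 1 = 1 := by
    show (β 1)⁻¹ * β 1 = 1
    rw [inv_mul_cancel₀ hb]
  have hcompM : ∀ M : Line F H,
      (CLPaux.lmulSLB (β 1)⁻¹ (inv_ne_zero hb)).lineMap (φβ.lineMap M) = φα.lineMap M := by
    intro M
    apply Subtype.ext
    apply SetLike.coe_injective
    show (fun m => (β 1)⁻¹ * m) '' (β '' (M.1 : Set H)) =
      (fun x => (β 1)⁻¹ * β x) '' (M.1 : Set H)
    rw [Set.image_image]
  have hcompb : ∀ M : Line F H,
      (CLPaux.lmulSLB (β 1) hb).lineMap (φα.lineMap M) = φβ.lineMap M := by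
    intro M
    apply Subtype.ext
    apply SetLike.coe_injective
    show (fun m => β 1 * m) '' ((fun x => (β 1)⁻¹ * β x) '' (M.1 : Set H)) =
      β '' (M.1 : Set H)
    rw [Set.image_image]
    exact Set.image_congr' (fun x => mul_inv_cancel_left₀ hb (β x))
  constructor
  · intro hP
    have hPβ := (CLPaux.preserves_iff_lineMap φβ par).1 hP
    have hPτ := (CLPaux.preserves_iff_lineMap
      (CLPaux.lmulSLB (β 1)⁻¹ (inv_ne_zero hb)) par).1
      (CLPaux.preserves_lmul hpar (inv_ne_zero hb))
    have hPα : ∀ M N, par M N ↔ par (φα.lineMap M) (φα.lineMap N) := by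
      intro M N
      have h2iff := hPτ (φβ.lineMap M) (φβ.lineMap N)
      rw [hcompM M, hcompM N] at h2iff
      exact (hPβ M N).trans h2iff
    rcases CLPaux.global_formula hcenter hdim hpar φα hα1 hPα with hmul | hanti
    · left
      exact ⟨⟨⟨φα.inj, fun z => ⟨φα.finv z, φα.right_inv z⟩⟩, φα.add, hα1, hmul⟩,
        CLPaux.image_calF_homo hcenter hdim hpar φα hα1 hPα hmul⟩
    · right
      exact ⟨⟨⟨φα.inj, fun z => ⟨φα.finv z, φα.right_inv z⟩⟩, φα.add, hα1, hanti⟩,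
        CLPaux.image_calF_anti hcenter hdim hpar φα hα1 hPα hanti⟩
  · intro hRHS
    have hPαiff : ∀ M N, par M N ↔ par (φα.lineMap M) (φα.lineMap N) := by
      rcases hRHS with ⟨⟨hbij', hadd', h1', hmul⟩, himg⟩ | ⟨⟨hbij', hadd', h1', hanti⟩, himg⟩
      · have hmul' : ∀ x y : H, φα.f (x * y) = φα.f x * φα.f y := hmul
        have hLL : ∀ L : Line F H, (1:H) ∈ L.1 →
            parClass F H par L = leftClass F H L →
            parClass F H par (φα.lineMap L) = leftClass F H (φα.lineMap L) := by
          intro L hL hcl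
          have hmem : φα.lineMap L ∈
              imageLines F H (fun x => (β 1)⁻¹ * β x) (calF F H par) := ⟨L, ⟨hL, hcl⟩, rfl⟩
          rw [himg] at hmem
          exact hmem.2
        have hNN : ∀ L : Line F H, (1:H) ∈ L.1 →
            ¬(parClass F H par L = leftClass F H L) →
            ¬(parClass F H par (φα.lineMap L) = leftClass F H (φα.lineMap L)) := by
          intro L hL hcl hclW
          have hmem : φα.lineMap L ∈ calF F H par := ⟨φα.one_mem_lineMap hα1 hL, hclW⟩
          rw [← himg] at hmem
          obtain ⟨L₂, hL₂F, hset⟩ := hmem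
          have himgeq : φα.f '' (L.1 : Set H) = φα.f '' (L₂.1 : Set H) := hset
          have hLeq : L₂ = L := by
            apply Subtype.ext
            apply SetLike.coe_injective
            exact (Set.image_injective.2 φα.inj himgeq).symm
          exact hcl (hLeq ▸ hL₂F).2
        have hsymmLL : ∀ L : Line F H, (1:H) ∈ L.1 →
            parClass F H par L = leftClass F H L →
            parClass F H par (φα.symm.lineMap L) = leftClass F H (φα.symm.lineMap L) := by
          intro L' hL' hcl'
          by_contra hnot
          have hx := hNN (φα.symm.lineMap L')
            (φα.symm.one_mem_lineMap (φα.finv_one hα1) hL') hnot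
          rw [φα.lineMap_symm_cancel] at hx
          exact hx hcl'
        have hsymmNN : ∀ L : Line F H, (1:H) ∈ L.1 →
            ¬(parClass F H par L = leftClass F H L) →
            ¬(parClass F H par (φα.symm.lineMap L) = leftClass F H (φα.symm.lineMap L)) := by
          intro L' hL' hcl' hclS
          apply hcl'
          have hx := hLL (φα.symm.lineMap L')
            (φα.symm.one_mem_lineMap (φα.finv_one hα1) hL') hclS
          rwa [φα.lineMap_symm_cancel] at hx
        intro M N
        constructor
        · exact CLPaux.backward_homo hpar φα hmul' hLL hNN
        · intro h2
          have h3 := CLPaux.backward_homo hpar φα.symm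
            (CLPaux.symm_mul φα hmul') hsymmLL hsymmNN h2
          rwa [φα.symm_lineMap_cancel, φα.symm_lineMap_cancel] at h3
      · have hanti' : ∀ x y : H, φα.f (x * y) = φα.f y * φα.f x := hanti
        have hLR : ∀ L : Line F H, (1:H) ∈ L.1 →
            parClass F H par L = leftClass F H L →
            parClass F H par (φα.lineMap L) = rightClass F H (φα.lineMap L) := by
          intro L hL hcl
          have hmem : φα.lineMap L ∈
              imageLines F H (fun x => (β 1)⁻¹ * β x) (calF F H par) := ⟨L, ⟨hL, hcl⟩, rfl⟩
          rw [himg] at hmem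
          rcases hpar.2 (φα.lineMap L) with h2 | h2
          · exact absurd ⟨φα.one_mem_lineMap hα1 hL, h2⟩ hmem.2
          · exact h2
        have hNL : ∀ L : Line F H, (1:H) ∈ L.1 →
            ¬(parClass F H par L = leftClass F H L) →
            parClass F H par (φα.lineMap L) = leftClass F H (φα.lineMap L) := by
          intro L hL hcl
          by_contra hnot
          have hmem : φα.lineMap L ∈ starLines F H \ calF F H par :=
            ⟨φα.one_mem_lineMap hα1 hL, fun hc => hnot hc.2⟩
          rw [← himg] at hmem
          obtain ⟨L₂, hL₂F, hset⟩ := hmem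
          have himgeq : φα.f '' (L.1 : Set H) = φα.f '' (L₂.1 : Set H) := hset
          have hLeq : L₂ = L := by
            apply Subtype.ext
            apply SetLike.coe_injective
            exact (Set.image_injective.2 φα.inj himgeq).symm
          exact hcl (hLeq ▸ hL₂F).2
        have hsymmLR : ∀ L : Line F H, (1:H) ∈ L.1 →
            parClass F H par L = leftClass F H L →
            parClass F H par (φα.symm.lineMap L) = rightClass F H (φα.symm.lineMap L) := by
          intro L' hL' hcl'
          have h1S : (1:H) ∈ (φα.symm.lineMap L').1 :=
            φα.symm.one_mem_lineMap (φα.finv_one hα1) hL'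
          rcases hpar.2 (φα.symm.lineMap L') with h2 | h2
          · exfalso
            have hmem : φα.lineMap (φα.symm.lineMap L') ∈
                imageLines F H (fun x => (β 1)⁻¹ * β x) (calF F H par) :=
              ⟨φα.symm.lineMap L', ⟨h1S, h2⟩, rfl⟩
            rw [himg, φα.lineMap_symm_cancel] at hmem
            exact hmem.2 ⟨hL', hcl'⟩
          · exact h2
        have hsymmNL : ∀ L : Line F H, (1:H) ∈ L.1 →
            ¬(parClass F H par L = leftClass F H L) →
            parClass F H par (φα.symm.lineMap L) = leftClass F H (φα.symm.lineMap L) := by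
          intro L' hL' hcl'
          have h1S : (1:H) ∈ (φα.symm.lineMap L').1 :=
            φα.symm.one_mem_lineMap (φα.finv_one hα1) hL'
          by_contra hnot
          have hx := hNL (φα.symm.lineMap L') h1S hnot
          rw [φα.lineMap_symm_cancel] at hx
          exact hcl' hx
        intro M N
        constructor
        · exact CLPaux.backward_anti hpar φα hanti' hLR hNL
        · intro h2
          have h3 := CLPaux.backward_anti hpar φα.symm
            (CLPaux.symm_anti φα hanti') hsymmLR hsymmNL h2
          rwa [φα.symm_lineMap_cancel, φα.symm_lineMap_cancel] at h3
    apply (CLPaux.preserves_iff_lineMap φβ par).2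
    intro M N
    have hτ := (CLPaux.preserves_iff_lineMap (CLPaux.lmulSLB (β 1) hb) par).1
      (CLPaux.preserves_lmul hpar hb) (φα.lineMap M) (φα.lineMap N)
    rw [hcompb M, hcompb N] at hτ
    exact (hPαiff M N).trans hτ
end

section
/- Let ∥ be a Clifford-like parallelism. An F-linear bijection β : H → H preserves ∥ if and only if it preserves the left Clifford parallelism ∥ℓ; in other words, the group of F-linear transformations preserving ∥ coincides with the group of F-linear transformations preserving ∥ℓ. -/
variable (F H : Type*) [Field F] [DivisionRing H] [Algebra F H]

/-!
Every line is a left and a right translate of a line through `1`, and the lines through `1` are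
the quadratic subfields `span {1, u}` (`u ∉ F`), that is, centralisers. Call a line of *left type*
for `∥` if its `∥`-class is its left class. No quadratic subfield is normalised by all of `Hˣ`
(Cartan–Brauer–Hua), so no line has equal left and right classes; hence the type is constant along
`∥ℓ` and along `∥r`, so it is invariant under multiplications on either side and under
automorphisms of `H`, which move `span {1, u}` to a conjugate (elements satisfying the same
quadratic equation are conjugate). Thus every `x ↦ c * σ x` with `σ ∈ Aut_F H` preserves `∥`.

Conversely, if a linear `γ` with `γ 1 = 1` preserves `∥` and `u ∉ F`, the translates of
`K = span {1, u}` go to translates of `γ K`, which puts `γ (g * u)` into a plane such as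
`span {γ g, γ g * γ u}` for every `g`. An additive map sending every `y` into `span {y, y * w}` is a
combination of `1` and `(· * w)`, so `γ (g * u) = γ g * γ u` for all `g` or
`γ (u * g) = γ u * γ g` for all `g` (the antimultiplicative alternatives would make `γ K` a
conjugate of `K` of the other type); such a `γ` preserves inverses and is therefore multiplicative.
So for every Clifford-like `∥` the linear maps preserving it are exactly the maps `x ↦ c * σ x`.
-/

open Module Submodule Pointwise

namespace CliffordLike

theorem finrank_subalgebra_dvd {F A : Type*} [Field F] [Ring A] [IsDomain A] [Algebra F A]
    [FiniteDimensional F A] (B : Subalgebra F A) : finrank F B ∣ finrank F A := by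
  let := divisionRingOfFiniteDimensional F B
  exact ⟨_, (finrank_mul_finrank F B A).symm⟩

theorem eq_zero_of_smul_one_add_smul_eq_zero {F A : Type*} [Field F] [Ring A] [Nontrivial A]
    [Algebra F A] {u : A} (hu : u ∉ (⊥ : Subalgebra F A)) {a b : F} (h : a • 1 + b • u = 0) :
    a = 0 ∧ b = 0 := by
  have hb : b = 0 := by
    by_contra hb
    refine hu (Algebra.mem_bot.2 ⟨-(b⁻¹ * a), ?_⟩)
    rw [Algebra.algebraMap_eq_smul_one, ← inv_smul_smul₀ hb u, eq_neg_of_add_eq_zero_right h,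
      smul_neg, smul_smul, neg_smul]
  subst hb
  simpa using h

theorem finrank_span_one_pair {F A : Type*} [Field F] [Ring A] [Nontrivial A] [Algebra F A]
    {u : A} (hu : u ∉ (⊥ : Subalgebra F A)) : finrank F (span F {1, u}) = 2 := by
  have := finrank_span_eq_card (LinearIndependent.pair_iff.2 fun _ _ =>
    eq_zero_of_smul_one_add_smul_eq_zero hu)
  rwa [Matrix.range_cons_cons_empty, Fintype.card_fin] at this

theorem exists_notMem_span_pair {F V : Type*} [Field F] [AddCommGroup V] [Module F V]
    (hV : 2 < finrank F V) (a b : V) : ∃ z, z ∉ span F {a, b} := by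
  by_contra! h
  have h2 := finrank_range_le_card (R := F) ![a, b]
  rw [Set.finrank, Matrix.range_cons_cons_empty, eq_top_iff'.2 h, finrank_top] at h2
  simp at h2
  omega

theorem exists_eq_smul_add_smul_of_forall_mem_span {F V : Type*} [Field F] [AddCommGroup V]
    [Module F V] (hV : 2 < finrank F V) {S T : V →ₗ[F] V} (hT : ∀ y, T (T y) ∈ span F {y, T y})
    (hind : ∀ y y', y ≠ 0 → y' ∉ span F {y, T y} → ∀ a b a' b' : F,
      a • y + b • T y + (a' • y' + b' • T y') = 0 → a = 0 ∧ b = 0 ∧ a' = 0 ∧ b' = 0)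
    (hS : ∀ y, S y ∈ span F {y, T y}) : ∃ c d : F, ∀ y, S y = c • y + d • T y := by
  have key : ∀ y y', y ≠ 0 → y' ∉ span F {y, T y} → ∀ c d c' d' : F,
      c • y + d • T y = S y → c' • y' + d' • T y' = S y' → c = c' ∧ d = d' := by
    intro y y' hy hy' c d c' d' h h'
    obtain ⟨e, f, hef⟩ := mem_span_pair.1 (hS (y + y'))
    rw [map_add T, map_add S, ← h, ← h'] at hef
    obtain ⟨h₁, h₂, h₃, h₄⟩ := hind y y' hy hy' (c - e) (d - f) (c' - e) (d' - f)
      (by linear_combination (norm := module) -hef)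
    exact ⟨by linear_combination h₁ - h₃, by linear_combination h₂ - h₄⟩
  obtain ⟨y₀, hy₀⟩ := exists_notMem_span_pair hV 0 0
  have hy₀0 : y₀ ≠ 0 := by
    rintro rfl
    exact hy₀ (zero_mem _)
  have hstable : span F {y₀, T y₀} ≤ (span F {y₀, T y₀}).comap T := by
    rw [span_le]
    rintro _ (rfl | rfl)
    exacts [subset_span (by simp), hT y₀]
  obtain ⟨c, d, hcd⟩ := mem_span_pair.1 (hS y₀)
  refine ⟨c, d, fun y => ?_⟩
  rcases eq_or_ne y 0 with rfl | hy0
  · simp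
  obtain ⟨c', d', hcd'⟩ := mem_span_pair.1 (hS y)
  suffices c = c' ∧ d = d' by rw [← hcd', this.1, this.2]
  by_cases hy : y ∈ span F {y₀, T y₀}
  · obtain ⟨z, hz⟩ := exists_notMem_span_pair hV y₀ (T y₀)
    have hzy : z ∉ span F {y, T y} := fun h =>
      hz (span_le.2 (Set.insert_subset hy (Set.singleton_subset_iff.2 (hstable hy))) h)
    obtain ⟨cz, dz, hcz⟩ := mem_span_pair.1 (hS z)
    obtain ⟨h₁, h₂⟩ := key y₀ z hy₀0 hz c d cz dz hcd hcz
    obtain ⟨h₃, h₄⟩ := key y z hy0 hzy c' d' cz dz hcd' hcz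
    exact ⟨h₁.trans h₃.symm, h₂.trans h₄.symm⟩
  · exact key y₀ y hy₀0 hy c d c' d' hcd hcd'

theorem map_mul_of_forall_or {G : Type*} [GroupWithZero G] {γ : G → G} (h0 : γ 0 = 0)
    (h1 : γ 1 = 1) (h : ∀ u, (∀ g, γ (g * u) = γ g * γ u) ∨ ∀ g, γ (u * g) = γ u * γ g)
    (x y : G) : γ (x * y) = γ x * γ y := by
  have hinv : ∀ w, γ w⁻¹ = (γ w)⁻¹ := by
    intro w
    rcases eq_or_ne w 0 with rfl | hw
    · rw [inv_zero, h0, inv_zero]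
    rcases h w with hw' | hw'
    · exact eq_inv_of_mul_eq_one_left (by rw [← hw', inv_mul_cancel₀ hw, h1])
    · exact eq_inv_of_mul_eq_one_right (by rw [← hw', mul_inv_cancel₀ hw, h1])
  rcases h y with hy | hy
  · exact hy x
  rcases eq_or_ne y 0 with rfl | hy0
  · rw [mul_zero, h0, mul_zero]
  have hγy : γ y ≠ 0 := fun h' => by simpa [mul_inv_cancel₀ hy0, h1, h'] using hy y⁻¹
  have hx := hy (y⁻¹ * x⁻¹)
  rw [mul_inv_cancel_left₀ hy0, ← mul_inv_rev, hinv, hinv] at hx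
  rw [← inv_inj, mul_inv_rev, hx, inv_mul_cancel_left₀ hγy]

variable {F H}

theorem mem_bot_of_forall_commute (hcenter : CenterEqF F H) {u : H} (h : ∀ x, u * x = x * u) :
    u ∈ (⊥ : Subalgebra F H) :=
  Algebra.mem_bot.2 <| ((hcenter u).1 h).imp fun _ => Eq.symm

theorem exists_mul_eq_mul_of_sq_eq (hcenter : CenterEqF F H) {u v : H}
    (hu : u ∉ (⊥ : Subalgebra F H)) {s t : F} (hu2 : u * u = s • 1 + t • u)
    (hv2 : v * v = s • 1 + t • v) : ∃ c : H, c ≠ 0 ∧ v * c = c * u := by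
  -- `x ↦ v * x - x * u` kills the image of `x ↦ v * x + x * u - t • x`; if that map vanishes,
  -- then `v = t - u`, and `x ↦ u * x - x * u` provides the witness.
  by_cases h : ∃ x, v * x + x * u - t • x ≠ 0
  · obtain ⟨x, hx⟩ := h
    refine ⟨_, hx, ?_⟩
    linear_combination (norm := skip) hv2 * x - x * hu2
    simp only [mul_sub, sub_mul, mul_add, add_mul, mul_smul_comm, smul_mul_assoc, mul_assoc,
      one_mul, mul_one]
    abel
  push Not at h
  have hv : v = t • 1 - u := by
    linear_combination (norm := skip) h 1
    simp only [mul_one, one_mul]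
    abel
  obtain ⟨x, hx⟩ : ∃ x, u * x ≠ x * u := by
    by_contra! hx
    exact hu (mem_bot_of_forall_commute hcenter hx)
  refine ⟨u * x - x * u, sub_ne_zero.2 hx, ?_⟩
  rw [hv]
  linear_combination (norm := skip) x * hu2 - hu2 * x
  simp only [mul_sub, sub_mul, mul_add, add_mul, mul_smul_comm, smul_mul_assoc, mul_assoc,
    one_mul, mul_one]
  abel

variable (F H) in
structure IsQuaternionSkewField : Prop where
  center_eq : CenterEqF F H
  finrank_eq : finrank F H = 4

namespace IsQuaternionSkewField

theorem two_lt_finrank (hH : IsQuaternionSkewField F H) : 2 < finrank F H := by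
  rw [hH.finrank_eq]
  norm_num

theorem span_one_pair_eq_centralizer (hH : IsQuaternionSkewField F H) {u : H}
    (hu : u ∉ (⊥ : Subalgebra F H)) :
    span F {1, u} = Subalgebra.toSubmodule (Subalgebra.centralizer F {u}) := by
  have : FiniteDimensional F H := .of_finrank_pos (by rw [hH.finrank_eq]; norm_num)
  set C := Subalgebra.centralizer F {u}
  have hle : span F {1, u} ≤ Subalgebra.toSubmodule C := by
    rw [span_le]
    rintro _ (rfl | rfl) <;> simp [C, Set.mem_centralizer_iff]
  have hne : Subalgebra.toSubmodule C ≠ ⊤ := by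
    refine fun h => hu (mem_bot_of_forall_commute hH.center_eq fun x => ?_)
    have hx : x ∈ Subalgebra.toSubmodule C := h ▸ mem_top
    simpa [C, Subalgebra.mem_centralizer_iff] using hx
  have h2 := finrank_span_one_pair hu ▸ finrank_mono hle
  have h4 := hH.finrank_eq ▸ finrank_lt hne
  have hdvd := hH.finrank_eq ▸ finrank_subalgebra_dvd C
  rw [Subalgebra.finrank_toSubmodule] at h2 h4
  refine eq_of_le_of_finrank_le hle ?_
  rw [Subalgebra.finrank_toSubmodule, finrank_span_one_pair hu]
  interval_cases h : finrank F C <;> simp_all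

theorem mem_span_one_pair_iff (hH : IsQuaternionSkewField F H) {u v : H}
    (hu : u ∉ (⊥ : Subalgebra F H)) : v ∈ span F {1, u} ↔ u * v = v * u := by
  rw [hH.span_one_pair_eq_centralizer hu]
  simp [Subalgebra.mem_centralizer_iff]

theorem mul_mem_span_one_pair (hH : IsQuaternionSkewField F H) {u x y : H}
    (hu : u ∉ (⊥ : Subalgebra F H)) (hx : x ∈ span F {1, u}) (hy : y ∈ span F {1, u}) :
    x * y ∈ span F {1, u} := by
  rw [hH.mem_span_one_pair_iff hu] at *
  rw [← mul_assoc, hx, mul_assoc, hy, mul_assoc]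

theorem inv_mem_span_one_pair (hH : IsQuaternionSkewField F H) {u x : H}
    (hu : u ∉ (⊥ : Subalgebra F H)) (hx : x ∈ span F {1, u}) : x⁻¹ ∈ span F {1, u} := by
  rw [hH.mem_span_one_pair_iff hu] at *
  exact (Commute.inv_right₀ hx).eq

theorem eq_zero_of_add_mul_eq_zero_left (hH : IsQuaternionSkewField F H) {u x k k' : H}
    (hu : u ∉ (⊥ : Subalgebra F H)) (hx : x ∉ span F {1, u}) (hk : k ∈ span F {1, u})
    (hk' : k' ∈ span F {1, u}) (h : k + x * k' = 0) : k' = 0 := by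
  by_contra hk'0
  refine hx ?_
  rw [(eq_mul_inv_iff_mul_eq₀ hk'0).2 (eq_neg_of_add_eq_zero_right h)]
  exact hH.mul_mem_span_one_pair hu (neg_mem hk) (hH.inv_mem_span_one_pair hu hk')

theorem eq_zero_of_add_mul_eq_zero_right (hH : IsQuaternionSkewField F H) {u x k k' : H}
    (hu : u ∉ (⊥ : Subalgebra F H)) (hx : x ∉ span F {1, u}) (hk : k ∈ span F {1, u})
    (hk' : k' ∈ span F {1, u}) (h : k + k' * x = 0) : k' = 0 := by
  by_contra hk'0
  refine hx ?_
  rw [(eq_inv_mul_iff_mul_eq₀ hk'0).2 (eq_neg_of_add_eq_zero_right h)]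
  exact hH.mul_mem_span_one_pair hu (hH.inv_mem_span_one_pair hu hk') (neg_mem hk)

theorem exists_smul_ne_op_smul (hH : IsQuaternionSkewField F H) {u : H}
    (hu : u ∉ (⊥ : Subalgebra F H)) :
    ∃ g : H, g ≠ 0 ∧ g • (span F {1, u} : Set H) ≠ MulOpposite.op g • (span F {1, u} : Set H) := by
  by_contra! h
  have hconj : ∀ g ≠ 0, ∃ k ∈ span F {1, u}, g * u = k * g := fun g hg => by
    obtain ⟨k, hk, hkg⟩ := Set.mem_smul_set.1 <|
      h g hg ▸ Set.smul_mem_smul_set (a := g) (subset_span (by simp) : u ∈ (span F {1, u} : Set H))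
    exact ⟨k, hk, hkg.symm⟩
  refine hu (mem_bot_of_forall_commute hH.center_eq fun x => ?_)
  by_cases hx : x ∈ span F {1, u}
  · exact (hH.mem_span_one_pair_iff hu).1 hx
  -- Cartan–Brauer–Hua: conjugating `u` by `x` and by `1 + x` forces `x * u = u * x`.
  have hx1 : 1 + x ≠ 0 := fun h1 => hx <| by
    rw [eq_neg_of_add_eq_zero_right h1]
    exact neg_mem (subset_span (by simp))
  obtain ⟨k₁, hk₁, h₁⟩ := hconj x fun h0 => hx (h0 ▸ zero_mem _)
  obtain ⟨k₂, hk₂, h₂⟩ := hconj (1 + x) hx1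
  have h : (u - k₂) + (k₁ - k₂) * x = 0 := by
    rw [add_mul, one_mul, h₁, mul_add, mul_one] at h₂
    rw [sub_mul, sub_add_sub_comm, h₂, sub_self]
  have hk := hH.eq_zero_of_add_mul_eq_zero_right hu hx
    (sub_mem (subset_span (by simp)) hk₂) (sub_mem hk₁ hk₂) h
  rw [hk, zero_mul, add_zero, sub_eq_zero] at h
  rw [sub_eq_zero.1 hk, ← h] at h₁
  exact h₁.symm

theorem exists_conj_of_map_sq (hH : IsQuaternionSkewField F H) {u : H}
    (hu : u ∉ (⊥ : Subalgebra F H)) (γ : H →ₗ[F] H) (hγ1 : γ 1 = 1)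
    (hsq : γ (u * u) = γ u * γ u) : ∃ d : H, d ≠ 0 ∧ ∀ k ∈ span F {1, u}, γ k = d * k * d⁻¹ := by
  have hu1 : u ∈ span F {1, u} := subset_span (by simp)
  obtain ⟨s, t, hst⟩ := mem_span_pair.1 (hH.mul_mem_span_one_pair hu hu1 hu1)
  obtain ⟨d, hd, hdu⟩ := exists_mul_eq_mul_of_sq_eq hH.center_eq hu hst.symm
    (by rw [← hsq, ← hst, map_add, map_smul, map_smul, hγ1])
  refine ⟨d, hd, fun k hk => ?_⟩
  obtain ⟨a, b, rfl⟩ := mem_span_pair.1 hk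
  rw [map_add, map_smul, map_smul, hγ1, ← mul_inv_cancel_right₀ hd (γ u), hdu]
  simp only [mul_add, add_mul, mul_smul_comm, smul_mul_assoc, mul_one, mul_inv_cancel₀ hd,
    mul_assoc]

theorem mul_mul_mem_span_pair_right (hH : IsQuaternionSkewField F H) {w : H}
    (hw : w ∉ (⊥ : Subalgebra F H)) (y : H) : y * w * w ∈ span F {y, y * w} := by
  have hw1 : w ∈ span F {1, w} := subset_span (by simp)
  obtain ⟨s, t, hst⟩ := mem_span_pair.1 (hH.mul_mem_span_one_pair hw hw1 hw1)
  refine mem_span_pair.2 ⟨s, t, ?_⟩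
  rw [mul_assoc, ← hst, mul_add, mul_smul_comm, mul_smul_comm, mul_one]

theorem mul_mul_mem_span_pair_left (hH : IsQuaternionSkewField F H) {w : H}
    (hw : w ∉ (⊥ : Subalgebra F H)) (y : H) : w * (w * y) ∈ span F {y, w * y} := by
  have hw1 : w ∈ span F {1, w} := subset_span (by simp)
  obtain ⟨s, t, hst⟩ := mem_span_pair.1 (hH.mul_mem_span_one_pair hw hw1 hw1)
  refine mem_span_pair.2 ⟨s, t, ?_⟩
  rw [← mul_assoc, ← hst, add_mul, smul_mul_assoc, smul_mul_assoc, one_mul]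

theorem eq_zero_of_lincomb_mul_right (hH : IsQuaternionSkewField F H) {w y y' : H}
    (hw : w ∉ (⊥ : Subalgebra F H)) (hy : y ≠ 0) (hy' : y' ∉ span F {y, y * w}) {a b a' b' : F}
    (h : a • y + b • (y * w) + (a' • y' + b' • (y' * w)) = 0) :
    a = 0 ∧ b = 0 ∧ a' = 0 ∧ b' = 0 := by
  have hk : ∀ a b : F, a • (1 : H) + b • w ∈ span F {1, w} := fun a b =>
    mem_span_pair.2 ⟨a, b, rfl⟩
  have hy'' : y⁻¹ * y' ∉ span F {1, w} := fun hmem => hy' <| by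
    obtain ⟨e, f, hef⟩ := mem_span_pair.1 hmem
    refine mem_span_pair.2 ⟨e, f, ?_⟩
    rw [← mul_inv_cancel_left₀ hy y', ← hef, mul_add, mul_smul_comm, mul_smul_comm, mul_one]
  have h' : (a • 1 + b • w) + (y⁻¹ * y') * (a' • 1 + b' • w) = 0 := by
    linear_combination (norm := skip) y⁻¹ * h
    simp only [mul_add, mul_smul_comm, ← mul_assoc, inv_mul_cancel₀ hy, one_mul, mul_one,
      mul_zero]
    abel
  have hk' := hH.eq_zero_of_add_mul_eq_zero_left hw hy'' (hk a b) (hk a' b') h'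
  rw [hk', mul_zero, add_zero] at h'
  obtain ⟨ha, hb⟩ := eq_zero_of_smul_one_add_smul_eq_zero hw h'
  obtain ⟨ha', hb'⟩ := eq_zero_of_smul_one_add_smul_eq_zero hw hk'
  exact ⟨ha, hb, ha', hb'⟩

theorem eq_zero_of_lincomb_mul_left (hH : IsQuaternionSkewField F H) {w y y' : H}
    (hw : w ∉ (⊥ : Subalgebra F H)) (hy : y ≠ 0) (hy' : y' ∉ span F {y, w * y}) {a b a' b' : F}
    (h : a • y + b • (w * y) + (a' • y' + b' • (w * y')) = 0) :
    a = 0 ∧ b = 0 ∧ a' = 0 ∧ b' = 0 := by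
  have hk : ∀ a b : F, a • (1 : H) + b • w ∈ span F {1, w} := fun a b =>
    mem_span_pair.2 ⟨a, b, rfl⟩
  have hy'' : y' * y⁻¹ ∉ span F {1, w} := fun hmem => hy' <| by
    obtain ⟨e, f, hef⟩ := mem_span_pair.1 hmem
    refine mem_span_pair.2 ⟨e, f, ?_⟩
    rw [← inv_mul_cancel_right₀ hy y', ← hef, add_mul, smul_mul_assoc, smul_mul_assoc, one_mul]
  have h' : (a • 1 + b • w) + (a' • 1 + b' • w) * (y' * y⁻¹) = 0 := by
    linear_combination (norm := skip) h * y⁻¹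
    simp only [add_mul, smul_mul_assoc, mul_assoc, mul_inv_cancel₀ hy, one_mul, mul_one,
      zero_mul]
    abel
  have hk' := hH.eq_zero_of_add_mul_eq_zero_right hw hy'' (hk a b) (hk a' b') h'
  rw [hk', zero_mul, add_zero] at h'
  obtain ⟨ha, hb⟩ := eq_zero_of_smul_one_add_smul_eq_zero hw h'
  obtain ⟨ha', hb'⟩ := eq_zero_of_smul_one_add_smul_eq_zero hw hk'
  exact ⟨ha, hb, ha', hb'⟩

theorem eq_mul_right_of_forall_mem_span (hH : IsQuaternionSkewField F H) {w : H}
    (hw : w ∉ (⊥ : Subalgebra F H)) {S : H →ₗ[F] H} (hS : ∀ y, S y ∈ span F {y, y * w})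
    (h1 : S 1 = w) (y : H) : S y = y * w := by
  obtain ⟨c, d, hcd⟩ := exists_eq_smul_add_smul_of_forall_mem_span hH.two_lt_finrank
    (T := LinearMap.mulRight F w) (hH.mul_mul_mem_span_pair_right hw)
    (fun _ _ hy hy' _ _ _ _ => hH.eq_zero_of_lincomb_mul_right hw hy hy') hS
  have hcd1 := hcd 1
  rw [h1, LinearMap.mulRight_apply, one_mul] at hcd1
  obtain ⟨hc, hd⟩ := eq_zero_of_smul_one_add_smul_eq_zero hw
    (show c • 1 + (d - 1) • w = 0 by linear_combination (norm := module) -hcd1)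
  rw [hcd, hc, sub_eq_zero.1 hd, LinearMap.mulRight_apply, zero_smul, one_smul, zero_add]

theorem eq_mul_left_of_forall_mem_span (hH : IsQuaternionSkewField F H) {w : H}
    (hw : w ∉ (⊥ : Subalgebra F H)) {S : H →ₗ[F] H} (hS : ∀ y, S y ∈ span F {y, w * y})
    (h1 : S 1 = w) (y : H) : S y = w * y := by
  obtain ⟨c, d, hcd⟩ := exists_eq_smul_add_smul_of_forall_mem_span hH.two_lt_finrank
    (T := LinearMap.mulLeft F w) (hH.mul_mul_mem_span_pair_left hw)
    (fun _ _ hy hy' _ _ _ _ => hH.eq_zero_of_lincomb_mul_left hw hy hy') hS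
  have hcd1 := hcd 1
  rw [h1, LinearMap.mulLeft_apply, mul_one] at hcd1
  obtain ⟨hc, hd⟩ := eq_zero_of_smul_one_add_smul_eq_zero hw
    (show c • 1 + (d - 1) • w = 0 by linear_combination (norm := module) -hcd1)
  rw [hcd, hc, sub_eq_zero.1 hd, LinearMap.mulLeft_apply, zero_smul, one_smul, zero_add]

theorem map_eq_mul_right_of_forall_mem_span (hH : IsQuaternionSkewField F H) (γ : H ≃ₗ[F] H)
    (hγ1 : γ 1 = 1) {u : H} (f : H →ₗ[F] H) (hf : f 1 = u) (hγu : γ u ∉ (⊥ : Subalgebra F H))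
    (h : ∀ g ≠ 0, γ (f g) ∈ span F {γ g, γ g * γ u}) (g : H) : γ (f g) = γ g * γ u := by
  have hγ1' : γ.symm 1 = 1 := γ.symm_apply_eq.2 hγ1.symm
  have := hH.eq_mul_right_of_forall_mem_span hγu (S := γ.conj f) (fun y => ?_)
    (by rw [LinearEquiv.conj_apply_apply, hγ1', hf])
  · simpa using this (γ g)
  · rcases eq_or_ne (γ.symm y) 0 with h0 | h0
    · simp [γ.symm_apply_eq.1 h0]
    · simpa using h _ h0

theorem map_eq_mul_left_of_forall_mem_span (hH : IsQuaternionSkewField F H) (γ : H ≃ₗ[F] H)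
    (hγ1 : γ 1 = 1) {u : H} (f : H →ₗ[F] H) (hf : f 1 = u) (hγu : γ u ∉ (⊥ : Subalgebra F H))
    (h : ∀ g ≠ 0, γ (f g) ∈ span F {γ g, γ u * γ g}) (g : H) : γ (f g) = γ u * γ g := by
  have hγ1' : γ.symm 1 = 1 := γ.symm_apply_eq.2 hγ1.symm
  have := hH.eq_mul_left_of_forall_mem_span hγu (S := γ.conj f) (fun y => ?_)
    (by rw [LinearEquiv.conj_apply_apply, hγ1', hf])
  · simpa using this (γ g)
  · rcases eq_or_ne (γ.symm y) 0 with h0 | h0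
    · simp [γ.symm_apply_eq.1 h0]
    · simpa using h _ h0

end IsQuaternionSkewField

theorem map_notMem_bot (γ : H ≃ₗ[F] H) (hγ1 : γ 1 = 1) {u : H} (hu : u ∉ (⊥ : Subalgebra F H)) :
    γ u ∉ (⊥ : Subalgebra F H) := by
  intro h
  obtain ⟨a, ha⟩ := Algebra.mem_bot.1 h
  refine hu (Algebra.mem_bot.2 ⟨a, γ.injective ?_⟩)
  rw [← ha, Algebra.algebraMap_eq_smul_one, map_smul, hγ1]

theorem _root_.leftPar_iff {M N : Submodule F H} :
    LeftPar F H M N ↔ ∃ g : H, g ≠ 0 ∧ (N : Set H) = g • (M : Set H) :=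
  Iff.rfl

theorem _root_.rightPar_iff {M N : Submodule F H} :
    RightPar F H M N ↔ ∃ g : H, g ≠ 0 ∧ (N : Set H) = MulOpposite.op g • (M : Set H) :=
  Iff.rfl

theorem _root_.LeftPar.refl (M : Submodule F H) : LeftPar F H M M :=
  leftPar_iff.2 ⟨1, one_ne_zero, (one_smul H (M : Set H)).symm⟩

theorem _root_.LeftPar.symm {M N : Submodule F H} (h : LeftPar F H M N) : LeftPar F H N M := by
  obtain ⟨g, hg, hN⟩ := leftPar_iff.1 h
  exact leftPar_iff.2 ⟨g⁻¹, inv_ne_zero hg, by rw [hN, inv_smul_smul₀ hg]⟩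

theorem _root_.LeftPar.trans {M N P : Submodule F H} (h : LeftPar F H M N)
    (h' : LeftPar F H N P) : LeftPar F H M P := by
  obtain ⟨g, hg, hN⟩ := leftPar_iff.1 h
  obtain ⟨g', hg', hP⟩ := leftPar_iff.1 h'
  exact leftPar_iff.2 ⟨g' * g, mul_ne_zero hg' hg, by rw [hP, hN, smul_smul]⟩

theorem _root_.RightPar.symm {M N : Submodule F H} (h : RightPar F H M N) : RightPar F H N M := by
  obtain ⟨g, hg, hN⟩ := rightPar_iff.1 h
  refine rightPar_iff.2 ⟨g⁻¹, inv_ne_zero hg, ?_⟩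
  rw [hN, MulOpposite.op_inv, inv_smul_smul₀ (MulOpposite.op_ne_zero_iff g |>.2 hg)]

theorem _root_.RightPar.trans {M N P : Submodule F H} (h : RightPar F H M N)
    (h' : RightPar F H N P) : RightPar F H M P := by
  obtain ⟨g, hg, hN⟩ := rightPar_iff.1 h
  obtain ⟨g', hg', hP⟩ := rightPar_iff.1 h'
  exact rightPar_iff.2 ⟨g * g', mul_ne_zero hg hg', by rw [hP, hN, smul_smul, MulOpposite.op_mul]⟩

namespace Line

theorem ext_coe {M N : Line F H} (h : (M.1 : Set H) = N.1) : M = N :=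
  Subtype.ext (SetLike.coe_injective h)

def map (e : H ≃ₗ[F] H) (L : Line F H) : Line F H :=
  ⟨L.1.map (e : H →ₗ[F] H), (LinearEquiv.finrank_map_eq e L.1).trans L.2⟩

@[simp]
theorem coe_map (e : H ≃ₗ[F] H) (L : Line F H) : ((map e L).1 : Set H) = e '' L.1 :=
  Submodule.map_coe _ _

theorem map_symm_map (e : H ≃ₗ[F] H) (L : Line F H) : map e.symm (map e L) = L :=
  ext_coe <| by simp [Set.image_image]

def mulLeft (c : Hˣ) (L : Line F H) : Line F H := map (c.mulLeftLinearEquiv F H) L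

def mulRight (c : Hˣ) (L : Line F H) : Line F H := map (c.mulRightLinearEquiv F) L

@[simp]
theorem coe_mulLeft (c : Hˣ) (L : Line F H) :
    ((mulLeft c L).1 : Set H) = (c : H) • (L.1 : Set H) := by
  rw [mulLeft, coe_map, ← Set.image_smul]
  rfl

@[simp]
theorem coe_mulRight (c : Hˣ) (L : Line F H) :
    ((mulRight c L).1 : Set H) = MulOpposite.op (c : H) • (L.1 : Set H) := by
  rw [mulRight, coe_map, ← Set.image_smul]
  rfl

theorem leftPar_mulLeft (c : Hˣ) (L : Line F H) : LeftPar F H L.1 (mulLeft c L).1 :=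
  leftPar_iff.2 ⟨c, c.ne_zero, coe_mulLeft c L⟩

theorem rightPar_mulRight (c : Hˣ) (L : Line F H) : RightPar F H L.1 (mulRight c L).1 :=
  rightPar_iff.2 ⟨c, c.ne_zero, coe_mulRight c L⟩

def spanOnePair {u : H} (hu : u ∉ (⊥ : Subalgebra F H)) : Line F H :=
  ⟨span F {1, u}, finrank_span_one_pair hu⟩

theorem coe_map_spanOnePair (γ : H ≃ₗ[F] H) (hγ1 : γ 1 = 1) {u : H}
    (hu : u ∉ (⊥ : Subalgebra F H)) : (map γ (spanOnePair hu)).1 = span F {1, γ u} := by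
  simp [map, spanOnePair, Submodule.map_span, Set.image_pair, hγ1]

theorem exists_eq_span_one_pair {K : Line F H} (hK1 : (1 : H) ∈ K.1) :
    ∃ u ∉ (⊥ : Subalgebra F H), K.1 = span F {1, u} := by
  have : FiniteDimensional F K.1 := .of_finrank_pos (by rw [K.2]; norm_num)
  have : Module.Finite F (Subalgebra.toSubmodule (⊥ : Subalgebra F H)) :=
    inferInstanceAs (Module.Finite F (⊥ : Subalgebra F H))
  obtain ⟨u, huK, hu⟩ : ∃ u ∈ K.1, u ∉ (⊥ : Subalgebra F H) := by
    by_contra! h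
    have := Submodule.finrank_mono (show K.1 ≤ Subalgebra.toSubmodule ⊥ from h)
    rw [K.2, Subalgebra.finrank_toSubmodule, Subalgebra.finrank_bot] at this
    omega
  refine ⟨u, hu, (eq_of_le_of_finrank_le ?_ ?_).symm⟩
  · rw [span_le]
    rintro _ (rfl | rfl) <;> assumption
  · rw [K.2, finrank_span_one_pair hu]

theorem exists_one_mem_leftPar (M : Line F H) :
    ∃ K : Line F H, (1 : H) ∈ K.1 ∧ LeftPar F H K.1 M.1 := by
  obtain ⟨m, hm, hm0⟩ := M.1.exists_mem_ne_zero_of_ne_bot fun h => by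
    have := M.2
    rw [h, finrank_bot] at this
    omega
  refine ⟨mulLeft (Units.mk0 m hm0)⁻¹ M, ?_, (leftPar_mulLeft _ M).symm⟩
  rw [← SetLike.mem_coe, coe_mulLeft]
  exact ⟨m, hm, by simp [hm0]⟩

theorem smul_coe_eq (hH : IsQuaternionSkewField F H) {K : Line F H} (hK1 : (1 : H) ∈ K.1) {k : H}
    (hk : k ∈ K.1) (hk0 : k ≠ 0) : k • (K.1 : Set H) = K.1 := by
  obtain ⟨u, hu, hK⟩ := exists_eq_span_one_pair hK1
  rw [hK] at hk ⊢
  refine Set.Subset.antisymm ?_ fun y hy => ?_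
  · rintro _ ⟨y, hy, rfl⟩
    exact hH.mul_mem_span_one_pair hu hk hy
  · exact ⟨k⁻¹ * y, hH.mul_mem_span_one_pair hu (hH.inv_mem_span_one_pair hu hk) hy,
      mul_inv_cancel_left₀ hk0 y⟩

theorem op_smul_coe_eq (hH : IsQuaternionSkewField F H) {K : Line F H} (hK1 : (1 : H) ∈ K.1)
    {k : H} (hk : k ∈ K.1) (hk0 : k ≠ 0) : MulOpposite.op k • (K.1 : Set H) = K.1 := by
  obtain ⟨u, hu, hK⟩ := exists_eq_span_one_pair hK1
  rw [hK] at hk ⊢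
  refine Set.Subset.antisymm ?_ fun y hy => ?_
  · rintro _ ⟨y, hy, rfl⟩
    exact hH.mul_mem_span_one_pair hu hy hk
  · exact ⟨y * k⁻¹, hH.mul_mem_span_one_pair hu hy (hH.inv_mem_span_one_pair hu hk),
      inv_mul_cancel_right₀ hk0 y⟩

theorem coe_eq_smul_of_leftPar (hH : IsQuaternionSkewField F H) {K : Line F H}
    (hK1 : (1 : H) ∈ K.1) {P : Submodule F H} (h : LeftPar F H P K.1) {x : H} (hx : x ∈ P)
    (hx0 : x ≠ 0) : (P : Set H) = x • (K.1 : Set H) := by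
  obtain ⟨g, hg, hP⟩ := leftPar_iff.1 h.symm
  obtain ⟨k, hk, rfl⟩ := Set.mem_smul_set.1 (hP ▸ hx : x ∈ g • (K.1 : Set H))
  rw [hP, smul_eq_mul, mul_smul, smul_coe_eq hH hK1 hk (right_ne_zero_of_mul hx0)]

theorem coe_eq_op_smul_of_rightPar (hH : IsQuaternionSkewField F H) {K : Line F H}
    (hK1 : (1 : H) ∈ K.1) {P : Submodule F H} (h : RightPar F H P K.1) {x : H} (hx : x ∈ P)
    (hx0 : x ≠ 0) : (P : Set H) = MulOpposite.op x • (K.1 : Set H) := by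
  obtain ⟨g, hg, hP⟩ := rightPar_iff.1 h.symm
  obtain ⟨k, hk, rfl⟩ := Set.mem_smul_set.1 (hP ▸ hx : x ∈ MulOpposite.op g • (K.1 : Set H))
  rw [hP, MulOpposite.smul_eq_mul_unop, MulOpposite.unop_op, MulOpposite.op_mul, mul_smul,
    op_smul_coe_eq hH hK1 hk (left_ne_zero_of_mul hx0)]

end Line

theorem leftClass_eq_of_leftPar {M N : Line F H} (h : LeftPar F H M.1 N.1) :
    leftClass F H M = leftClass F H N :=
  Set.ext fun _ => ⟨fun hL => hL.trans h, fun hL => hL.trans h.symm⟩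

theorem rightClass_eq_of_rightPar {M N : Line F H} (h : RightPar F H M.1 N.1) :
    rightClass F H M = rightClass F H N :=
  Set.ext fun _ => ⟨fun hL => hL.trans h, fun hL => hL.trans h.symm⟩

theorem leftClass_ne_rightClass (hH : IsQuaternionSkewField F H) (M : Line F H) :
    leftClass F H M ≠ rightClass F H M := by
  intro heq
  obtain ⟨K, hK1, hKM⟩ := Line.exists_one_mem_leftPar M
  have hKM' : RightPar F H K.1 M.1 := show K ∈ rightClass F H M from heq ▸ hKM
  rw [← leftClass_eq_of_leftPar hKM, ← rightClass_eq_of_rightPar hKM'] at heq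
  obtain ⟨u, hu, hK⟩ := Line.exists_eq_span_one_pair hK1
  obtain ⟨g, hg, hne⟩ := hH.exists_smul_ne_op_smul hu
  have hgK : RightPar F H (Line.mulLeft (Units.mk0 g hg) K).1 K.1 :=
    show _ ∈ rightClass F H K from heq ▸ (Line.leftPar_mulLeft _ K).symm
  have hg1 : g ∈ (Line.mulLeft (Units.mk0 g hg) K).1 := by
    rw [← SetLike.mem_coe, Line.coe_mulLeft]
    exact ⟨1, hK1, mul_one g⟩
  refine hne ?_
  have := Line.coe_eq_op_smul_of_rightPar hH hK1 hgK hg1 hg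
  rwa [Line.coe_mulLeft, Units.val_mk0, hK] at this

theorem preserves_iff_map {par : Line F H → Line F H → Prop} (e : H ≃ₗ[F] H) :
    Preserves F H e par ↔ ∀ M N : Line F H, par M N ↔ par (Line.map e M) (Line.map e N) := by
  refine ⟨fun h M N => h M N _ _ (Line.coe_map e M) (Line.coe_map e N),
    fun h M N M' N' hM hN => ?_⟩
  rw [Line.ext_coe (hM.trans (Line.coe_map e M).symm),
    Line.ext_coe (hN.trans (Line.coe_map e N).symm)]
  exact h M N

structure IsCliffordLikeEquiv (par : Line F H → Line F H → Prop) : Prop where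
  equivalence : Equivalence par
  left_or_right : ∀ M, parClass F H par M = leftClass F H M ∨ parClass F H par M = rightClass F H M

def IsLeftType (par : Line F H → Line F H → Prop) (M : Line F H) : Prop :=
  parClass F H par M = leftClass F H M

theorem isCliffordLikeEquiv_leftPar :
    IsCliffordLikeEquiv fun M N : Line F H => LeftPar F H M.1 N.1 :=
  ⟨⟨fun M => LeftPar.refl M.1, LeftPar.symm, LeftPar.trans⟩, fun _ => Or.inl rfl⟩

namespace IsCliffordLikeEquiv

variable {par : Line F H → Line F H → Prop}

theorem parClass_eq (hpar : IsCliffordLikeEquiv par) {M N : Line F H} (h : par M N) :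
    parClass F H par M = parClass F H par N :=
  Set.ext fun _ => ⟨fun h' => hpar.equivalence.trans h' h,
    fun h' => hpar.equivalence.trans h' (hpar.equivalence.symm h)⟩

theorem par_iff (hpar : IsCliffordLikeEquiv par) {M N : Line F H} :
    par N M ↔ (IsLeftType par M ∧ LeftPar F H N.1 M.1) ∨
      (¬IsLeftType par M ∧ RightPar F H N.1 M.1) := by
  by_cases hM : IsLeftType par M
  · simp only [hM, true_and, not_true_eq_false, false_and, or_false]
    exact Set.ext_iff.1 hM N
  · simp only [hM, false_and, not_false_eq_true, true_and, false_or]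
    exact Set.ext_iff.1 ((hpar.left_or_right M).resolve_left hM) N

theorem isLeftType_iff_of_leftPar (hpar : IsCliffordLikeEquiv par) {M N : Line F H}
    (h : LeftPar F H N.1 M.1) : IsLeftType par N ↔ IsLeftType par M := by
  have key : ∀ {M N : Line F H}, IsLeftType par M → LeftPar F H N.1 M.1 → IsLeftType par N :=
    fun {M N} hM h => by
      rw [IsLeftType, hpar.parClass_eq (hpar.par_iff.2 (Or.inl ⟨hM, h⟩)), hM,
        leftClass_eq_of_leftPar h]
  exact ⟨fun hN => key hN h.symm, fun hM => key hM h⟩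

theorem isLeftType_iff_of_rightPar (hpar : IsCliffordLikeEquiv par)
    (hH : IsQuaternionSkewField F H) {M N : Line F H} (h : RightPar F H N.1 M.1) :
    IsLeftType par N ↔ IsLeftType par M := by
  have key : ∀ {M N : Line F H}, ¬IsLeftType par M → RightPar F H N.1 M.1 →
      ¬IsLeftType par N := fun {M N} hM h hN => by
    refine leftClass_ne_rightClass hH N ?_
    rw [← hN, hpar.parClass_eq (hpar.par_iff.2 (Or.inr ⟨hM, h⟩)),
      (hpar.left_or_right M).resolve_left hM, rightClass_eq_of_rightPar h]
  exact not_iff_not.1 ⟨fun hN => key hN h.symm, fun hM => key hM h⟩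

theorem isLeftType_map_iff (hpar : IsCliffordLikeEquiv par) (hH : IsQuaternionSkewField F H)
    {K : Line F H} {d : H} (hd : d ≠ 0) (γ : H ≃ₗ[F] H) (hγ : ∀ k ∈ K.1, γ k = d * k * d⁻¹) :
    IsLeftType par (Line.map γ K) ↔ IsLeftType par K := by
  set D := Units.mk0 d hd
  have hγK : RightPar F H (Line.mulLeft D K).1 (Line.map γ K).1 := by
    refine rightPar_iff.2 ⟨d⁻¹, inv_ne_zero hd, ?_⟩
    rw [Line.coe_map, Line.coe_mulLeft, ← Set.image_smul, ← Set.image_smul, Set.image_image]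
    refine Set.image_congr fun k hk => ?_
    simp [D, hγ k hk]
  exact (hpar.isLeftType_iff_of_rightPar hH hγK.symm).trans
    (hpar.isLeftType_iff_of_leftPar (Line.leftPar_mulLeft D K).symm)

theorem par_map_of_forall (hpar : IsCliffordLikeEquiv par) (e : H ≃ₗ[F] H)
    (hl : ∀ M N : Line F H, LeftPar F H N.1 M.1 → LeftPar F H (Line.map e N).1 (Line.map e M).1)
    (hr : ∀ M N : Line F H, RightPar F H N.1 M.1 →
      RightPar F H (Line.map e N).1 (Line.map e M).1)
    (ht : ∀ M, IsLeftType par (Line.map e M) ↔ IsLeftType par M) {M N : Line F H}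
    (h : par N M) : par (Line.map e N) (Line.map e M) := by
  rcases hpar.par_iff.1 h with ⟨hM, hNM⟩ | ⟨hM, hNM⟩
  · exact hpar.par_iff.2 (Or.inl ⟨(ht M).2 hM, hl M N hNM⟩)
  · exact hpar.par_iff.2 (Or.inr ⟨mt (ht M).1 hM, hr M N hNM⟩)

theorem par_mulLeft (hpar : IsCliffordLikeEquiv par) (c : Hˣ) {M N : Line F H} (h : par N M) :
    par (Line.mulLeft c N) (Line.mulLeft c M) := by
  refine hpar.par_map_of_forall _ (fun M N hNM => ?_) (fun M N hNM => ?_)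
    (fun M => hpar.isLeftType_iff_of_leftPar (Line.leftPar_mulLeft c M).symm) h
  · obtain ⟨g, hg, hM⟩ := leftPar_iff.1 hNM
    refine leftPar_iff.2 ⟨c * g * c⁻¹, by simp [hg], ?_⟩
    rw [← Line.mulLeft, ← Line.mulLeft, Line.coe_mulLeft, Line.coe_mulLeft, hM, smul_smul,
      smul_smul, mul_assoc, Units.inv_mul, mul_one]
  · obtain ⟨g, hg, hM⟩ := rightPar_iff.1 hNM
    refine rightPar_iff.2 ⟨g, hg, ?_⟩
    rw [← Line.mulLeft, ← Line.mulLeft, Line.coe_mulLeft, Line.coe_mulLeft, hM, smul_comm]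

theorem par_map_algEquiv (hpar : IsCliffordLikeEquiv par) (hH : IsQuaternionSkewField F H)
    (σ : H ≃ₐ[F] H) {M N : Line F H} (h : par N M) :
    par (Line.map σ.toLinearEquiv N) (Line.map σ.toLinearEquiv M) := by
  have hl : ∀ M N : Line F H, LeftPar F H N.1 M.1 →
      LeftPar F H (Line.map σ.toLinearEquiv N).1 (Line.map σ.toLinearEquiv M).1 := by
    intro M N hNM
    obtain ⟨g, hg, hM⟩ := leftPar_iff.1 hNM
    refine leftPar_iff.2 ⟨σ g, by simpa using hg, ?_⟩
    simp only [Line.coe_map, AlgEquiv.toLinearEquiv_apply, hM]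
    exact Set.image_smul_distrib σ g _
  refine hpar.par_map_of_forall _ hl (fun M N hNM => ?_) (fun M => ?_) h
  · obtain ⟨g, hg, hM⟩ := rightPar_iff.1 hNM
    refine rightPar_iff.2 ⟨σ g, by simpa using hg, ?_⟩
    simp only [Line.coe_map, AlgEquiv.toLinearEquiv_apply, hM]
    exact Set.image_op_smul_distrib σ g _
  · obtain ⟨K, hK1, hKM⟩ := Line.exists_one_mem_leftPar M
    obtain ⟨u, hu, hK⟩ := Line.exists_eq_span_one_pair hK1
    obtain ⟨d, hd, hσ⟩ := hH.exists_conj_of_map_sq hu σ.toLinearMap (map_one σ) (map_mul σ u u)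
    rw [← hpar.isLeftType_iff_of_leftPar hKM, ← hpar.isLeftType_iff_of_leftPar (hl M K hKM),
      ← hpar.isLeftType_map_iff hH hd σ.toLinearEquiv (fun k hk => hσ k (hK ▸ hk))]

theorem par_map_of_eq_mul (hpar : IsCliffordLikeEquiv par) (hH : IsQuaternionSkewField F H)
    (e : H ≃ₗ[F] H) (c : Hˣ) (σ : H ≃ₐ[F] H) (he : ∀ x, e x = c * σ x) {M N : Line F H}
    (h : par N M) : par (Line.map e N) (Line.map e M) := by
  have hmap : ∀ L, Line.map e L = Line.mulLeft c (Line.map σ.toLinearEquiv L) := fun L =>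
    Line.ext_coe <| by
      rw [Line.coe_mulLeft, Line.coe_map, Line.coe_map, ← Set.image_smul, Set.image_image]
      exact Set.image_congr fun x _ => he x
  rw [hmap, hmap]
  exact hpar.par_mulLeft c (hpar.par_map_algEquiv hH σ h)

theorem mem_span_mul_right_of_par (hpar : IsCliffordLikeEquiv par)
    (hH : IsQuaternionSkewField F H) {K P : Line F H} {w : H} (hK : K.1 = span F {1, w})
    (hKl : IsLeftType par K) (h : par P K) {x y : H} (hx : x ∈ P.1) (hx0 : x ≠ 0)
    (hy : y ∈ P.1) : y ∈ span F {x, x * w} := by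
  have hPK := ((hpar.par_iff.1 h).resolve_right fun h' => h'.1 hKl).2
  rw [← SetLike.mem_coe, Line.coe_eq_smul_of_leftPar hH (hK ▸ subset_span (by simp)) hPK hx hx0]
    at hy
  obtain ⟨k, hk, rfl⟩ := hy
  obtain ⟨a, b, rfl⟩ := mem_span_pair.1 (hK ▸ hk)
  exact mem_span_pair.2 ⟨a, b, by simp [mul_add]⟩

theorem mem_span_mul_left_of_par (hpar : IsCliffordLikeEquiv par)
    (hH : IsQuaternionSkewField F H) {K P : Line F H} {w : H} (hK : K.1 = span F {1, w})
    (hKr : ¬IsLeftType par K) (h : par P K) {x y : H} (hx : x ∈ P.1) (hx0 : x ≠ 0)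
    (hy : y ∈ P.1) : y ∈ span F {x, w * x} := by
  have hPK := ((hpar.par_iff.1 h).resolve_left fun h' => hKr h'.1).2
  rw [← SetLike.mem_coe,
    Line.coe_eq_op_smul_of_rightPar hH (hK ▸ subset_span (by simp)) hPK hx hx0] at hy
  obtain ⟨k, hk, rfl⟩ := hy
  obtain ⟨a, b, rfl⟩ := mem_span_pair.1 (hK ▸ hk)
  exact mem_span_pair.2 ⟨a, b, by simp⟩

theorem map_mul_of_isLeftType (hpar : IsCliffordLikeEquiv par) (hH : IsQuaternionSkewField F H)
    (γ : H ≃ₗ[F] H) (hγ1 : γ 1 = 1) (hγ : ∀ M N, par N M → par (Line.map γ N) (Line.map γ M))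
    {u : H} (hu : u ∉ (⊥ : Subalgebra F H)) (hK : IsLeftType par (Line.spanOnePair hu))
    (g : H) : γ (g * u) = γ g * γ u := by
  set K := Line.spanOnePair hu
  have hK' := Line.coe_map_spanOnePair γ hγ1 hu
  have hγu := map_notMem_bot γ hγ1 hu
  have hP : ∀ g (hg : g ≠ 0),
      par (Line.map γ (Line.mulLeft (Units.mk0 g hg) K)) (Line.map γ K) := fun g hg =>
    hγ _ _ (hpar.par_iff.2 (Or.inl ⟨hK, (Line.leftPar_mulLeft _ K).symm⟩))
  have hmem : ∀ g (hg : g ≠ 0) k, k ∈ span F {1, u} →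
      γ (g * k) ∈ (Line.map γ (Line.mulLeft (Units.mk0 g hg) K)).1 := fun g hg k hk => by
    rw [← SetLike.mem_coe, Line.coe_map, Line.coe_mulLeft]
    exact ⟨g * k, ⟨k, hk, rfl⟩, rfl⟩
  have hg1 : ∀ g (hg : g ≠ 0), γ g ∈ (Line.map γ (Line.mulLeft (Units.mk0 g hg) K)).1 :=
    fun g hg => by simpa using hmem g hg 1 (subset_span (by simp))
  have hgu : ∀ g (hg : g ≠ 0), γ (g * u) ∈ (Line.map γ (Line.mulLeft (Units.mk0 g hg) K)).1 :=
    fun g hg => hmem g hg u (subset_span (by simp))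
  by_cases hK'l : IsLeftType par (Line.map γ K)
  · exact hH.map_eq_mul_right_of_forall_mem_span γ hγ1 (LinearMap.mulRight F u) (one_mul u) hγu
      (fun g hg => hpar.mem_span_mul_right_of_par hH hK' hK'l (hP g hg) (hg1 g hg)
        (by simpa using hg) (hgu g hg)) g
  · have hanti := hH.map_eq_mul_left_of_forall_mem_span γ hγ1 (LinearMap.mulRight F u)
      (one_mul u) hγu (fun g hg => hpar.mem_span_mul_left_of_par hH hK' hK'l (hP g hg)
        (hg1 g hg) (by simpa using hg) (hgu g hg))
    obtain ⟨d, hd, hγd⟩ := hH.exists_conj_of_map_sq hu γ.toLinearMap hγ1 (hanti u)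
    exact absurd ((hpar.isLeftType_map_iff hH hd γ hγd).2 hK) hK'l

theorem map_mul_of_not_isLeftType (hpar : IsCliffordLikeEquiv par)
    (hH : IsQuaternionSkewField F H) (γ : H ≃ₗ[F] H) (hγ1 : γ 1 = 1)
    (hγ : ∀ M N, par N M → par (Line.map γ N) (Line.map γ M)) {u : H}
    (hu : u ∉ (⊥ : Subalgebra F H)) (hK : ¬IsLeftType par (Line.spanOnePair hu)) (g : H) :
    γ (u * g) = γ u * γ g := by
  set K := Line.spanOnePair hu
  have hK' := Line.coe_map_spanOnePair γ hγ1 hu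
  have hγu := map_notMem_bot γ hγ1 hu
  have hP : ∀ g (hg : g ≠ 0),
      par (Line.map γ (Line.mulRight (Units.mk0 g hg) K)) (Line.map γ K) := fun g hg =>
    hγ _ _ (hpar.par_iff.2 (Or.inr ⟨hK, (Line.rightPar_mulRight _ K).symm⟩))
  have hmem : ∀ g (hg : g ≠ 0) k, k ∈ span F {1, u} →
      γ (k * g) ∈ (Line.map γ (Line.mulRight (Units.mk0 g hg) K)).1 := fun g hg k hk => by
    rw [← SetLike.mem_coe, Line.coe_map, Line.coe_mulRight]
    exact ⟨k * g, ⟨k, hk, rfl⟩, rfl⟩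
  have hg1 : ∀ g (hg : g ≠ 0), γ g ∈ (Line.map γ (Line.mulRight (Units.mk0 g hg) K)).1 :=
    fun g hg => by simpa using hmem g hg 1 (subset_span (by simp))
  have hug : ∀ g (hg : g ≠ 0), γ (u * g) ∈ (Line.map γ (Line.mulRight (Units.mk0 g hg) K)).1 :=
    fun g hg => hmem g hg u (subset_span (by simp))
  by_cases hK'l : IsLeftType par (Line.map γ K)
  · have hanti := hH.map_eq_mul_right_of_forall_mem_span γ hγ1 (LinearMap.mulLeft F u)
      (mul_one u) hγu (fun g hg => hpar.mem_span_mul_right_of_par hH hK' hK'l (hP g hg)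
        (hg1 g hg) (by simpa using hg) (hug g hg))
    obtain ⟨d, hd, hγd⟩ := hH.exists_conj_of_map_sq hu γ.toLinearMap hγ1 (hanti u)
    exact absurd ((hpar.isLeftType_map_iff hH hd γ hγd).1 hK'l) hK
  · exact hH.map_eq_mul_left_of_forall_mem_span γ hγ1 (LinearMap.mulLeft F u) (mul_one u) hγu
      (fun g hg => hpar.mem_span_mul_left_of_par hH hK' hK'l (hP g hg) (hg1 g hg)
        (by simpa using hg) (hug g hg)) g

theorem map_mul_of_map_par (hpar : IsCliffordLikeEquiv par) (hH : IsQuaternionSkewField F H)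
    (γ : H ≃ₗ[F] H) (hγ1 : γ 1 = 1) (hγ : ∀ M N, par N M → par (Line.map γ N) (Line.map γ M))
    (x y : H) : γ (x * y) = γ x * γ y := by
  refine map_mul_of_forall_or (map_zero γ) hγ1 (fun u => ?_) x y
  by_cases hu : u ∈ (⊥ : Subalgebra F H)
  · obtain ⟨a, rfl⟩ := Algebra.mem_bot.1 hu
    refine Or.inl fun g => ?_
    rw [← Algebra.commutes, ← Algebra.smul_def, map_smul, Algebra.algebraMap_eq_smul_one,
      map_smul, hγ1, mul_smul_comm, mul_one]
  by_cases hK : IsLeftType par (Line.spanOnePair hu)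
  · exact Or.inl (hpar.map_mul_of_isLeftType hH γ hγ1 hγ hu hK)
  · exact Or.inr (hpar.map_mul_of_not_isLeftType hH γ hγ1 hγ hu hK)

theorem preserves_iff_exists_algEquiv (hpar : IsCliffordLikeEquiv par)
    (hH : IsQuaternionSkewField F H) (e : H ≃ₗ[F] H) :
    Preserves F H e par ↔ ∃ (c : Hˣ) (σ : H ≃ₐ[F] H), ∀ x, e x = c * σ x := by
  constructor
  · intro he
    have he1 : e 1 ≠ 0 := by simp
    set c := Units.mk0 (e 1) he1
    set γ := e.trans (c⁻¹.mulLeftLinearEquiv F H)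
    have hγ : ∀ x, γ x = (e 1)⁻¹ * e x := fun x => by
      show ((c⁻¹ : Hˣ) : H) * e x = _
      rw [Units.val_inv_eq_inv_val, Units.val_mk0]
    have hγ1 : γ 1 = 1 := by rw [hγ, inv_mul_cancel₀ he1]
    have hγpar : ∀ M N, par N M → par (Line.map γ N) (Line.map γ M) := fun M N h => by
      have hmap : ∀ L, Line.map γ L = Line.mulLeft c⁻¹ (Line.map e L) := fun L =>
        Line.ext_coe <| by
          rw [Line.coe_mulLeft, Line.coe_map, Line.coe_map, ← Set.image_smul, Set.image_image]
          rfl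
      rw [hmap, hmap]
      exact hpar.par_mulLeft c⁻¹ (((preserves_iff_map e).1 he N M).1 h)
    refine ⟨c, AlgEquiv.ofLinearEquiv γ hγ1 (hpar.map_mul_of_map_par hH γ hγ1 hγpar),
      fun x => ?_⟩
    rw [AlgEquiv.ofLinearEquiv_apply, hγ, Units.val_mk0, mul_inv_cancel_left₀ he1]
  · rintro ⟨c, σ, he⟩
    have he' : ∀ x, e.symm x = (Units.map σ.symm.toMonoidHom c⁻¹ : H) * σ.symm x := fun x => by
      rw [e.symm_apply_eq, he]
      simp
    refine (preserves_iff_map e).2 fun M N => ⟨hpar.par_map_of_eq_mul hH e c σ he, fun h => ?_⟩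
    simpa [Line.map_symm_map] using hpar.par_map_of_eq_mul hH e.symm _ σ.symm he' h

end IsCliffordLikeEquiv

end CliffordLike

/-- An `F`-linear bijection of `H` preserves a Clifford-like parallelism `∥` if and
only if it preserves the left Clifford parallelism `∥ℓ`. -/
theorem linear_preserves_iff_preserves_left
    (hcenter : CenterEqF F H) (hdim : Module.finrank F H = 4)
    (par : Line F H → Line F H → Prop) (hpar : IsCliffordLike F H par)
    (β : H → H) (hbij : Function.Bijective β)
    (hadd : ∀ x y : H, β (x + y) = β x + β y)
    (hsmul : ∀ (a : F) (x : H), β (a • x) = a • β x) :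
    Preserves F H β par ↔
      Preserves F H β (fun M N : Line F H => LeftPar F H M.1 N.1) := by
  have hH : CliffordLike.IsQuaternionSkewField F H := ⟨hcenter, hdim⟩
  let e : H ≃ₗ[F] H := .ofBijective ⟨⟨β, hadd⟩, hsmul⟩ hbij
  have hpar' : CliffordLike.IsCliffordLikeEquiv par := ⟨hpar.1.1, hpar.2⟩
  exact (hpar'.preserves_iff_exists_algEquiv hH e).trans
    (CliffordLike.isCliffordLikeEquiv_leftPar.preserves_iff_exists_algEquiv hH e).symm
end
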